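/- arXiv:2206.07879 — 10 statements merged into one kernel-verified Lean document; each statement's English description precedes it below -/
import Mathlib

section
/- Let d ≥ 1 and n_1, …, n_d ≥ 2 be integers. Every nonzero nonnegative tensor T of order d with dimensions n_1, …, n_d satisfies ‖T‖_σ ≥ (∏_{k=1}^d n_k)^{-1/4} · ‖T‖. -/
noncomputable section

/-- Frobenius norm of a real tensor of order `d` with dimensions `n 0, …, n (d-1)`. -/
def frobNorm {d : ℕ} {n : Fin d → ℕ} (T : (∀ k, Fin (n k)) → ℝ) : ℝ :=
  Real.sqrt (∑ i, (T i) ^ 2)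

/-- Spectral norm: supremum of `|⟨T, x¹⊗⋯⊗x^d⟩|` over tuples of unit vectors. -/
def specNorm {d : ℕ} {n : Fin d → ℕ} (T : (∀ k, Fin (n k)) → ℝ) : ℝ :=
  sSup { r : ℝ | ∃ x : ∀ k, EuclideanSpace ℝ (Fin (n k)),
    (∀ k, ‖x k‖ = 1) ∧ r = |∑ i, T i * ∏ k, x k (i k)| }

theorem specSet_bddAbove {d : ℕ} {n : Fin d → ℕ} (T : (∀ k, Fin (n k)) → ℝ) :
    BddAbove { r : ℝ | ∃ x : ∀ k, EuclideanSpace ℝ (Fin (n k)),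
    (∀ k, ‖x k‖ = 1) ∧ r = |∑ i, T i * ∏ k, x k (i k)| } := by
  refine ⟨frobNorm T, ?_⟩
  rintro r ⟨x, hx, rfl⟩
  have hP : ∑ i : (∀ k, Fin (n k)), (∏ k, x k (i k)) ^ 2 = 1 := by
    have : ∑ i : (∀ k, Fin (n k)), (∏ k, x k (i k)) ^ 2
        = ∏ k, ∑ j, (x k j) ^ 2 := by
      rw [Finset.prod_univ_sum]
      rw [Fintype.piFinset_univ]
      exact Finset.sum_congr rfl fun i _ => by rw [Finset.prod_pow]
    rw [this]
    have : ∀ k, ∑ j, (x k j) ^ 2 = 1 := by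
      intro k
      have h := hx k
      rw [EuclideanSpace.norm_eq] at h
      have h2 : Real.sqrt (∑ j, ‖x k j‖ ^ 2) ^ 2 = 1 := by rw [h]; norm_num
      rw [Real.sq_sqrt (by positivity)] at h2
      simpa [Real.norm_eq_abs, sq_abs] using h2
    simp [this]
  have hcs := Finset.sum_mul_sq_le_sq_mul_sq Finset.univ T (fun i => ∏ k, x k (i k))
  rw [hP, mul_one] at hcs
  have h1 : |∑ i, T i * ∏ k, x k (i k)| ^ 2 ≤ (frobNorm T) ^ 2 := by
    rw [sq_abs, frobNorm, Real.sq_sqrt (by positivity)]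
    exact hcs
  have h0 : (0:ℝ) ≤ frobNorm T := Real.sqrt_nonneg _
  calc |∑ i, T i * ∏ k, x k (i k)| = Real.sqrt (|∑ i, T i * ∏ k, x k (i k)| ^ 2) :=
        (Real.sqrt_sq (abs_nonneg _)).symm
    _ ≤ Real.sqrt ((frobNorm T) ^ 2) := Real.sqrt_le_sqrt h1
    _ = frobNorm T := Real.sqrt_sq h0

theorem stmt_0 {d : ℕ} (hd : 1 ≤ d) (n : Fin d → ℕ) (hn : ∀ k, 2 ≤ n k)
    (T : (∀ k, Fin (n k)) → ℝ) (hT0 : T ≠ 0) (hTnn : ∀ i, 0 ≤ T i) :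
    specNorm T ≥ (∏ k, (n k : ℝ)) ^ (-(1 : ℝ)/4) * frobNorm T := by
  have hbdd := specSet_bddAbove T
  have hnpos : ∀ k, (0:ℝ) < n k := fun k => by exact_mod_cast (hn k).trans_lt' (by norm_num)
  have hNpos : (0:ℝ) < ∏ k, (n k : ℝ) := Finset.prod_pos fun k _ => hnpos k
  have hne : ∀ k, Nonempty (Fin (n k)) := fun k => ⟨⟨0, lt_of_lt_of_le (by norm_num) (hn k)⟩⟩
  haveI : Nonempty (∀ k, Fin (n k)) := ⟨fun k => (hne k).some⟩
  set N : ℝ := ∏ k, (n k : ℝ) with hN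
  set S : ℝ := ∑ i, T i with hS
  -- max entry
  obtain ⟨i₀, hi₀⟩ := Finset.exists_max_image Finset.univ T ⟨Classical.arbitrary _, Finset.mem_univ _⟩
  set M : ℝ := T i₀ with hM
  have hM0 : 0 ≤ M := hTnn i₀
  have hS0 : 0 ≤ S := Finset.sum_nonneg fun i _ => hTnn i
  -- bound 1 : M ≤ specNorm T
  have hb1 : M ≤ specNorm T := by
    apply le_csSup hbdd
    refine ⟨fun k => EuclideanSpace.single (i₀ k) (1:ℝ), fun k => by simp, ?_⟩
    have key : ∀ i : (∀ k, Fin (n k)),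
        (∏ k, (EuclideanSpace.single (i₀ k) (1:ℝ)) (i k)) = if i = i₀ then 1 else 0 := by
      intro i
      by_cases h : i = i₀
      · subst h; simp [EuclideanSpace.single_apply]
      · obtain ⟨k, hk⟩ : ∃ k, i k ≠ i₀ k := by
          by_contra hc
          push_neg at hc
          exact h (funext hc)
        rw [if_neg h]
        apply Finset.prod_eq_zero (Finset.mem_univ k)
        simp [EuclideanSpace.single_apply, hk]
    have : (∑ i, T i * ∏ k, (EuclideanSpace.single (i₀ k) (1:ℝ)) (i k)) = M := by
      simp only [key, mul_ite, mul_one, mul_zero]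
      simp [hM]
    rw [this, abs_of_nonneg hM0]
  -- bound 2 : S / √N ≤ specNorm T
  have hb2 : S / Real.sqrt N ≤ specNorm T := by
    apply le_csSup hbdd
    refine ⟨fun k => (WithLp.toLp 2 (fun _ => (Real.sqrt (n k))⁻¹) : EuclideanSpace ℝ (Fin (n k))), ?_, ?_⟩
    · intro k
      rw [EuclideanSpace.norm_eq]
      simp only [PiLp.toLp_apply]
      have h1 : (0:ℝ) < Real.sqrt (n k) := Real.sqrt_pos.2 (hnpos k)
      have : ∑ j : Fin (n k), ‖(Real.sqrt (n k))⁻¹‖ ^ 2 = 1 := by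
        rw [Finset.sum_const, Finset.card_univ, Fintype.card_fin, nsmul_eq_mul]
        rw [Real.norm_eq_abs, abs_of_nonneg (by positivity), inv_pow,
          Real.sq_sqrt (hnpos k).le]
        exact mul_inv_cancel₀ (hnpos k).ne'
      rw [this, Real.sqrt_one]
    · have hprod : (∏ k, ((Real.sqrt (n k))⁻¹ : ℝ)) = (Real.sqrt N)⁻¹ := by
        have hsp : Real.sqrt N = ∏ k, Real.sqrt (n k) := by
          rw [hN, Real.sqrt_eq_rpow, ← Real.finset_prod_rpow _ _ (fun k _ => (hnpos k).le)]
          exact Finset.prod_congr rfl fun k _ => (Real.sqrt_eq_rpow _).symm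
        rw [hsp]
        exact Finset.prod_inv_distrib (f := fun k => Real.sqrt (n k))
      have : (∑ i, T i * ∏ k, ((Real.sqrt (n k))⁻¹ : ℝ)) = S / Real.sqrt N := by
        simp only [hprod, ← Finset.sum_mul, div_eq_mul_inv, hS]
      simp only [PiLp.toLp_apply]
      rw [this, abs_of_nonneg (by positivity)]
  -- combine
  have hσ0 : 0 ≤ specNorm T := hM0.trans hb1
  have hfsq : (frobNorm T) ^ 2 = ∑ i, (T i) ^ 2 := Real.sq_sqrt (by positivity)
  have hkey : (frobNorm T) ^ 2 / Real.sqrt N ≤ (specNorm T) ^ 2 := by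
    have h1 : (∑ i, (T i) ^ 2) ≤ M * S := by
      rw [hS, Finset.mul_sum]
      apply Finset.sum_le_sum
      intro i _
      rw [sq]
      exact mul_le_mul_of_nonneg_right (hi₀.2 i (Finset.mem_univ i)) (hTnn i)
    have h2 : M * (S / Real.sqrt N) ≤ (specNorm T) ^ 2 := by
      rw [sq]
      exact mul_le_mul hb1 hb2 (by positivity) hσ0
    calc (frobNorm T) ^ 2 / Real.sqrt N = (∑ i, (T i) ^ 2) / Real.sqrt N := by rw [hfsq]
      _ ≤ (M * S) / Real.sqrt N :=
          div_le_div_of_nonneg_right h1 (Real.sqrt_pos.2 hNpos).le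
      _ = M * (S / Real.sqrt N) := by ring
      _ ≤ _ := h2
  have hsqrtN : Real.sqrt (Real.sqrt N) = N ^ ((1:ℝ)/4) := by
    rw [Real.sqrt_eq_rpow, Real.sqrt_eq_rpow, ← Real.rpow_mul hNpos.le]
    norm_num
  have : Real.sqrt ((frobNorm T) ^ 2 / Real.sqrt N) ≤ specNorm T := by
    rw [show (specNorm T) = Real.sqrt ((specNorm T)^2) by rw [Real.sqrt_sq hσ0]]
    exact Real.sqrt_le_sqrt hkey
  refine le_trans (le_of_eq ?_) this
  rw [Real.sqrt_div' _ (Real.sqrt_nonneg N), Real.sqrt_sq (x := frobNorm T) (Real.sqrt_nonneg _), hsqrtN,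
    show (-(1:ℝ)/4) = -((1:ℝ)/4) by ring, Real.rpow_neg hNpos.le, inv_mul_eq_div]
end
end

section
/- Let d ≥ 1 and n_1, …, n_d ≥ 2 be integers. If some nonzero nonnegative tensor T of order d with dimensions n_1, …, n_d satisfies ‖T‖_σ = (∏_{k=1}^d n_k)^{-1/4} · ‖T‖, then there exists a positive integer m with m² = ∏_{k=1}^d n_k such that n_k divides m for every k = 1, …, d. -/
noncomputable section

namespace Stmt1Aux

variable {d : ℕ} {n : Fin d → ℕ}

set_option maxHeartbeats 1000000 in
lemma sum_sq_eq_one (x : ∀ k, EuclideanSpace ℝ (Fin (n k))) (hx : ∀ k, ‖x k‖ = 1) :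
    ∑ i : (∀ k, Fin (n k)), (∏ k, x k (i k)) ^ 2 = 1 := by
  have h1 : ∀ k, ∑ j, (x k j) ^ 2 = 1 := by
    intro k
    have := hx k
    rw [EuclideanSpace.norm_eq] at this
    have h2 : ∑ j, ‖x k j‖ ^ 2 = 1 := by
      rwa [Real.sqrt_eq_one] at this
    simpa [sq_abs] using h2
  have key : ∑ i : (∀ k, Fin (n k)), ∏ k, (x k (i k)) ^ 2 = ∏ k, ∑ j, (x k j) ^ 2 := by
    rw [Finset.prod_univ_sum, Fintype.piFinset_univ]
  calc ∑ i : (∀ k, Fin (n k)), (∏ k, x k (i k)) ^ 2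
      = ∑ i : (∀ k, Fin (n k)), ∏ k, (x k (i k)) ^ 2 := by
        simp_rw [← Finset.prod_pow]
    _ = ∏ k, ∑ j, (x k j) ^ 2 := key
    _ = 1 := by simp [h1]

lemma abs_le_frob (T : (∀ k, Fin (n k)) → ℝ) (x : ∀ k, EuclideanSpace ℝ (Fin (n k)))
    (hx : ∀ k, ‖x k‖ = 1) :
    |∑ i, T i * ∏ k, x k (i k)| ≤ frobNorm T := by
  have h := Finset.sum_mul_sq_le_sq_mul_sq Finset.univ T (fun i => ∏ k, x k (i k))
  rw [sum_sq_eq_one x hx, mul_one] at h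
  have habs : |∑ i, T i * ∏ k, x k (i k)| = Real.sqrt ((∑ i, T i * ∏ k, x k (i k)) ^ 2) :=
    (Real.sqrt_sq_eq_abs _).symm
  rw [habs, frobNorm]
  exact Real.sqrt_le_sqrt h

lemma le_spec (T : (∀ k, Fin (n k)) → ℝ) (x : ∀ k, EuclideanSpace ℝ (Fin (n k)))
    (hx : ∀ k, ‖x k‖ = 1) :
    |∑ i, T i * ∏ k, x k (i k)| ≤ specNorm T := by
  apply le_csSup
  · refine ⟨frobNorm T, ?_⟩
    rintro r ⟨y, hy, rfl⟩
    exact abs_le_frob T y hy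
  · exact ⟨x, hx, rfl⟩

end Stmt1Aux

set_option maxHeartbeats 2000000 in
open Stmt1Aux in
theorem stmt_1 {d : ℕ} (hd : 1 ≤ d) (n : Fin d → ℕ) (hn : ∀ k, 2 ≤ n k)
    (T : (∀ k, Fin (n k)) → ℝ) (hT0 : T ≠ 0) (hTnn : ∀ i, 0 ≤ T i)
    (heq : specNorm T = (∏ k, (n k : ℝ)) ^ (-(1 : ℝ)/4) * frobNorm T) :
    ∃ m : ℕ, 0 < m ∧ m ^ 2 = ∏ k, n k ∧ ∀ k, n k ∣ m := by
  classical
  set N : ℝ := ∏ k, (n k : ℝ) with hN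
  have hnpos : ∀ k, (0:ℝ) < n k := fun k => by
    exact_mod_cast lt_of_lt_of_le (by norm_num) (hn k)
  have hNpos : 0 < N := Finset.prod_pos fun k _ => hnpos k
  set P : ℝ := ∏ k, Real.sqrt (n k) with hP
  have hPpos : 0 < P := Finset.prod_pos fun k _ => Real.sqrt_pos.mpr (hnpos k)
  have hP2 : P ^ 2 = N := by
    rw [hP, ← Finset.prod_pow]
    exact Finset.prod_congr rfl fun k _ => Real.sq_sqrt (hnpos k).le
  have hsqrtN : Real.sqrt N = P := by
    rw [← hP2, Real.sqrt_sq hPpos.le]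
  have hF2 : frobNorm T ^ 2 = ∑ i, (T i) ^ 2 := Real.sq_sqrt (by positivity)
  have hFpos : 0 < frobNorm T := by
    rcases Function.ne_iff.mp hT0 with ⟨i0, hi0⟩
    simp only [Pi.zero_apply] at hi0
    apply Real.sqrt_pos.mpr
    have h0 : 0 < (T i0) ^ 2 := by positivity
    exact lt_of_lt_of_le h0 (Finset.single_le_sum (f := fun i => (T i)^2)
      (fun i _ => sq_nonneg _) (Finset.mem_univ i0))
  set lam : ℝ := specNorm T with hlam
  have hlampos : 0 < lam := by
    rw [heq]
    exact mul_pos (Real.rpow_pos_of_pos hNpos _) hFpos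
  -- entry bound : T i ≤ lam
  have hentry : ∀ i, T i ≤ lam := by
    intro i
    have hx : ∀ k, ‖(EuclideanSpace.single (i k) (1:ℝ))‖ = 1 := fun k => by
      simp [EuclideanSpace.norm_single]
    have h := le_spec T (fun k => EuclideanSpace.single (i k) (1:ℝ)) hx
    have hval : ∑ i', T i' * ∏ k, (EuclideanSpace.single (i k) (1:ℝ)) (i' k) = T i := by
      rw [Finset.sum_eq_single i]
      · simp [EuclideanSpace.single_apply]
      · intro i' _ hne
        have hex : ∃ k, i' k ≠ i k := by
          by_contra hc
          push_neg at hc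
          exact hne (funext hc)
        rcases hex with ⟨k, hk⟩
        have hz : ∏ k', (EuclideanSpace.single (i k') (1:ℝ)) (i' k') = 0 :=
          Finset.prod_eq_zero (Finset.mem_univ k) (by simp [EuclideanSpace.single_apply, hk])
        rw [hz, mul_zero]
      · intro h; exact absurd (Finset.mem_univ i) h
    rw [hval] at h
    exact le_trans (le_abs_self _) h
  -- uniform vectors
  set u : ∀ k, EuclideanSpace ℝ (Fin (n k)) := fun k => WithLp.toLp 2 (fun _ => (Real.sqrt (n k))⁻¹) with hu
  have hsum_u : ∀ k, ∑ _j : Fin (n k), ((Real.sqrt (n k))⁻¹) ^ 2 = 1 := by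
    intro k
    rw [Finset.sum_const, Finset.card_univ, Fintype.card_fin, nsmul_eq_mul,
      inv_pow, Real.sq_sqrt (hnpos k).le]
    exact mul_inv_cancel₀ (hnpos k).ne'
  have hu_norm : ∀ k, ‖u k‖ = 1 := by
    intro k
    rw [EuclideanSpace.norm_eq]
    have h : ∑ j : Fin (n k), ‖(u k) j‖ ^ 2 = 1 := by
      simp only [hu, PiLp.toLp_apply, Real.norm_eq_abs, sq_abs]
      exact hsum_u k
    rw [h, Real.sqrt_one]
  -- sum bound : ∑ T i ≤ P * lam
  have hPinv : ∀ i : (∀ k, Fin (n k)), ∏ k, (u k) (i k) = P⁻¹ := by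
    intro i
    simp only [hu, hP]
    rw [← Finset.prod_inv_distrib]
  have hsum_le : ∑ i, T i ≤ P * lam := by
    have h := le_spec T u hu_norm
    have hval : ∑ i, T i * ∏ k, (u k) (i k) = (∑ i, T i) * P⁻¹ := by
      rw [Finset.sum_mul]
      exact Finset.sum_congr rfl fun i _ => by rw [hPinv i]
    rw [hval] at h
    have h2 : (∑ i, T i) * P⁻¹ ≤ lam := le_trans (le_abs_self _) h
    calc ∑ i, T i = ((∑ i, T i) * P⁻¹) * P := by field_simp
      _ ≤ lam * P := mul_le_mul_of_nonneg_right h2 hPpos.le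
      _ = P * lam := mul_comm _ _
  -- P * lam ^ 2 = frobNorm T ^ 2
  have hlamsq : P * lam ^ 2 = frobNorm T ^ 2 := by
    have h1 : lam ^ 2 = N ^ (-(1:ℝ)/2) * frobNorm T ^ 2 := by
      rw [heq, mul_pow, ← Real.rpow_natCast (N ^ (-(1:ℝ)/4)) 2, ← Real.rpow_mul hNpos.le]
      norm_num
    have h2 : N ^ (-(1:ℝ)/2) = P⁻¹ := by
      rw [show (-(1:ℝ)/2) = -(1/2) by norm_num, Real.rpow_neg hNpos.le,
        ← Real.sqrt_eq_rpow, hsqrtN]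
    rw [h1, h2]
    field_simp
  -- equality chain
  have hA : ∑ i, (T i) ^ 2 = P * lam ^ 2 := by rw [hlamsq, hF2]
  have hchain1 : ∑ i, (T i) ^ 2 ≤ lam * ∑ i, T i := by
    rw [Finset.mul_sum]
    exact Finset.sum_le_sum fun i _ => by nlinarith [hentry i, hTnn i]
  have hB : ∑ i, T i = P * lam := by
    refine le_antisymm hsum_le ?_
    have : P * lam ^ 2 ≤ lam * ∑ i, T i := hA ▸ hchain1
    nlinarith
  have hAB : ∑ i, (T i) ^ 2 = lam * ∑ i, T i := by
    rw [hA, hB]; ring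
  have hterm : ∀ i, T i = 0 ∨ T i = lam := by
    have hz : ∑ i, (lam * T i - (T i) ^ 2) = 0 := by
      rw [Finset.sum_sub_distrib, ← Finset.mul_sum, hAB, sub_self]
    have hall := (Finset.sum_eq_zero_iff_of_nonneg
      (fun i _ => by nlinarith [hentry i, hTnn i])).mp hz
    intro i
    have h := hall i (Finset.mem_univ i)
    rcases mul_eq_zero.mp (show T i * (lam - T i) = 0 by nlinarith) with h0 | h0
    · exact Or.inl h0
    · exact Or.inr (by linarith)
  -- the support S
  set S : Finset (∀ k, Fin (n k)) := Finset.univ.filter (fun i => T i = lam) with hS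
  have hmem : ∀ i, i ∈ S ↔ T i = lam := fun i => by simp [hS]
  have hTS : ∀ i, T i = if i ∈ S then lam else 0 := by
    intro i
    by_cases h : i ∈ S
    · rw [if_pos h]; exact (hmem i).mp h
    · rw [if_neg h]
      rcases hterm i with h0 | h0
      · exact h0
      · exact absurd ((hmem i).mpr h0) h
  have hsumS : ∑ i, T i = (S.card : ℝ) * lam := by
    rw [Finset.sum_congr rfl fun i _ => hTS i, Finset.sum_ite_mem, Finset.univ_inter,
      Finset.sum_const, nsmul_eq_mul]
  have hcardP : (S.card : ℝ) = P := by
    have : (S.card : ℝ) * lam = P * lam := by rw [← hsumS, hB]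
    exact mul_right_cancel₀ hlampos.ne' this
  have hmpos : 0 < S.card := by
    have h : (0:ℝ) < (S.card : ℝ) := by rw [hcardP]; exact hPpos
    exact_mod_cast h
  have hmsq : S.card ^ 2 = ∏ k, n k := by
    have : ((S.card ^ 2 : ℕ) : ℝ) = ((∏ k, n k : ℕ) : ℝ) := by
      push_cast
      rw [hcardP, hP2, hN]
    exact_mod_cast this
  refine ⟨S.card, hmpos, hmsq, ?_⟩
  -- divisibility
  intro k
  set c : Fin (n k) → ℕ := fun j => (S.filter (fun i => i k = j)).card with hc
  have hcsum : ∑ j, c j = S.card :=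
    (Finset.card_eq_sum_card_fiberwise (fun i _ => Finset.mem_univ (i k))).symm
  have hcsq_pos : 0 < ∑ j, ((c j : ℝ)) ^ 2 := by
    have hex : ∃ j, c j ≠ 0 := by
      by_contra h
      push_neg at h
      rw [Finset.sum_eq_zero (fun j _ => h j)] at hcsum
      omega
    rcases hex with ⟨j0, hj0⟩
    have h0 : (0:ℝ) < (c j0 : ℝ) ^ 2 := pow_pos (by exact_mod_cast Nat.pos_of_ne_zero hj0) 2
    exact lt_of_lt_of_le h0 (Finset.single_le_sum (f := fun j => ((c j : ℝ))^2)
      (fun j _ => sq_nonneg _) (Finset.mem_univ j0))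
  set Cn : ℝ := Real.sqrt (∑ j, ((c j : ℝ)) ^ 2) with hCn
  have hCnpos : 0 < Cn := Real.sqrt_pos.mpr hcsq_pos
  have hCn2 : Cn ^ 2 = ∑ j, ((c j : ℝ)) ^ 2 := Real.sq_sqrt hcsq_pos.le
  set v : EuclideanSpace ℝ (Fin (n k)) := WithLp.toLp 2 (fun j => (c j : ℝ) / Cn) with hv
  have hvnorm : ‖v‖ = 1 := by
    rw [EuclideanSpace.norm_eq]
    have h1 : ∑ j, ‖v j‖ ^ 2 = 1 := by
      simp only [hv, PiLp.toLp_apply, Real.norm_eq_abs, sq_abs, div_pow]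
      rw [← Finset.sum_div, ← hCn2]
      field_simp
    rw [h1, Real.sqrt_one]
  set x : ∀ l, EuclideanSpace ℝ (Fin (n l)) := Function.update u k v with hx
  have hxnorm : ∀ l, ‖x l‖ = 1 := by
    intro l
    by_cases h : l = k
    · subst h; rw [hx, Function.update_self]; exact hvnorm
    · rw [hx, Function.update_of_ne h]; exact hu_norm l
  -- value of the test functional
  set Q : ℝ := ∏ l ∈ Finset.univ.erase k, (Real.sqrt (n l))⁻¹ with hQ
  have hQP : (Real.sqrt (n k))⁻¹ * Q = P⁻¹ := by
    rw [hQ, hP, ← Finset.prod_inv_distrib]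
    exact Finset.mul_prod_erase Finset.univ (fun l => (Real.sqrt (n l))⁻¹) (Finset.mem_univ k)
  have hQpos : 0 < Q :=
    Finset.prod_pos fun l _ => inv_pos.mpr (Real.sqrt_pos.mpr (hnpos l))
  have hprod_x : ∀ i : (∀ l, Fin (n l)), ∏ l, x l (i l) = v (i k) * Q := by
    intro i
    rw [← Finset.mul_prod_erase Finset.univ (fun l => x l (i l)) (Finset.mem_univ k)]
    have : ∀ l ∈ Finset.univ.erase k, x l (i l) = (Real.sqrt (n l))⁻¹ := by
      intro l hl
      rw [hx, Function.update_of_ne (Finset.ne_of_mem_erase hl)]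
    rw [Finset.prod_congr rfl this, hx, Function.update_self]
  have hval2 : ∑ i, T i * ∏ l, x l (i l) = lam * Q * Cn := by
    calc ∑ i, T i * ∏ l, x l (i l)
        = ∑ i, (if i ∈ S then lam else 0) * (v (i k) * Q) := by
          exact Finset.sum_congr rfl fun i _ => by rw [← hTS i, hprod_x i]
      _ = ∑ i ∈ S, lam * (v (i k) * Q) := by
          simp only [ite_mul, zero_mul]
          rw [Finset.sum_ite_mem, Finset.univ_inter]
      _ = lam * Q * ∑ i ∈ S, v (i k) := by
          rw [Finset.mul_sum]
          exact Finset.sum_congr rfl fun i _ => by ring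
      _ = lam * Q * ∑ j, (c j : ℝ) * v j := by
          congr 1
          rw [← Finset.sum_fiberwise S (fun i => i k) (fun i => v (i k))]
          exact Finset.sum_congr rfl fun j _ => by
            rw [Finset.sum_congr rfl (fun i hi => by
              rw [(Finset.mem_filter.mp hi).2]), Finset.sum_const, nsmul_eq_mul, hc]
      _ = lam * Q * Cn := by
          congr 1
          simp only [hv]
          calc ∑ j, (c j : ℝ) * ((c j : ℝ) / Cn) = ∑ j, ((c j : ℝ))^2 / Cn :=
                Finset.sum_congr rfl fun j _ => by ring
            _ = Cn := by
                rw [← Finset.sum_div, ← hCn2, sq, mul_div_assoc, div_self hCnpos.ne', mul_one]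
  have hbound := le_spec T x hxnorm
  rw [hval2] at hbound
  have hQCn : Q * Cn ≤ 1 := by
    have h1 : lam * Q * Cn ≤ lam := le_trans (le_abs_self _) hbound
    have h2 : lam * (Q * Cn) ≤ lam * 1 := by rw [mul_one]; linarith [h1]
    exact le_of_mul_le_mul_left h2 hlampos
  -- Cn^2 ≤ card^2 / n k
  have hCnle : ∑ j, ((c j : ℝ)) ^ 2 ≤ (S.card : ℝ) ^ 2 / (n k) := by
    have hsk : 0 < Real.sqrt (n k) := Real.sqrt_pos.mpr (hnpos k)
    have hQval : Q = Real.sqrt (n k) / P := by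
      have h := hQP
      field_simp [hsk.ne', hPpos.ne'] at h
      rw [eq_div_iff hPpos.ne']
      linear_combination h
    rw [hQval] at hQCn
    have hCnle' : Cn ≤ P / Real.sqrt (n k) := by
      rw [div_mul_eq_mul_div, div_le_one hPpos] at hQCn
      rw [le_div_iff₀ hsk]
      linarith [hQCn]
    have h3 : Cn ^ 2 ≤ (P / Real.sqrt (n k)) ^ 2 :=
      pow_le_pow_left₀ hCnpos.le hCnle' 2
    rw [hCn2] at h3
    calc ∑ j, ((c j : ℝ)) ^ 2 ≤ (P / Real.sqrt (n k)) ^ 2 := h3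
      _ = P ^ 2 / (Real.sqrt (n k)) ^ 2 := by rw [div_pow]
      _ = (S.card : ℝ) ^ 2 / (n k) := by
          have hNcard : (S.card : ℝ) ^ 2 = N := by rw [hcardP, hP2]
          rw [hP2, Real.sq_sqrt (hnpos k).le, ← hNcard]
          
  -- conclude c j = card / n k for all j
  have hconst : ∀ j, (n k : ℝ) * (c j : ℝ) = (S.card : ℝ) := by
    have hzero : ∑ j, ((c j : ℝ) - (S.card : ℝ) / (n k)) ^ 2 = 0 := by
      have hexp : ∑ j, ((c j : ℝ) - (S.card : ℝ) / (n k)) ^ 2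
          = ∑ j, ((c j : ℝ)) ^ 2 - (S.card : ℝ) ^ 2 / (n k) := by
        have hsumc : ∑ j, (c j : ℝ) = (S.card : ℝ) := by exact_mod_cast hcsum
        set t : ℝ := (S.card : ℝ) / (n k) with ht
        have hnkt : (n k : ℝ) * t = (S.card : ℝ) := by
          rw [ht, mul_div_cancel₀ _ (hnpos k).ne']
          
        calc ∑ j, ((c j : ℝ) - t) ^ 2
            = ∑ j, (((c j : ℝ)) ^ 2 - 2 * t * (c j : ℝ) + t ^ 2) :=
              Finset.sum_congr rfl fun j _ => by ring
          _ = ∑ j, ((c j : ℝ)) ^ 2 - 2 * t * (S.card : ℝ) + (n k : ℝ) * t ^ 2 := by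
              rw [Finset.sum_add_distrib, Finset.sum_sub_distrib, ← Finset.mul_sum, hsumc,
                Finset.sum_const, Finset.card_univ, Fintype.card_fin, nsmul_eq_mul]
          _ = ∑ j, ((c j : ℝ)) ^ 2 - (S.card : ℝ) ^ 2 / (n k) := by
              rw [show (n k : ℝ) * t ^ 2 = ((n k : ℝ) * t) * t by ring, hnkt, ht]
              ring
      refine le_antisymm ?_ (Finset.sum_nonneg fun j _ => sq_nonneg _)
      rw [hexp]
      linarith [hCnle]
    intro j
    have h := (Finset.sum_eq_zero_iff_of_nonneg (fun j _ => sq_nonneg _)).mp hzero j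
      (Finset.mem_univ j)
    have h2 : (c j : ℝ) = (S.card : ℝ) / (n k) := by
      have := sq_eq_zero_iff.mp h
      linarith [this]
    rw [h2]
    exact mul_div_cancel₀ _ (hnpos k).ne'
  -- conclude divisibility
  have j0 : Fin (n k) := ⟨0, lt_of_lt_of_le (by norm_num) (hn k)⟩
  refine ⟨c j0, ?_⟩
  have := hconst j0
  exact_mod_cast this.symm
end
end

section
/- Let d ≥ 1 and n_1, …, n_d ≥ 2 be integers, and suppose there exists a positive integer m with m² = ∏_{k=1}^d n_k such that n_k divides m for every k = 1, …, d. Then there exists a tensor T of order d with dimensions n_1, …, n_d, all of whose entries lie in {0,1}, satisfying ‖T‖_σ = 1 and ‖T‖ = (∏_{k=1}^d n_k)^{1/4}; in particular T is a nonzero nonnegative tensor with ‖T‖_σ = (∏_{k=1}^d n_k)^{-1/4} · ‖T‖. -/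
noncomputable section

lemma arith_aux (b n₀ N m : ℕ) (hb : b ≠ 0) (hn0 : n₀ ≠ 0) (hN : N ≠ 0) (hm : m ≠ 0)
    (hsq : m ^ 2 = b * (n₀ * N)) (hbm : b ∣ m) (hn0m : n₀ ∣ m) :
    (m / Nat.gcd m N) ∣ b ∧ (m / Nat.gcd m N) ∣ n₀ ∧ N ∣ (Nat.gcd m N) ^ 2 := by
  set g := Nat.gcd m N with hgdef
  have hg0 : g ≠ 0 := Nat.gcd_ne_zero_left hm
  have hgm : g ∣ m := Nat.gcd_dvd_left m N
  have hβ0 : m / g ≠ 0 := by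
    have := Nat.div_pos (Nat.le_of_dvd (Nat.pos_of_ne_zero hm) hgm) (Nat.pos_of_ne_zero hg0)
    omega
  have key : ∀ p : ℕ, 2 * m.factorization p
      = b.factorization p + n₀.factorization p + N.factorization p := by
    intro p
    have h1 := congrArg (fun x : ℕ →₀ ℕ => x p) (congrArg Nat.factorization hsq)
    simp only [Nat.factorization_pow, Nat.factorization_mul hb (mul_ne_zero hn0 hN),
      Nat.factorization_mul hn0 hN, Finsupp.smul_apply, Finsupp.add_apply, smul_eq_mul] at h1
    omega
  have hbf : ∀ p, b.factorization p ≤ m.factorization p :=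
    fun p => (Nat.factorization_le_iff_dvd hb hm).mpr hbm p
  have hnf : ∀ p, n₀.factorization p ≤ m.factorization p :=
    fun p => (Nat.factorization_le_iff_dvd hn0 hm).mpr hn0m p
  have hgf : ∀ p, g.factorization p = min (m.factorization p) (N.factorization p) := by
    intro p; rw [hgdef, Nat.factorization_gcd hm hN]; rfl
  have hβf : ∀ p, (m / g).factorization p = m.factorization p - g.factorization p := by
    intro p; rw [Nat.factorization_div hgm]; rfl
  refine ⟨(Nat.factorization_le_iff_dvd hβ0 hb).mp (fun p => ?_),
          (Nat.factorization_le_iff_dvd hβ0 hn0).mp (fun p => ?_),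
          (Nat.factorization_le_iff_dvd hN (pow_ne_zero 2 hg0)).mp (fun p => ?_)⟩
  · have := key p; have := hbf p; have := hnf p; have := hgf p; have := hβf p; omega
  · have := key p; have := hbf p; have := hnf p; have := hgf p; have := hβf p; omega
  · have := key p; have := hgf p
    simp only [Nat.factorization_pow, Finsupp.smul_apply, smul_eq_mul]
    omega

/-- The core inductive construction: a family of `{0,1}`-tensors indexed by a state space
`Fin b`, with prescribed slice sums and a Cauchy–Schwarz-type spectral bound. -/
lemma core : ∀ (d : ℕ) (n : Fin d → ℕ) (b m : ℕ), 0 < b → 0 < m → (∀ k, 0 < n k) →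
    m ^ 2 = b * ∏ k, n k → b ∣ m → (∀ k, n k ∣ m) →
    ∃ S : Fin b → ((∀ k, Fin (n k)) → ℝ),
      (∀ c i, S c i = 0 ∨ S c i = 1) ∧
      (∀ c, (∑ i, S c i) = (m : ℝ) / (b : ℝ)) ∧
      (∀ (y : Fin b → ℝ) (x : ∀ k, Fin (n k) → ℝ),
        |∑ c, ∑ i, y c * S c i * ∏ k, x k (i k)| ≤
          Real.sqrt (∑ c, y c ^ 2) * ∏ k, Real.sqrt (∑ j, x k j ^ 2)) := by
  intro d
  induction d with
  | zero =>
    intro n b m hb hm hn hsq hbm hnm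
    have hprod : (∏ k, n k) = 1 := by simp
    rw [hprod, mul_one] at hsq
    have hm1 : m = 1 := by
      have h1 : m ^ 2 ∣ m := hsq ▸ hbm
      have h2 : m ^ 2 ≤ m := Nat.le_of_dvd hm h1
      have h3 : m * m ≤ m * 1 := by rw [mul_one]; rw [pow_two] at h2; exact h2
      have h4 : m ≤ 1 := Nat.le_of_mul_le_mul_left h3 hm
      omega
    have hb1 : b = 1 := by rw [hm1] at hsq; simpa using hsq.symm
    subst hm1; subst hb1
    refine ⟨fun _ _ => 1, fun _ _ => Or.inr rfl, ?_, ?_⟩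
    · intro c
      haveI : Unique (∀ k : Fin 0, Fin (n k)) :=
        ⟨⟨fun k => k.elim0⟩, fun a => funext fun k => k.elim0⟩
      simp
    · intro y x
      haveI : Unique (∀ k : Fin 0, Fin (n k)) :=
        ⟨⟨fun k => k.elim0⟩, fun a => funext fun k => k.elim0⟩
      simp [Fin.sum_univ_one, Real.sqrt_sq_eq_abs]
  | succ d ih =>
    intro n b m hb hm hn hsq hbm hnm
    set N := ∏ j : Fin d, n j.succ with hNdef
    have hprod : (∏ k, n k) = n 0 * N := Fin.prod_univ_succ n
    have hN0 : 0 < N := Finset.prod_pos (fun j _ => hn _)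
    have hn00 : 0 < n 0 := hn 0
    set g := Nat.gcd m N with hgdef
    have hg0 : 0 < g := Nat.gcd_pos_of_pos_left _ hm
    obtain ⟨hβb, hβn, hNg2⟩ := arith_aux b (n 0) N m hb.ne' hn00.ne' hN0.ne' hm.ne'
      (by rw [hsq, hprod]) hbm (hnm 0)
    set β := m / g with hβdef
    have hgm : g ∣ m := Nat.gcd_dvd_left m N
    have hgN : g ∣ N := Nat.gcd_dvd_right m N
    have hmβg : m = β * g := (Nat.div_mul_cancel hgm).symm
    have hβ0 : 0 < β := Nat.div_pos (Nat.le_of_dvd hm hgm) hg0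
    set p := b / β with hpdef
    set q := n 0 / β with hqdef
    have hbpβ : b = p * β := (Nat.div_mul_cancel hβb).symm
    have hnqβ : n 0 = q * β := (Nat.div_mul_cancel hβn).symm
    have hp0 : 0 < p := by
      rcases Nat.eq_zero_or_pos p with h | h
      · rw [h, zero_mul] at hbpβ; omega
      · exact h
    have hq0 : 0 < q := by
      rcases Nat.eq_zero_or_pos q with h | h
      · rw [h, zero_mul] at hnqβ; omega
      · exact h
    set b' := g ^ 2 / N with hb'def
    have hb'N : b' * N = g ^ 2 := Nat.div_mul_cancel hNg2
    have hb'0 : 0 < b' := by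
      rcases Nat.eq_zero_or_pos b' with h | h
      · rw [h, zero_mul] at hb'N; nlinarith
      · exact h
    have hb'g : b' ∣ g := by
      refine ⟨N / g, ?_⟩
      have h1 : b' * (N / g) * g = g * g := by
        rw [mul_assoc, Nat.div_mul_cancel hgN, hb'N, pow_two]
      exact (Nat.eq_of_mul_eq_mul_right hg0 h1).symm
    have hb'pq : b' = p * q := by
      have h1 : b' * (β * β * N) = (p * q) * (β * β * N) := by
        have e1 : b' * (β * β * N) = (β * g) * (β * g) := by
          calc b' * (β * β * N) = (b' * N) * (β * β) := by ring
            _ = g ^ 2 * (β * β) := by rw [hb'N]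
            _ = (β * g) * (β * g) := by ring
        have e2 : (p * q) * (β * β * N) = b * (n 0 * N) := by
          rw [hbpβ, hnqβ]; ring
        rw [e1, e2, ← hmβg, ← hprod, ← hsq, pow_two]
      have hpos : 0 < β * β * N := by positivity
      exact (Nat.eq_of_mul_eq_mul_right hpos h1)
    -- inductive hypothesis
    obtain ⟨S', h01', hsum', hbound'⟩ := ih (fun j => n j.succ) b' g hb'0 hg0
      (fun j => hn _) (by rw [← hb'N])
      hb'g (fun j => Nat.dvd_gcd (hnm j.succ) (Finset.dvd_prod_of_mem _ (Finset.mem_univ j)))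
    -- equivalences
    set eb : Fin b ≃ Fin p × Fin β := (finCongr hbpβ).trans finProdFinEquiv.symm with hebdef
    set en : Fin (n 0) ≃ Fin q × Fin β := (finCongr hnqβ).trans finProdFinEquiv.symm with hendef
    set eb' : Fin b' ≃ Fin p × Fin q := (finCongr hb'pq).trans finProdFinEquiv.symm with heb'def
    refine ⟨fun c i => if (en (i 0)).2 = (eb c).2 then
        S' (eb'.symm ((eb c).1, (en (i 0)).1)) (fun j => i j.succ) else 0, ?_, ?_, ?_⟩
    · intro c i
      dsimp only
      split
      · exact h01' _ _
      · exact Or.inl rfl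
    · -- slice sums
      intro c
      have hsum_pi : ∀ (G : (∀ k, Fin (n k)) → ℝ),
          (∑ i, G i) = ∑ i₀ : Fin (n 0), ∑ ip : (∀ j : Fin d, Fin (n j.succ)),
            G (Fin.cons i₀ ip) := by
        intro G
        rw [← (Fin.consEquiv (fun k => Fin (n k))).sum_comp, Fintype.sum_prod_type]
        rfl
      rw [hsum_pi]
      have e2 : ∀ (F : Fin (n 0) → ℝ), (∑ i₀, F i₀) = ∑ ts : Fin q × Fin β, F (en.symm ts) :=
        fun F => (Equiv.sum_comp en.symm F).symm
      rw [e2]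
      simp only [Fin.cons_zero, Fin.cons_succ, Equiv.apply_symm_apply]
      rw [Fintype.sum_prod_type]
      have hinner : ∀ (t : Fin q) (s : Fin β),
          (∑ ip : (∀ j : Fin d, Fin (n j.succ)),
            if s = (eb c).2 then S' (eb'.symm ((eb c).1, t)) ip else 0)
          = if s = (eb c).2 then (g : ℝ) / (b' : ℝ) else 0 := by
        intro t s
        rw [Finset.sum_ite_irrel]
        rw [hsum']
        simp
      simp only [hinner]
      rw [Finset.sum_congr rfl (fun t _ => Finset.sum_ite_eq' Finset.univ (eb c).2
        (fun _ => (g : ℝ) / (b' : ℝ)))]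
      simp only [Finset.mem_univ, if_true, Finset.sum_const, Finset.card_univ,
        Fintype.card_fin, nsmul_eq_mul]
      -- q * (g / b') = m / b
      have hbR : (b : ℝ) = (p : ℝ) * (β : ℝ) := by exact_mod_cast congrArg Nat.cast hbpβ
      have hb'R : (b' : ℝ) = (p : ℝ) * (q : ℝ) := by exact_mod_cast congrArg Nat.cast hb'pq
      have hmR : (m : ℝ) = (β : ℝ) * (g : ℝ) := by exact_mod_cast congrArg Nat.cast hmβg
      have hpne : (p : ℝ) ≠ 0 := Nat.cast_ne_zero.mpr hp0.ne'
      have hqne : (q : ℝ) ≠ 0 := Nat.cast_ne_zero.mpr hq0.ne'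
      have hβne : (β : ℝ) ≠ 0 := Nat.cast_ne_zero.mpr hβ0.ne'
      rw [hbR, hb'R, hmR]
      field_simp
    · -- spectral bound
      intro y x
      set x0 : Fin (n 0) → ℝ := x 0 with hx0def
      set xs : ∀ j : Fin d, Fin (n j.succ) → ℝ := fun j => x j.succ with hxsdef
      set y' : Fin b' → ℝ := fun c' =>
        ∑ s : Fin β, y (eb.symm ((eb' c').1, s)) * x0 (en.symm ((eb' c').2, s)) with hy'def
      have hsum_pi : ∀ (G : (∀ k, Fin (n k)) → ℝ),
          (∑ i, G i) = ∑ i₀ : Fin (n 0), ∑ ip : (∀ j : Fin d, Fin (n j.succ)),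
            G (Fin.cons i₀ ip) := by
        intro G
        rw [← (Fin.consEquiv (fun k => Fin (n k))).sum_comp, Fintype.sum_prod_type]
        rfl
      have e1 : ∀ (F : Fin b → ℝ), (∑ c, F c) = ∑ rs : Fin p × Fin β, F (eb.symm rs) :=
        fun F => (Equiv.sum_comp eb.symm F).symm
      have e2 : ∀ (F : Fin (n 0) → ℝ), (∑ i₀, F i₀) = ∑ ts : Fin q × Fin β, F (en.symm ts) :=
        fun F => (Equiv.sum_comp en.symm F).symm
      have e3 : ∀ (F : Fin b' → ℝ), (∑ c', F c') = ∑ rt : Fin p × Fin q, F (eb'.symm rt) :=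
        fun F => (Equiv.sum_comp eb'.symm F).symm
      have claimA : (∑ c, ∑ i : (∀ k, Fin (n k)), y c * (if (en (i 0)).2 = (eb c).2 then
            S' (eb'.symm ((eb c).1, (en (i 0)).1)) (fun j => i j.succ) else 0)
              * ∏ k, x k (i k))
          = ∑ c', ∑ ip, y' c' * S' c' ip * ∏ j, xs j (ip j) := by
        -- normalize LHS
        have lhs_eq : (∑ c, ∑ i : (∀ k, Fin (n k)), y c * (if (en (i 0)).2 = (eb c).2 then
            S' (eb'.symm ((eb c).1, (en (i 0)).1)) (fun j => i j.succ) else 0)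
              * ∏ k, x k (i k))
            = ∑ r : Fin p, ∑ t : Fin q, ∑ s : Fin β, ∑ ip,
                y (eb.symm (r, s)) * x0 (en.symm (t, s)) *
                  (S' (eb'.symm (r, t)) ip * ∏ j, xs j (ip j)) := by
          rw [e1, Fintype.sum_prod_type]
          refine Finset.sum_congr rfl fun r _ => ?_
          -- goal: ∑ s₀, ∑ i, ... = ∑ t, ∑ s, ∑ ip, ...
          have inner_eq : ∀ s₀ : Fin β,
              (∑ i : (∀ k, Fin (n k)), y (eb.symm (r, s₀)) * (if (en (i 0)).2 = (eb (eb.symm (r, s₀))).2 then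
                S' (eb'.symm ((eb (eb.symm (r, s₀))).1, (en (i 0)).1)) (fun j => i j.succ) else 0)
                  * ∏ k, x k (i k))
              = ∑ t : Fin q, ∑ s : Fin β, ∑ ip,
                  (if s = s₀ then
                    y (eb.symm (r, s₀)) * x0 (en.symm (t, s)) *
                      (S' (eb'.symm (r, t)) ip * ∏ j, xs j (ip j)) else 0) := by
            intro s₀
            rw [hsum_pi, e2, Fintype.sum_prod_type]
            refine Finset.sum_congr rfl fun t _ => Finset.sum_congr rfl fun s _ =>
              Finset.sum_congr rfl fun ip _ => ?_
            simp only [Fin.cons_zero, Fin.cons_succ, Equiv.apply_symm_apply,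
              Fin.prod_univ_succ]
            by_cases h : s = s₀
            · simp [h, hx0def, hxsdef]; ring
            · simp [h]
          simp only [inner_eq]
          -- collapse the s₀ sum against the diagonal
          rw [Finset.sum_comm]
          refine Finset.sum_congr rfl fun t _ => ?_
          rw [Finset.sum_comm]
          refine Finset.sum_congr rfl fun s _ => ?_
          rw [Finset.sum_comm]
          refine Finset.sum_congr rfl fun ip _ => ?_
          rw [Finset.sum_ite_eq Finset.univ s
            (fun s₀ => y (eb.symm (r, s₀)) * x0 (en.symm (t, s)) *
              (S' (eb'.symm (r, t)) ip * ∏ j, xs j (ip j)))]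
          simp
        rw [lhs_eq, e3, Fintype.sum_prod_type]
        refine Finset.sum_congr rfl fun r _ => ?_
        refine Finset.sum_congr rfl fun t _ => ?_
        -- goal: ∑ s, ∑ ip, A = ∑ ip, y' (eb'.symm (r,t)) * S' _ ip * ∏
        rw [Finset.sum_comm]
        refine Finset.sum_congr rfl fun ip _ => ?_
        have : y' (eb'.symm (r, t)) = ∑ s : Fin β,
            y (eb.symm (r, s)) * x0 (en.symm (t, s)) := by
          rw [hy'def]
          simp only [Equiv.apply_symm_apply]
        rw [this, Finset.sum_mul, Finset.sum_mul]
        refine Finset.sum_congr rfl fun s _ => ?_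
        ring
      have hy'bound : Real.sqrt (∑ c', y' c' ^ 2)
          ≤ Real.sqrt (∑ c, y c ^ 2) * Real.sqrt (∑ j, x0 j ^ 2) := by
        rw [← Real.sqrt_mul (Finset.sum_nonneg fun c _ => sq_nonneg _)]
        apply Real.sqrt_le_sqrt
        calc (∑ c', y' c' ^ 2)
            = ∑ rt : Fin p × Fin q,
                (∑ s : Fin β, y (eb.symm (rt.1, s)) * x0 (en.symm (rt.2, s))) ^ 2 := by
              rw [e3]
              refine Finset.sum_congr rfl fun rt _ => ?_
              rw [hy'def]
              simp only [Equiv.apply_symm_apply]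
          _ ≤ ∑ rt : Fin p × Fin q,
                (∑ s : Fin β, y (eb.symm (rt.1, s)) ^ 2) *
                  (∑ s : Fin β, x0 (en.symm (rt.2, s)) ^ 2) := by
              refine Finset.sum_le_sum fun rt _ => ?_
              exact Finset.sum_mul_sq_le_sq_mul_sq Finset.univ _ _
          _ = (∑ rs : Fin p × Fin β, y (eb.symm rs) ^ 2) *
                (∑ ts : Fin q × Fin β, x0 (en.symm ts) ^ 2) := by
              rw [Fintype.sum_prod_type, Fintype.sum_prod_type, Fintype.sum_prod_type,
                Finset.sum_mul_sum]
          _ = (∑ c, y c ^ 2) * (∑ j, x0 j ^ 2) := by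
              rw [← e1 (fun c => y c ^ 2), ← e2 (fun j => x0 j ^ 2)]
      calc |∑ c, ∑ i : (∀ k, Fin (n k)), y c * (if (en (i 0)).2 = (eb c).2 then
            S' (eb'.symm ((eb c).1, (en (i 0)).1)) (fun j => i j.succ) else 0)
              * ∏ k, x k (i k)|
          = |∑ c', ∑ ip, y' c' * S' c' ip * ∏ j, xs j (ip j)| := by rw [claimA]
        _ ≤ Real.sqrt (∑ c', y' c' ^ 2) * ∏ j, Real.sqrt (∑ i, xs j i ^ 2) := hbound' y' xs
        _ ≤ (Real.sqrt (∑ c, y c ^ 2) * Real.sqrt (∑ j, x0 j ^ 2)) *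
              ∏ j, Real.sqrt (∑ i, xs j i ^ 2) := by
            apply mul_le_mul_of_nonneg_right hy'bound
            exact Finset.prod_nonneg fun j _ => Real.sqrt_nonneg _
        _ = Real.sqrt (∑ c, y c ^ 2) * ∏ k, Real.sqrt (∑ j, x k j ^ 2) := by
            rw [Fin.prod_univ_succ]
            rw [hx0def, hxsdef]
            ring

theorem stmt_2 {d : ℕ} (hd : 1 ≤ d) (n : Fin d → ℕ) (hn : ∀ k, 2 ≤ n k)
    (m : ℕ) (hm : 0 < m) (hm2 : m ^ 2 = ∏ k, n k) (hdvd : ∀ k, n k ∣ m) :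
    ∃ T : (∀ k, Fin (n k)) → ℝ,
      (∀ i, T i = 0 ∨ T i = 1) ∧
      specNorm T = 1 ∧
      frobNorm T = (∏ k, (n k : ℝ)) ^ ((1 : ℝ)/4) ∧
      T ≠ 0 ∧ (∀ i, 0 ≤ T i) ∧
      specNorm T = (∏ k, (n k : ℝ)) ^ (-(1 : ℝ)/4) * frobNorm T := by
  have hn0 : ∀ k, 0 < n k := fun k => lt_of_lt_of_le two_pos (hn k)
  obtain ⟨S, h01, hsum, hbound⟩ := core d n 1 m one_pos hm hn0
    (by simpa using hm2) (one_dvd m) hdvd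
  set T : (∀ k, Fin (n k)) → ℝ := S 0 with hTdef
  have hT01 : ∀ i, T i = 0 ∨ T i = 1 := fun i => h01 0 i
  have hTnonneg : ∀ i, 0 ≤ T i := by
    intro i; rcases hT01 i with h | h <;> rw [h] <;> norm_num
  have hTsum : (∑ i, T i) = (m : ℝ) := by
    have := hsum 0
    simpa using this
  have hprodR : (∏ k, (n k : ℝ)) = (m : ℝ) ^ 2 := by
    rw [← Nat.cast_prod, ← hm2]; push_cast; ring
  have hmR0 : (0:ℝ) < (m : ℝ) := by exact_mod_cast hm
  -- Frobenius norm
  have hfrob : frobNorm T = Real.sqrt (m : ℝ) := by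
    rw [frobNorm]
    congr 1
    rw [← hTsum]
    refine Finset.sum_congr rfl fun i _ => ?_
    rcases hT01 i with h | h <;> rw [h] <;> norm_num
  have hfrob' : frobNorm T = (∏ k, (n k : ℝ)) ^ ((1 : ℝ)/4) := by
    rw [hfrob, hprodR, Real.sqrt_eq_rpow, ← Real.rpow_natCast ((m:ℝ)) 2,
      ← Real.rpow_mul hmR0.le]
    norm_num
  -- the sup set
  set A : Set ℝ := { r : ℝ | ∃ x : ∀ k, EuclideanSpace ℝ (Fin (n k)),
    (∀ k, ‖x k‖ = 1) ∧ r = |∑ i, T i * ∏ k, x k (i k)| } with hAdef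
  have hub : ∀ r ∈ A, r ≤ 1 := by
    rintro r ⟨x, hx, rfl⟩
    have hxk : ∀ k, (∑ j, (x k j) ^ 2) = 1 := by
      intro k
      have h1 := EuclideanSpace.norm_eq (x k)
      rw [hx k] at h1
      have h2 : Real.sqrt (∑ j, ‖x k j‖ ^ 2) = 1 := h1.symm
      have h3 := congrArg (fun t : ℝ => t ^ 2) h2
      simp only [Real.sq_sqrt (Finset.sum_nonneg fun j _ => sq_nonneg _), one_pow] at h3
      simpa [sq_abs] using h3
    have hb := hbound (fun _ => 1) (fun k (j : Fin (n k)) => x k j)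
    have hL : (∑ c : Fin 1, ∑ i, (1:ℝ) * S c i * ∏ k, x k (i k))
        = ∑ i, T i * ∏ k, x k (i k) := by
      rw [Fin.sum_univ_one]
      exact Finset.sum_congr rfl fun i _ => by rw [one_mul, hTdef]
    rw [hL] at hb
    calc |∑ i, T i * ∏ k, x k (i k)|
        ≤ Real.sqrt (∑ c : Fin 1, (1:ℝ) ^ 2) * ∏ k, Real.sqrt (∑ j, (x k j) ^ 2) := hb
      _ = 1 := by
          simp only [hxk]
          simp
  have hprod_sqrt : (∏ k, Real.sqrt (n k : ℝ)) = (m : ℝ) := by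
    have h2 : (∏ k, Real.sqrt (n k : ℝ)) ^ 2 = ∏ k, (n k : ℝ) := by
      rw [← Finset.prod_pow]
      exact Finset.prod_congr rfl fun k _ => Real.sq_sqrt (Nat.cast_nonneg _)
    have hnn : (0:ℝ) ≤ ∏ k, Real.sqrt (n k : ℝ) :=
      Finset.prod_nonneg fun k _ => Real.sqrt_nonneg _
    have := congrArg Real.sqrt h2
    rwa [Real.sqrt_sq hnn, hprodR, Real.sqrt_sq hmR0.le] at this
  have hmem : (1:ℝ) ∈ A := by
    refine ⟨fun k => WithLp.toLp 2 (fun _ => (Real.sqrt (n k : ℝ))⁻¹), ?_, ?_⟩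
    · intro k
      rw [EuclideanSpace.norm_eq]
      simp only [PiLp.toLp_apply]
      have hpos : (0:ℝ) < Real.sqrt (n k : ℝ) := Real.sqrt_pos.mpr (by exact_mod_cast hn0 k)
      rw [show (∑ j : Fin (n k), ‖(Real.sqrt (n k : ℝ))⁻¹‖ ^ 2)
          = (n k : ℝ) * ((Real.sqrt (n k : ℝ))⁻¹) ^ 2 by
        simp [Finset.sum_const, Finset.card_univ, sq_abs]]
      rw [inv_pow, Real.sq_sqrt (Nat.cast_nonneg _), mul_inv_cancel₀
        (by exact_mod_cast (hn0 k).ne')]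
      exact Real.sqrt_one
    · change (1:ℝ) = |∑ i, T i * ∏ k, ((fun _ => (Real.sqrt (n k : ℝ))⁻¹) (i k) : ℝ)|
      have hconst : ∀ i : (∀ k, Fin (n k)),
          (∏ k, ((fun _ => (Real.sqrt (n k : ℝ))⁻¹) (i k) : ℝ)) = (m : ℝ)⁻¹ := by
        intro i
        rw [show (∏ k, ((Real.sqrt (n k : ℝ))⁻¹)) = (∏ k, Real.sqrt (n k : ℝ))⁻¹ by
          rw [← Finset.prod_inv_distrib], hprod_sqrt]
      rw [show (∑ i, T i * ∏ k, ((fun _ => (Real.sqrt (n k : ℝ))⁻¹) (i k) : ℝ))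
          = ∑ i, T i * (m:ℝ)⁻¹ by
        exact Finset.sum_congr rfl fun i _ => by rw [hconst i]]
      rw [← Finset.sum_mul, hTsum, mul_inv_cancel₀ hmR0.ne']
      norm_num
  have hspec : specNorm T = 1 := by
    rw [specNorm, ← hAdef]
    apply le_antisymm
    · exact csSup_le ⟨1, hmem⟩ hub
    · exact le_csSup ⟨1, hub⟩ hmem
  refine ⟨T, hT01, hspec, hfrob', ?_, hTnonneg, ?_⟩
  · intro h
    rw [h] at hTsum
    simp only [Pi.zero_apply, Finset.sum_const_zero] at hTsum
    exact hmR0.ne' hTsum.symm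
  · rw [hspec, hfrob, hprodR, Real.sqrt_eq_rpow, ← Real.rpow_natCast ((m:ℝ)) 2,
      ← Real.rpow_mul hmR0.le, ← Real.rpow_add hmR0]
    norm_num
end
end

section
/- Let d ≥ 2, let T be a real tensor of order d with dimensions n_1, …, n_d, let e : Fin n_1 × Fin n_2 → Fin (n_1·n_2) be a bijection, and let X be the tensor of order d−1 with dimensions n_1·n_2, n_3, …, n_d defined by X(e(i_1, i_2), i_3, …, i_d) = T(i_1, i_2, …, i_d). Then ‖T‖_σ ≤ ‖X‖_σ, ‖T‖ = ‖X‖, and ‖T‖_* ≥ ‖X‖_*. -/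
noncomputable section

/-- Nuclear norm: infimum of `∑ |λ_i|` over rank-one decompositions with unit vectors. -/
def nucNorm {d : ℕ} {n : Fin d → ℕ} (T : (∀ k, Fin (n k)) → ℝ) : ℝ :=
  sInf { s : ℝ | ∃ (r : ℕ) (lam : Fin r → ℝ)
    (x : Fin r → ∀ k, EuclideanSpace ℝ (Fin (n k))),
    (∀ i k, ‖x i k‖ = 1) ∧ (∀ j, T j = ∑ i, lam i * ∏ k, x i k (j k)) ∧
    s = ∑ i, |lam i| }

/- ### Auxiliary lemmas -/

lemma aux_sumsq {N : ℕ} (v : EuclideanSpace ℝ (Fin N)) (h : ‖v‖ = 1) :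
    ∑ a, (v a) ^ 2 = 1 := by
  have h2 := EuclideanSpace.norm_eq v
  rw [h] at h2
  have h3 : ∑ a, (v a) ^ 2 = ∑ a, ‖v a‖ ^ 2 := by simp [sq_abs]
  rw [h3]
  have hnn : (0:ℝ) ≤ ∑ a, ‖v a‖ ^ 2 := by positivity
  nlinarith [Real.sq_sqrt hnn]

lemma aux_norm_one {N : ℕ} (v : EuclideanSpace ℝ (Fin N)) (h : ∑ a, (v a) ^ 2 = 1) :
    ‖v‖ = 1 := by
  rw [EuclideanSpace.norm_eq]
  have h3 : ∑ a, ‖v a‖ ^ 2 = ∑ a, (v a) ^ 2 := by simp [sq_abs]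
  rw [h3, h, Real.sqrt_one]

lemma aux_cs {ι : Type*} [Fintype ι] (f g : ι → ℝ) :
    |∑ i, f i * g i| ≤ Real.sqrt (∑ i, f i ^ 2) * Real.sqrt (∑ i, g i ^ 2) := by
  have h := Finset.sum_mul_sq_le_sq_mul_sq Finset.univ f g
  have h1 : |∑ i, f i * g i| = Real.sqrt ((∑ i, f i * g i) ^ 2) :=
    (Real.sqrt_sq_eq_abs _).symm
  rw [h1, ← Real.sqrt_mul (by positivity)]
  exact Real.sqrt_le_sqrt h

lemma aux_prod_sum_swap {d : ℕ} {n : Fin d → ℕ} (f : ∀ k, Fin (n k) → ℝ) :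
    ∑ j : ∀ k, Fin (n k), ∏ k, f k (j k) = ∏ k, ∑ a, f k a := by
  rw [Finset.prod_univ_sum]
  simp

lemma aux_pairing_bound {d : ℕ} {n : Fin d → ℕ} (T : (∀ k, Fin (n k)) → ℝ)
    (x : ∀ k, EuclideanSpace ℝ (Fin (n k))) (hx : ∀ k, ‖x k‖ = 1) :
    |∑ i, T i * ∏ k, x k (i k)| ≤ frobNorm T := by
  have h := aux_cs (fun i : ∀ k, Fin (n k) => T i) (fun i => ∏ k, x k (i k))
  have h2 : ∑ i : ∀ k, Fin (n k), (∏ k, x k (i k)) ^ 2 = 1 := by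
    have : ∀ i : ∀ k, Fin (n k), (∏ k, x k (i k)) ^ 2 = ∏ k, (x k (i k)) ^ 2 := by
      intro i; rw [Finset.prod_pow]
    simp_rw [this]
    have hswap := aux_prod_sum_swap (n := n) (fun k a => (x k a) ^ 2)
    rw [hswap]
    exact Finset.prod_eq_one (fun k _ => aux_sumsq _ (hx k))
  rw [h2, Real.sqrt_one, mul_one] at h
  exact h

section flat

variable {m : ℕ} {n : Fin (m + 2) → ℕ}
  (e : Fin (n 0) × Fin (n 1) ≃ Fin (n 0 * n 1))
  {d' : Fin (m + 1) → ℕ} (hd0 : d' 0 = n 0 * n 1)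
  (hds : ∀ j : Fin m, d' j.succ = n j.succ.succ)

def flatIdx (i : ∀ k, Fin (n k)) : ∀ j, Fin (d' j) :=
  Fin.cons (α := fun j => Fin (d' j)) (Fin.cast hd0.symm (e (i 0, i 1)))
    (fun j => Fin.cast (hds j).symm (i j.succ.succ))

lemma flatIdx_zero (i : ∀ k, Fin (n k)) :
    flatIdx e hd0 hds i 0 = Fin.cast hd0.symm (e (i 0, i 1)) := rfl

lemma flatIdx_succ (i : ∀ k, Fin (n k)) (j : Fin m) :
    flatIdx e hd0 hds i j.succ = Fin.cast (hds j).symm (i j.succ.succ) := rfl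

lemma flatIdx_bij : Function.Bijective (flatIdx e hd0 hds) := by
  rw [Fintype.bijective_iff_injective_and_card]
  constructor
  · intro i i' h
    have h0 := congrFun h 0
    simp only [flatIdx, Fin.cons_zero] at h0
    have he : e (i 0, i 1) = e (i' 0, i' 1) := by
      apply Fin.ext; simpa using congrArg Fin.val h0
    have hpair := e.injective he
    have h01 : i 0 = i' 0 := congrArg Prod.fst hpair
    have h11 : i 1 = i' 1 := congrArg Prod.snd hpair
    have htail : ∀ j : Fin m, i j.succ.succ = i' j.succ.succ := by
      intro j
      have hj := congrFun h j.succ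
      simp only [flatIdx, Fin.cons_succ] at hj
      apply Fin.ext; simpa using congrArg Fin.val hj
    funext k
    refine Fin.cases h01 (fun k' => ?_) k
    refine Fin.cases ?_ (fun j => htail j) k'
    simpa [Fin.succ_zero_eq_one] using h11
  · simp only [Fintype.card_pi, Fintype.card_fin]
    rw [Fin.prod_univ_succ, Fin.prod_univ_succ, Fin.prod_univ_succ, hd0]
    simp [hds, Fin.succ_zero_eq_one, mul_assoc]

def flatEquiv : (∀ k, Fin (n k)) ≃ (∀ j, Fin (d' j)) :=
  Equiv.ofBijective _ (flatIdx_bij e hd0 hds)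

lemma flatEquiv_apply (i : ∀ k, Fin (n k)) :
    flatEquiv e hd0 hds i = flatIdx e hd0 hds i := rfl

def flatVec (x : ∀ k, EuclideanSpace ℝ (Fin (n k))) :
    ∀ j, EuclideanSpace ℝ (Fin (d' j)) :=
  Fin.cons (α := fun j => EuclideanSpace ℝ (Fin (d' j)))
    (WithLp.toLp 2 (fun a => x 0 (e.symm (Fin.cast hd0 a)).1 * x 1 (e.symm (Fin.cast hd0 a)).2))
    (fun j => WithLp.toLp 2 (fun a => x j.succ.succ (Fin.cast (hds j) a)))

lemma flatVec_norm (x : ∀ k, EuclideanSpace ℝ (Fin (n k))) (hx : ∀ k, ‖x k‖ = 1) :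
    ∀ j, ‖flatVec e hd0 hds x j‖ = 1 := by
  intro j
  refine Fin.cases ?_ (fun j' => ?_) j
  · apply aux_norm_one
    simp only [flatVec, Fin.cons_zero, PiLp.toLp_apply]
    have hre := Equiv.sum_comp ((finCongr hd0).trans e.symm)
      (fun p : Fin (n 0) × Fin (n 1) => (x 0 p.1 * x 1 p.2) ^ 2)
    simp only [Equiv.trans_apply, finCongr_apply] at hre
    rw [hre, Fintype.sum_prod_type]
    have : ∀ p : Fin (n 0), ∀ q : Fin (n 1),
        (x 0 p * x 1 q) ^ 2 = (x 0 p) ^ 2 * (x 1 q) ^ 2 := fun p q => mul_pow _ _ _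
    simp_rw [this, ← Finset.mul_sum, ← Finset.sum_mul]
    rw [aux_sumsq _ (hx 0), aux_sumsq _ (hx 1), mul_one]
  · apply aux_norm_one
    simp only [flatVec, Fin.cons_succ, PiLp.toLp_apply]
    have hre := Equiv.sum_comp (finCongr (hds j'))
      (fun a : Fin (n j'.succ.succ) => (x j'.succ.succ a) ^ 2)
    simp only [finCongr_apply] at hre
    rw [hre]
    exact aux_sumsq _ (hx j'.succ.succ)

lemma flatVec_prod (x : ∀ k, EuclideanSpace ℝ (Fin (n k))) (i : ∀ k, Fin (n k)) :
    ∏ j, flatVec e hd0 hds x j (flatIdx e hd0 hds i j) = ∏ k, x k (i k) := by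
  rw [Fin.prod_univ_succ]
  have h0 : flatVec e hd0 hds x 0 (flatIdx e hd0 hds i 0) = x 0 (i 0) * x 1 (i 1) := by
    show x 0 (e.symm (Fin.cast hd0 (Fin.cast hd0.symm (e (i 0, i 1))))).1
        * x 1 (e.symm (Fin.cast hd0 (Fin.cast hd0.symm (e (i 0, i 1))))).2 = _
    have hc : Fin.cast hd0 (Fin.cast hd0.symm (e (i 0, i 1))) = e (i 0, i 1) := rfl
    rw [hc, e.symm_apply_apply]
  have hs : ∀ j : Fin m,
      flatVec e hd0 hds x j.succ (flatIdx e hd0 hds i j.succ) = x j.succ.succ (i j.succ.succ) :=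
    fun j => rfl
  rw [h0]
  simp_rw [hs]
  rw [Fin.prod_univ_succ (fun k => x k (i k)),
    Fin.prod_univ_succ (fun k : Fin (m+1) => x k.succ (i k.succ))]
  simp only [Fin.succ_zero_eq_one]
  rw [mul_assoc]

end flat

theorem stmt_4 {m : ℕ} (n : Fin (m + 2) → ℕ) (hn : ∀ k, 0 < n k)
    (e : Fin (n 0) × Fin (n 1) ≃ Fin (n 0 * n 1))
    (d' : Fin (m + 1) → ℕ) (hd0 : d' 0 = n 0 * n 1)
    (hds : ∀ j : Fin m, d' j.succ = n j.succ.succ)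
    (T : (∀ k, Fin (n k)) → ℝ) (X : (∀ j, Fin (d' j)) → ℝ)
    (hX : ∀ i : ∀ k, Fin (n k),
      X (Fin.cons (α := fun j => Fin (d' j)) (Fin.cast hd0.symm (e (i 0, i 1)))
        (fun j => Fin.cast (hds j).symm (i j.succ.succ))) = T i) :
    specNorm T ≤ specNorm X ∧ frobNorm T = frobNorm X ∧ nucNorm X ≤ nucNorm T := by
  have hX' : ∀ i, X (flatIdx e hd0 hds i) = T i := hX
  set E := flatEquiv e hd0 hds with hE
  have hEapp : ∀ i, E i = flatIdx e hd0 hds i := fun i => rfl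
  refine ⟨?_, ?_, ?_⟩
  · -- spectral norm
    apply csSup_le_csSup
    · refine ⟨frobNorm X, ?_⟩
      rintro r ⟨y, hy, rfl⟩
      exact aux_pairing_bound X y hy
    · refine ⟨|∑ i, T i * ∏ k, (fun k => EuclideanSpace.single (⟨0, hn k⟩ : Fin (n k)) (1:ℝ)) k (i k)|,
        fun k => EuclideanSpace.single (⟨0, hn k⟩ : Fin (n k)) (1:ℝ), fun k => ?_, rfl⟩
      apply aux_norm_one
      simp [EuclideanSpace.single_apply]
    · rintro r ⟨x, hx, rfl⟩
      refine ⟨flatVec e hd0 hds x, flatVec_norm e hd0 hds x hx, ?_⟩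
      congr 1
      have := Equiv.sum_comp E (fun j' => X j' * ∏ j, flatVec e hd0 hds x j (j' j))
      rw [← this]
      apply Finset.sum_congr rfl
      intro i _
      rw [hEapp, hX', flatVec_prod]
  · -- Frobenius norm
    unfold frobNorm
    congr 1
    have := Equiv.sum_comp E (fun j' => X j' ^ 2)
    rw [← this]
    apply Finset.sum_congr rfl
    intro i _
    rw [hEapp, hX']
  · -- nuclear norm
    apply csInf_le_csInf
    · refine ⟨0, ?_⟩
      rintro s ⟨r, lam, y, _, _, rfl⟩
      positivity
    · -- nonempty: standard decomposition of T
      classical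
      have g : Fin (Fintype.card (∀ k, Fin (n k))) ≃ (∀ k, Fin (n k)) :=
        (Fintype.equivFin _).symm
      refine ⟨∑ i, |T (g i)|, Fintype.card (∀ k, Fin (n k)), fun i => T (g i),
        fun i k => EuclideanSpace.single (g i k) (1:ℝ), fun i k => ?_, fun j => ?_, rfl⟩
      · apply aux_norm_one
        simp [EuclideanSpace.single_apply]
      · have hprod : ∀ i, (∏ k, (EuclideanSpace.single (g i k) (1:ℝ)) (j k))
            = if g i = j then 1 else 0 := by
          intro i
          by_cases h : g i = j
          · simp [h, EuclideanSpace.single_apply]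
          · obtain ⟨k, hk⟩ := Function.ne_iff.mp h
            rw [if_neg h]
            refine Finset.prod_eq_zero (Finset.mem_univ k) ?_
            rw [EuclideanSpace.single_apply, if_neg (Ne.symm hk)]
        have hsum : ∑ i, T (g i) * ∏ k, (EuclideanSpace.single (g i k) (1:ℝ)) (j k) = T j := by
          simp_rw [hprod]
          rw [Equiv.sum_comp g (fun p => T p * if p = j then 1 else 0)]
          simp
        exact hsum.symm
    · rintro s ⟨r, lam, x, hx, hdec, rfl⟩
      refine ⟨r, lam, fun i => flatVec e hd0 hds (x i),
        fun i j => flatVec_norm e hd0 hds (x i) (hx i) j, fun j' => ?_, rfl⟩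
      have hj' : j' = flatIdx e hd0 hds (E.symm j') := (E.apply_symm_apply j').symm
      rw [hj', hX', hdec]
      apply Finset.sum_congr rfl
      intro i _
      rw [flatVec_prod]
end
end

section
/- For every real tensor T of order d with dimensions n_1, …, n_d, one has ‖T‖_σ = sup{⟨T, X⟩ : X a real tensor of the same order and dimensions with ‖X‖_* ≤ 1} and ‖T‖_* = sup{⟨T, X⟩ : X a real tensor of the same order and dimensions with ‖X‖_σ ≤ 1}, where ⟨T, X⟩ := ∑_{i_1, …, i_d} T(i_1, …, i_d)·X(i_1, …, i_d). -/
noncomputable section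

/-!
Expanding `X` in a rank-one decomposition gives `⟨T, X⟩ ≤ ‖T‖_σ ‖X‖_*`, which bounds both
suprema from above. The signed unit rank-one tensors `±x¹⊗⋯⊗x^d` have nuclear norm at most one,
which gives the first equality. For the second, the nuclear norm is convex, hence continuous on
the finite-dimensional tensor space, so for `0 < s < ‖T‖_*` Hahn–Banach separates `T` from the
closed convex set `{Y | ‖Y‖_* ≤ s}`. Since this set contains `±s x¹⊗⋯⊗x^d`, the separating
functional, suitably rescaled, is a tensor of spectral norm at most one pairing with `T` to
more than `s`.
-/

open Finset Matrix

variable {d : ℕ} {n : Fin d → ℕ}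

def outerProd (x : ∀ k, EuclideanSpace ℝ (Fin (n k))) : (∀ k, Fin (n k)) → ℝ :=
  fun i => ∏ k, x k (i k)

def specSet (T : (∀ k, Fin (n k)) → ℝ) : Set ℝ :=
  {r | ∃ x : ∀ k, EuclideanSpace ℝ (Fin (n k)), (∀ k, ‖x k‖ = 1) ∧ r = |T ⬝ᵥ outerProd x|}

def nucSet (T : (∀ k, Fin (n k)) → ℝ) : Set ℝ :=
  {s | ∃ (r : ℕ) (lam : Fin r → ℝ) (x : Fin r → ∀ k, EuclideanSpace ℝ (Fin (n k))),
    (∀ i k, ‖x i k‖ = 1) ∧ (∀ j, T j = ∑ i, lam i * outerProd (x i) j) ∧ s = ∑ i, |lam i|}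

theorem nucNorm_eq_sInf_nucSet (T : (∀ k, Fin (n k)) → ℝ) :
    nucNorm T = sInf (nucSet T) := rfl

section Spectral

theorem abs_outerProd_apply_le_one {x : ∀ k, EuclideanSpace ℝ (Fin (n k))}
    (hx : ∀ k, ‖x k‖ = 1) (i : ∀ k, Fin (n k)) : |outerProd x i| ≤ 1 := by
  rw [outerProd, abs_prod]
  refine prod_le_one (fun k _ => abs_nonneg _) fun k _ => ?_
  simpa [hx k] using PiLp.norm_apply_le (x k) (i k)

theorem abs_dotProduct_outerProd_le (T : (∀ k, Fin (n k)) → ℝ)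
    {x : ∀ k, EuclideanSpace ℝ (Fin (n k))} (hx : ∀ k, ‖x k‖ = 1) :
    |T ⬝ᵥ outerProd x| ≤ ∑ i, |T i| :=
  calc |T ⬝ᵥ outerProd x| ≤ ∑ i, |T i| * |outerProd x i| := by
        simpa only [dotProduct, abs_mul] using
          abs_sum_le_sum_abs (fun i => T i * outerProd x i) univ
    _ ≤ ∑ i, |T i| := sum_le_sum fun i _ =>
        mul_le_of_le_one_right (abs_nonneg _) (abs_outerProd_apply_le_one hx i)

theorem bddAbove_specSet (T : (∀ k, Fin (n k)) → ℝ) : BddAbove (specSet T) := by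
  refine ⟨∑ i, |T i|, ?_⟩
  rintro _ ⟨x, hx, rfl⟩
  exact abs_dotProduct_outerProd_le T hx

theorem abs_dotProduct_outerProd_le_specNorm (T : (∀ k, Fin (n k)) → ℝ)
    {x : ∀ k, EuclideanSpace ℝ (Fin (n k))} (hx : ∀ k, ‖x k‖ = 1) :
    |T ⬝ᵥ outerProd x| ≤ specNorm T :=
  le_csSup (bddAbove_specSet T) ⟨x, hx, rfl⟩

theorem specNorm_nonneg (T : (∀ k, Fin (n k)) → ℝ) : 0 ≤ specNorm T := by
  refine Real.sSup_nonneg ?_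
  rintro _ ⟨x, -, rfl⟩
  exact abs_nonneg _

theorem specNorm_le {T : (∀ k, Fin (n k)) → ℝ} {c : ℝ} (hc : 0 ≤ c)
    (h : ∀ x : ∀ k, EuclideanSpace ℝ (Fin (n k)), (∀ k, ‖x k‖ = 1) → |T ⬝ᵥ outerProd x| ≤ c) :
    specNorm T ≤ c := by
  refine Real.sSup_le ?_ hc
  rintro _ ⟨x, hx, rfl⟩
  exact h x hx

end Spectral

section Nuclear

theorem outerProd_single_apply (j i : ∀ k, Fin (n k)) :
    outerProd (fun k => EuclideanSpace.single (j k) (1 : ℝ)) i = if i = j then 1 else 0 := by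
  simp only [outerProd, PiLp.single_apply, prod_boole, funext_iff, mem_univ, true_implies]

theorem sum_abs_mem_nucSet (T : (∀ k, Fin (n k)) → ℝ) : ∑ j, |T j| ∈ nucSet T := by
  let e := (Fintype.equivFin (∀ k, Fin (n k))).symm
  refine ⟨_, fun i => T (e i), fun i k => EuclideanSpace.single (e i k) 1,
    fun i k => by simp, fun j => ?_, (e.sum_comp fun j => |T j|).symm⟩
  simp only [outerProd_single_apply, mul_ite, mul_one, mul_zero]
  rw [e.sum_comp fun m => if j = m then T m else 0]
  simp

theorem nonneg_of_mem_nucSet {T : (∀ k, Fin (n k)) → ℝ} {s : ℝ} (hs : s ∈ nucSet T) : 0 ≤ s := by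
  obtain ⟨r, lam, x, -, -, rfl⟩ := hs
  exact sum_nonneg fun i _ => abs_nonneg _

theorem bddBelow_nucSet (T : (∀ k, Fin (n k)) → ℝ) : BddBelow (nucSet T) :=
  ⟨0, fun _ => nonneg_of_mem_nucSet⟩

theorem nucNorm_le_of_mem {T : (∀ k, Fin (n k)) → ℝ} {s : ℝ} (hs : s ∈ nucSet T) :
    nucNorm T ≤ s :=
  csInf_le (bddBelow_nucSet T) hs

theorem nucNorm_nonneg (T : (∀ k, Fin (n k)) → ℝ) : 0 ≤ nucNorm T :=
  le_csInf ⟨_, sum_abs_mem_nucSet T⟩ fun _ => nonneg_of_mem_nucSet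

theorem nucNorm_le_sum_abs (T : (∀ k, Fin (n k)) → ℝ) : nucNorm T ≤ ∑ j, |T j| :=
  nucNorm_le_of_mem (sum_abs_mem_nucSet T)

theorem nucNorm_zero : nucNorm (0 : (∀ k, Fin (n k)) → ℝ) = 0 :=
  le_antisymm (by simpa using nucNorm_le_sum_abs (0 : (∀ k, Fin (n k)) → ℝ)) (nucNorm_nonneg 0)

theorem nucNorm_smul_outerProd_le (c : ℝ) {x : ∀ k, EuclideanSpace ℝ (Fin (n k))}
    (hx : ∀ k, ‖x k‖ = 1) : nucNorm (c • outerProd x) ≤ |c| :=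
  nucNorm_le_of_mem ⟨1, fun _ => c, fun _ => x, fun _ => hx, fun j => by simp, by simp⟩

theorem add_mem_nucSet {X Y : (∀ k, Fin (n k)) → ℝ} {s t : ℝ} (hs : s ∈ nucSet X)
    (ht : t ∈ nucSet Y) : s + t ∈ nucSet (X + Y) := by
  obtain ⟨r, lam, x, hx, hX, rfl⟩ := hs
  obtain ⟨r', lam', x', hx', hY, rfl⟩ := ht
  refine ⟨r + r', Fin.addCases lam lam', Fin.addCases x x', ?_, fun j => ?_, ?_⟩
  · exact Fin.addCases (by simpa using hx) (by simpa using hx')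
  · simp [Fin.sum_univ_add, hX j, hY j]
  · simp [Fin.sum_univ_add]

theorem smul_mem_nucSet {X : (∀ k, Fin (n k)) → ℝ} {s : ℝ} (c : ℝ) (hs : s ∈ nucSet X) :
    |c| * s ∈ nucSet (c • X) := by
  obtain ⟨r, lam, x, hx, hX, rfl⟩ := hs
  refine ⟨r, fun i => c * lam i, x, hx, fun j => ?_, ?_⟩
  · simp only [Pi.smul_apply, smul_eq_mul, hX j, mul_sum, mul_assoc]
  · simp only [mul_sum, abs_mul]

theorem nucNorm_add_le (X Y : (∀ k, Fin (n k)) → ℝ) :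
    nucNorm (X + Y) ≤ nucNorm X + nucNorm Y := by
  rw [nucNorm_eq_sInf_nucSet, nucNorm_eq_sInf_nucSet, nucNorm_eq_sInf_nucSet,
    ← csInf_add ⟨_, sum_abs_mem_nucSet X⟩ (bddBelow_nucSet X) ⟨_, sum_abs_mem_nucSet Y⟩
      (bddBelow_nucSet Y)]
  refine csInf_le_csInf (bddBelow_nucSet _)
    (Set.add_nonempty.mpr ⟨⟨_, sum_abs_mem_nucSet X⟩, ⟨_, sum_abs_mem_nucSet Y⟩⟩) ?_
  rintro _ ⟨s, hs, t, ht, rfl⟩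
  exact add_mem_nucSet hs ht

theorem nucNorm_smul_le (c : ℝ) (X : (∀ k, Fin (n k)) → ℝ) :
    nucNorm (c • X) ≤ |c| * nucNorm X := by
  rw [nucNorm_eq_sInf_nucSet, nucNorm_eq_sInf_nucSet, ← smul_eq_mul,
    ← Real.sInf_smul_of_nonneg (abs_nonneg c)]
  refine le_csInf (Set.Nonempty.smul_set ⟨_, sum_abs_mem_nucSet X⟩) ?_
  rintro _ ⟨s, hs, rfl⟩
  exact nucNorm_le_of_mem (smul_mem_nucSet c hs)

theorem convexOn_nucNorm :
    ConvexOn ℝ Set.univ (nucNorm : ((∀ k, Fin (n k)) → ℝ) → ℝ) := by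
  refine ⟨convex_univ, fun X _ Y _ a b ha hb _ => ?_⟩
  calc nucNorm (a • X + b • Y) ≤ nucNorm (a • X) + nucNorm (b • Y) := nucNorm_add_le _ _
    _ ≤ |a| * nucNorm X + |b| * nucNorm Y := add_le_add (nucNorm_smul_le a X) (nucNorm_smul_le b Y)
    _ = a • nucNorm X + b • nucNorm Y := by rw [abs_of_nonneg ha, abs_of_nonneg hb]; rfl

theorem continuous_nucNorm : Continuous (nucNorm : ((∀ k, Fin (n k)) → ℝ) → ℝ) :=
  convexOn_nucNorm.locallyLipschitz.continuous

end Nuclear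

section Duality

theorem dotProduct_le_specNorm_mul_of_mem_nucSet (T : (∀ k, Fin (n k)) → ℝ)
    {X : (∀ k, Fin (n k)) → ℝ} {s : ℝ} (hs : s ∈ nucSet X) :
    T ⬝ᵥ X ≤ specNorm T * s := by
  obtain ⟨r, lam, x, hx, hX, rfl⟩ := hs
  calc T ⬝ᵥ X = ∑ i, lam i * (T ⬝ᵥ outerProd (x i)) := by
        simp only [dotProduct, hX, mul_sum]
        rw [sum_comm]
        exact sum_congr rfl fun i _ => sum_congr rfl fun j _ => by ring
    _ ≤ ∑ i, |lam i| * specNorm T := sum_le_sum fun i _ =>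
        (le_abs_self _).trans <| (abs_mul _ _).trans_le <|
          mul_le_mul_of_nonneg_left (abs_dotProduct_outerProd_le_specNorm T (hx i))
            (abs_nonneg _)
    _ = specNorm T * ∑ i, |lam i| := by rw [← sum_mul, mul_comm]

theorem dotProduct_le_specNorm_mul_nucNorm (T X : (∀ k, Fin (n k)) → ℝ) :
    T ⬝ᵥ X ≤ specNorm T * nucNorm X := by
  rw [nucNorm_eq_sInf_nucSet, ← smul_eq_mul, ← Real.sInf_smul_of_nonneg (specNorm_nonneg T)]
  refine le_csInf (Set.Nonempty.smul_set ⟨_, sum_abs_mem_nucSet X⟩) ?_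
  rintro _ ⟨s, hs, rfl⟩
  exact dotProduct_le_specNorm_mul_of_mem_nucSet T hs

theorem exists_specNorm_le_one_lt_dotProduct {T : (∀ k, Fin (n k)) → ℝ} {s : ℝ} (hs : 0 < s)
    (hsT : s < nucNorm T) : ∃ X : (∀ k, Fin (n k)) → ℝ, specNorm X ≤ 1 ∧ s < T ⬝ᵥ X := by
  obtain ⟨f, u, hf_lt, hu_lt⟩ := geometric_hahn_banach_closed_point
    (by simpa using convexOn_nucNorm.convex_le s) (isClosed_le continuous_nucNorm continuous_const)
    (x := T) (not_le.mpr hsT)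
  let F := (dotProductEquiv ℝ _).symm f.toLinearMap
  have hF : ∀ Y, f Y = F ⬝ᵥ Y := fun Y =>
    (congrArg (· Y) ((dotProductEquiv ℝ _).apply_symm_apply f.toLinearMap)).symm
  have hu : 0 < u := by simpa using hf_lt 0 (by simpa [nucNorm_zero] using hs.le)
  have hF_le : ∀ x : ∀ k, EuclideanSpace ℝ (Fin (n k)), (∀ k, ‖x k‖ = 1) →
      s * |F ⬝ᵥ outerProd x| ≤ u := by
    intro x hx
    have h_lt : ∀ c : ℝ, |c| = s → c * (F ⬝ᵥ outerProd x) < u := fun c hc => by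
      rw [← smul_eq_mul, ← dotProduct_smul, ← hF]
      exact hf_lt _ ((nucNorm_smul_outerProd_le c hx).trans hc.le)
    rcases abs_choice (F ⬝ᵥ outerProd x) with h | h <;> rw [h]
    · exact (h_lt s (abs_of_pos hs)).le
    · simpa using (h_lt (-s) (by simp [abs_of_pos hs])).le
  refine ⟨(s / u) • F, specNorm_le zero_le_one fun x hx => ?_, ?_⟩
  · rw [smul_dotProduct, smul_eq_mul, abs_mul, abs_of_pos (div_pos hs hu), div_mul_eq_mul_div,
      div_le_one hu]
    exact hF_le x hx
  · rw [dotProduct_smul, dotProduct_comm, ← hF, smul_eq_mul]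
    calc s = s / u * u := (div_mul_cancel₀ s hu.ne').symm
      _ < s / u * f T := mul_lt_mul_of_pos_left hu_lt (div_pos hs hu)

theorem specNorm_eq_sSup_dotProduct (T : (∀ k, Fin (n k)) → ℝ) :
    specNorm T = sSup {r | ∃ X : (∀ k, Fin (n k)) → ℝ, nucNorm X ≤ 1 ∧ r = T ⬝ᵥ X} := by
  set R := {r | ∃ X : (∀ k, Fin (n k)) → ℝ, nucNorm X ≤ 1 ∧ r = T ⬝ᵥ X}
  have h_ub : ∀ r ∈ R, r ≤ specNorm T := by
    rintro _ ⟨X, hX, rfl⟩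
    exact (dotProduct_le_specNorm_mul_nucNorm T X).trans
      (mul_le_of_le_one_right (specNorm_nonneg T) hX)
  have h_zero : (0 : ℝ) ∈ R := ⟨0, nucNorm_zero.le.trans zero_le_one, (dotProduct_zero T).symm⟩
  refine le_antisymm (specNorm_le (le_csSup ⟨_, h_ub⟩ h_zero) fun x hx => ?_)
    (csSup_le ⟨0, h_zero⟩ h_ub)
  obtain ⟨c, hc, h_abs⟩ : ∃ c : ℝ, |c| = 1 ∧ |T ⬝ᵥ outerProd x| = c * (T ⬝ᵥ outerProd x) := by
    rcases abs_choice (T ⬝ᵥ outerProd x) with h | h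
    · exact ⟨1, abs_one, by rw [h, one_mul]⟩
    · exact ⟨-1, by simp, by rw [h, neg_one_mul]⟩
  exact le_csSup ⟨_, h_ub⟩ ⟨c • outerProd x, (nucNorm_smul_outerProd_le c hx).trans hc.le,
    by rw [h_abs, dotProduct_smul, smul_eq_mul]⟩

theorem nucNorm_eq_sSup_dotProduct (T : (∀ k, Fin (n k)) → ℝ) :
    nucNorm T = sSup {r | ∃ X : (∀ k, Fin (n k)) → ℝ, specNorm X ≤ 1 ∧ r = T ⬝ᵥ X} := by
  set R := {r | ∃ X : (∀ k, Fin (n k)) → ℝ, specNorm X ≤ 1 ∧ r = T ⬝ᵥ X}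
  have h_zero : (0 : ℝ) ∈ R :=
    ⟨0, specNorm_le zero_le_one fun x _ => by simp, (dotProduct_zero T).symm⟩
  refine (csSup_eq_of_forall_le_of_forall_lt_exists_gt ⟨0, h_zero⟩ ?_ fun w hw => ?_).symm
  · rintro _ ⟨X, hX, rfl⟩
    rw [dotProduct_comm]
    exact (dotProduct_le_specNorm_mul_nucNorm X T).trans
      (mul_le_of_le_one_left (nucNorm_nonneg T) hX)
  · rcases lt_or_ge w 0 with hw₀ | hw₀
    · exact ⟨0, h_zero, hw₀⟩
    · obtain ⟨s, hws, hsT⟩ := exists_between hw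
      obtain ⟨X, hX, hsX⟩ := exists_specNorm_le_one_lt_dotProduct (hw₀.trans_lt hws) hsT
      exact ⟨_, ⟨X, hX, rfl⟩, hws.trans hsX⟩

end Duality

theorem stmt_5_general {d : ℕ} (n : Fin d → ℕ)
    (T : (∀ k, Fin (n k)) → ℝ) :
    specNorm T = sSup { r : ℝ | ∃ X : (∀ k, Fin (n k)) → ℝ,
        nucNorm X ≤ 1 ∧ r = ∑ i, T i * X i } ∧
    nucNorm T = sSup { r : ℝ | ∃ X : (∀ k, Fin (n k)) → ℝ,
        specNorm X ≤ 1 ∧ r = ∑ i, T i * X i } :=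
  ⟨specNorm_eq_sSup_dotProduct T, nucNorm_eq_sSup_dotProduct T⟩

theorem stmt_5 {d : ℕ} (n : Fin d → ℕ) (hn : ∀ k, 0 < n k)
    (T : (∀ k, Fin (n k)) → ℝ) :
    specNorm T = sSup { r : ℝ | ∃ X : (∀ k, Fin (n k)) → ℝ,
        nucNorm X ≤ 1 ∧ r = ∑ i, T i * X i } ∧
    nucNorm T = sSup { r : ℝ | ∃ X : (∀ k, Fin (n k)) → ℝ,
        specNorm X ≤ 1 ∧ r = ∑ i, T i * X i } :=
  stmt_5_general n T
end
end

section
/- (Banach) For every symmetric real tensor T of order d with all dimensions equal to n, ‖T‖_σ = sup_{x ∈ ℝ^n, ‖x‖ = 1} |⟨T, x⊗x⊗⋯⊗x⟩|; that is, the supremum of |⟨T, x¹⊗⋯⊗x^d⟩| over all tuples of unit vectors equals the supremum restricted to tuples with x¹ = x² = ⋯ = x^d. -/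
noncomputable section

open Finset
open RealInnerProductSpace

namespace BanachAux

variable {d n : ℕ}

abbrev E (n : ℕ) := EuclideanSpace ℝ (Fin n)

def f (T : (Fin d → Fin n) → ℝ) (x : Fin d → E n) : ℝ :=
  ∑ i, T i * ∏ k, x k (i k)

def P (x : Fin d → E n) (a : Fin d) (i : Fin d → Fin n) : ℝ :=
  ∏ k ∈ univ.erase a, x k (i k)

def Q (x : Fin d → E n) (a b : Fin d) (i : Fin d → Fin n) : ℝ :=
  ∏ k ∈ (univ.erase b).erase a, x k (i k)

def B (T : (Fin d → Fin n) → ℝ) (x : Fin d → E n) (a b : Fin d) (u v : E n) : ℝ :=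
  ∑ i, T i * (u (i a) * (v (i b) * Q x a b i))

def W (T : (Fin d → Fin n) → ℝ) (x : Fin d → E n) (a b : Fin d) (v : E n) : E n :=
  WithLp.toLp 2 (fun j => ∑ i, if i a = j then T i * (v (i b) * Q x a b i) else 0)

lemma f_update (T : (Fin d → Fin n) → ℝ) (x : Fin d → E n) (a : Fin d) (v : E n) :
    f T (Function.update x a v) = ∑ i, T i * (v (i a) * P x a i) := by
  unfold f P
  refine Finset.sum_congr rfl fun i _ => ?_
  congr 1
  have h : (fun k => (Function.update x a v) k (i k)) =
      Function.update (fun k => x k (i k)) a (v (i a)) := by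
    funext k
    by_cases hk : k = a
    · subst hk; simp
    · simp [Function.update_of_ne hk]
  calc ∏ k, (Function.update x a v) k (i k)
      = ∏ k, Function.update (fun k => x k (i k)) a (v (i a)) k := by rw [h]
    _ = v (i a) * ∏ k ∈ univ.erase a, x k (i k) := by
        rw [Finset.prod_update_of_mem (mem_univ a), Finset.erase_eq]

lemma fB (T : (Fin d → Fin n) → ℝ) (x : Fin d → E n) {a b : Fin d} (hab : a ≠ b)
    (u v : E n) :
    f T (Function.update (Function.update x a u) b v) = B T x a b u v := by
  unfold f B Q
  refine Finset.sum_congr rfl fun i _ => ?_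
  congr 1
  have h : (fun k => (Function.update (Function.update x a u) b v) k (i k)) =
      Function.update (Function.update (fun k => x k (i k)) a (u (i a))) b (v (i b)) := by
    funext k
    by_cases hkb : k = b
    · subst hkb; simp
    · by_cases hka : k = a
      · subst hka; simp [Function.update_of_ne hkb, Function.update_of_ne hab]
      · simp [Function.update_of_ne hkb, Function.update_of_ne hka]
  calc ∏ k, (Function.update (Function.update x a u) b v) k (i k)
      = ∏ k, Function.update (Function.update (fun k => x k (i k)) a (u (i a))) b (v (i b)) k := by
        rw [h]
    _ = v (i b) * ∏ k ∈ univ.erase b, Function.update (fun k => x k (i k)) a (u (i a)) k := by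
        rw [Finset.prod_update_of_mem (mem_univ b), Finset.erase_eq]
    _ = v (i b) * (u (i a) * ∏ k ∈ (univ.erase b).erase a, x k (i k)) := by
        rw [Finset.prod_update_of_mem (Finset.mem_erase.2 ⟨hab, mem_univ a⟩), ← Finset.erase_eq]
    _ = u (i a) * (v (i b) * ∏ k ∈ (univ.erase b).erase a, x k (i k)) := by ring

lemma B_symm (T : (Fin d → Fin n) → ℝ)
    (hsym : ∀ (π : Equiv.Perm (Fin d)) (i : Fin d → Fin n), T (i ∘ π) = T i)
    (x : Fin d → E n) (a b : Fin d) (u v : E n) :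
    B T x a b u v = B T x a b v u := by
  unfold B
  refine Fintype.sum_equiv (Equiv.arrowCongr (Equiv.swap a b) (Equiv.refl (Fin n))) _ _
    fun i => ?_
  have hi : (Equiv.arrowCongr (Equiv.swap a b) (Equiv.refl (Fin n))) i = i ∘ Equiv.swap a b := by
    funext k; simp [Equiv.arrowCongr]
  rw [hi, hsym (Equiv.swap a b) i]
  congr 1
  have h1 : (i ∘ Equiv.swap a b) a = i b := by simp
  have h2 : (i ∘ Equiv.swap a b) b = i a := by simp
  rw [h1, h2]
  have hQ : Q x a b (i ∘ Equiv.swap a b) = Q x a b i := by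
    unfold Q
    refine Finset.prod_congr rfl fun k hk => ?_
    simp only [Finset.mem_erase] at hk
    have : Equiv.swap a b k = k := Equiv.swap_apply_of_ne_of_ne hk.1 hk.2.1
    show x k (i (Equiv.swap a b k)) = x k (i k); rw [this]
  rw [hQ]; ring

lemma B_eq_inner (T : (Fin d → Fin n) → ℝ) (x : Fin d → E n) (a b : Fin d) (u v : E n) :
    B T x a b u v = ⟪u, W T x a b v⟫ := by
  unfold B W
  rw [PiLp.inner_apply]
  simp only [RCLike.inner_apply, conj_trivial]
  simp only [mul_comm _ (u.ofLp _), Finset.mul_sum]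
  rw [Finset.sum_comm]
  refine Finset.sum_congr rfl fun i _ => ?_
  simp only [mul_ite, mul_zero]
  rw [Finset.sum_ite_eq (univ : Finset (Fin n)) (i a) (fun j => u j * (T i * (v (i b) * Q x a b i)))]
  simp only [mem_univ, if_true]
  ring

lemma B_smul_left (T : (Fin d → Fin n) → ℝ) (x : Fin d → E n) (a b : Fin d) (c : ℝ)
    (u v : E n) : B T x a b (c • u) v = c * B T x a b u v := by
  unfold B
  rw [Finset.mul_sum]
  refine Finset.sum_congr rfl fun i _ => ?_
  have : (c • u) (i a) = c * u (i a) := rfl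
  rw [this]; ring

lemma B_smul_right (T : (Fin d → Fin n) → ℝ) (x : Fin d → E n) (a b : Fin d) (c : ℝ)
    (u v : E n) : B T x a b u (c • v) = c * B T x a b u v := by
  unfold B
  rw [Finset.mul_sum]
  refine Finset.sum_congr rfl fun i _ => ?_
  have : (c • v) (i b) = c * v (i b) := rfl
  rw [this]; ring

lemma B_add_left (T : (Fin d → Fin n) → ℝ) (x : Fin d → E n) (a b : Fin d)
    (u u' v : E n) : B T x a b (u + u') v = B T x a b u v + B T x a b u' v := by
  unfold B
  rw [← Finset.sum_add_distrib]
  refine Finset.sum_congr rfl fun i _ => ?_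
  have : (u + u') (i a) = u (i a) + u' (i a) := rfl
  rw [this]; ring

lemma B_add_right (T : (Fin d → Fin n) → ℝ) (x : Fin d → E n) (a b : Fin d)
    (u v v' : E n) : B T x a b u (v + v') = B T x a b u v + B T x a b u v' := by
  unfold B
  rw [← Finset.sum_add_distrib]
  refine Finset.sum_congr rfl fun i _ => ?_
  have : (v + v') (i b) = v (i b) + v' (i b) := rfl
  rw [this]; ring

lemma riesz_eq {u w : E n} {M : ℝ} (hu : ‖u‖ = 1) (hw : ‖w‖ ≤ M) (h : ⟪u, w⟫ = M) :
    w = M • u := by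
  have h1 : ⟪u, w⟫ ≤ ‖u‖ * ‖w‖ := real_inner_le_norm u w
  rw [hu, one_mul] at h1
  have hwM : ‖w‖ = M := le_antisymm hw (by linarith)
  have hz : ‖w - M • u‖ ^ 2 = 0 := by
    rw [norm_sub_sq_real, real_inner_smul_right, real_inner_comm, h, norm_smul, hu,
      mul_one, Real.norm_eq_abs, sq_abs, hwM]
    ring
  have : ‖w - M • u‖ = 0 := by
    have := sq_eq_zero_iff.mp hz; exact this
  rw [norm_eq_zero, sub_eq_zero] at this
  exact this

lemma norm_le_of_inner_le {w : E n} {M : ℝ} (hM0 : 0 ≤ M)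
    (hb : ∀ u : E n, ‖u‖ = 1 → |⟪u, w⟫| ≤ M) : ‖w‖ ≤ M := by
  rcases eq_or_ne w 0 with h | h
  · simp [h, hM0]
  · have hw : 0 < ‖w‖ := norm_pos_iff.mpr h
    have hu : ‖(‖w‖⁻¹ • w : E n)‖ = 1 := by
      rw [norm_smul, norm_inv, norm_norm]
      field_simp
    have := hb _ hu
    rw [real_inner_smul_left, real_inner_self_eq_norm_sq] at this
    have heq : ‖w‖⁻¹ * ‖w‖ ^ 2 = ‖w‖ := by field_simp
    rw [heq, abs_norm] at this
    exact this

lemma f_continuous (T : (Fin d → Fin n) → ℝ) : Continuous (f T) := by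
  unfold f
  refine continuous_finset_sum _ fun i _ => Continuous.mul continuous_const ?_
  refine continuous_finset_prod _ fun k _ => ?_
  exact (EuclideanSpace.proj (i k) : E n →L[ℝ] ℝ).continuous.comp (continuous_apply k)

lemma f_smul_diag (T : (Fin d → Fin n) → ℝ) (ε : Fin d → ℝ) (v : E n) :
    f T (fun k => ε k • v) = (∏ k, ε k) * f T (fun _ => v) := by
  unfold f
  rw [Finset.mul_sum]
  refine Finset.sum_congr rfl fun i _ => ?_
  have h : ∀ k, (ε k • v) (i k) = ε k * v (i k) := fun k => rfl
  simp_rw [h]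
  rw [Finset.prod_mul_distrib]
  ring


lemma aux_ineq (A q s t : ℝ) (hs0 : 0 < s) (htq : 0 ≤ t * q) (ht : t ≠ 0) :
    A < A + 2 * (t * q) + t ^ 2 * s ^ 2 := by
  have h1 : 0 < t ^ 2 * s ^ 2 := by positivity
  linarith

lemma exists_unit_diag (hn : 0 < n) (T : (Fin d → Fin n) → ℝ)
    (hsym : ∀ (π : Equiv.Perm (Fin d)) (i : Fin d → Fin n), T (i ∘ π) = T i) :
    ∃ x₀ : Fin d → E n, (∀ k, ‖x₀ k‖ = 1) ∧
      (∀ x : Fin d → E n, (∀ k, ‖x k‖ = 1) → |f T x| ≤ |f T x₀|) ∧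
      ∃ u : E n, ‖u‖ = 1 ∧ |f T (fun _ => u)| = |f T x₀| := by
  classical
  set u₁ : E n := EuclideanSpace.single ⟨0, hn⟩ (1 : ℝ) with hu₁def
  have hu₁ : ‖u₁‖ = 1 := by
    rw [hu₁def, EuclideanSpace.norm_single]; norm_num
  set D : Set (Fin d → E n) := {x | ∀ k, ‖x k‖ = 1} with hD
  have hDc : IsCompact D := by
    have hDeq : D = Set.pi Set.univ (fun _ : Fin d => Metric.sphere (0 : E n) 1) := by
      ext x
      simp [hD, Set.mem_pi, mem_sphere_zero_iff_norm]
    rw [hDeq]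
    exact isCompact_univ_pi fun _ => isCompact_sphere 0 1
  have hDne : D.Nonempty := ⟨fun _ => u₁, fun k => hu₁⟩
  obtain ⟨x₀, hx₀D, hx₀⟩ := hDc.exists_isMaxOn hDne (f_continuous T).abs.continuousOn
  have hub : ∀ x : Fin d → E n, (∀ k, ‖x k‖ = 1) → |f T x| ≤ |f T x₀| := fun x hx =>
    hx₀ (by exact hx)
  refine ⟨x₀, hx₀D, hub, ?_⟩
  set M : ℝ := |f T x₀| with hMdef
  have hM0 : 0 ≤ M := abs_nonneg _
  by_cases hd : d = 0
  · subst hd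
    refine ⟨u₁, hu₁, ?_⟩
    have hconst : f T (fun _ : Fin 0 => u₁) = f T x₀ := by
      unfold f
      refine Finset.sum_congr rfl fun i _ => ?_
      simp
    rw [hMdef, hconst]
  · have hd' : 0 < d := Nat.pos_of_ne_zero hd
    set a₀ : Fin d := ⟨0, hd'⟩
    -- K, the set of maximizers with f = M, is nonempty and compact
    set K : Set (Fin d → E n) := D ∩ {x | f T x = M} with hK
    have hKne : K.Nonempty := by
      rcases abs_cases (f T x₀) with ⟨h1, _⟩ | ⟨h1, _⟩
      · exact ⟨x₀, hx₀D, by rw [hMdef]; exact h1.symm⟩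
      · refine ⟨Function.update x₀ a₀ (-(x₀ a₀)), ?_, ?_⟩
        · intro k
          by_cases hk : k = a₀
          · subst hk; rw [Function.update_self, norm_neg]; exact hx₀D a₀
          · rw [Function.update_of_ne hk]; exact hx₀D k
        · show f T (Function.update x₀ a₀ (-(x₀ a₀))) = M
          have e2 : f T x₀ = ∑ i, T i * ((x₀ a₀) (i a₀) * P x₀ a₀ i) := by
            conv_lhs => rw [← Function.update_eq_self a₀ x₀]
            rw [f_update]
          have e1 : f T (Function.update x₀ a₀ (-(x₀ a₀))) = - f T x₀ := by
            rw [f_update, e2, ← Finset.sum_neg_distrib]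
            refine Finset.sum_congr rfl fun i _ => ?_
            have : (-(x₀ a₀)) (i a₀) = -((x₀ a₀) (i a₀)) := rfl
            rw [this]; ring
          rw [e1, ← h1]
    have hKc : IsCompact K := hDc.inter_right (isClosed_eq (f_continuous T) continuous_const)
    set Φ : (Fin d → E n) → ℝ := fun x => ‖∑ k, x k‖ ^ 2 with hΦ
    have hΦc : Continuous Φ :=
      ((continuous_finset_sum _ fun k _ => continuous_apply k).norm).pow 2
    obtain ⟨y, hyK, hyΦ⟩ := hKc.exists_isMaxOn hKne hΦc.continuousOn
    have hyD : ∀ k, ‖y k‖ = 1 := hyK.1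
    have hfy : f T y = M := hyK.2
    -- key claim: all components of y are equal up to sign
    have key : ∀ a b : Fin d, y a = y b ∨ y a = -(y b) := by
      intro a b
      by_contra hcon
      push_neg at hcon
      obtain ⟨hne, hne'⟩ := hcon
      have hab : a ≠ b := fun h => hne (by rw [h])
      set c : ℝ := ⟪y a, y b⟫ with hc
      have ha1 : ‖y a‖ = 1 := hyD a
      have hb1 : ‖y b‖ = 1 := hyD b
      have hBbound : ∀ u v : E n, ‖u‖ = 1 → ‖v‖ = 1 → |B T y a b u v| ≤ M := by
        intro u v hu hv
        rw [← fB T y hab u v]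
        refine hub _ fun k => ?_
        by_cases hkb : k = b
        · subst hkb; rw [Function.update_self]; exact hv
        · rw [Function.update_of_ne hkb]
          by_cases hka : k = a
          · subst hka; rw [Function.update_self]; exact hu
          · rw [Function.update_of_ne hka]; exact hyD k
      have hBab : B T y a b (y a) (y b) = M := by
        have h1 : Function.update (Function.update y a (y a)) b (y b) = y := by
          rw [Function.update_eq_self, Function.update_eq_self]
        rw [← fB T y hab, h1, hfy]
      have hWb : ∀ v : E n, ‖v‖ = 1 → ‖W T y a b v‖ ≤ M := fun v hv =>
        norm_le_of_inner_le hM0 (fun u hu => by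
          rw [← B_eq_inner]; exact hBbound u v hu hv)
      have hW1 : W T y a b (y b) = M • (y a) :=
        riesz_eq ha1 (hWb _ hb1) (by rw [← B_eq_inner]; exact hBab)
      have hW2 : W T y a b (y a) = M • (y b) :=
        riesz_eq hb1 (hWb _ ha1) (by rw [← B_eq_inner, B_symm T hsym]; exact hBab)
      set p : E n := y a + y b with hp
      have hps : ‖p‖ ^ 2 = 2 + 2 * c := by
        rw [hp, norm_add_sq_real, ha1, hb1, ← hc]; ring
      have hpne : p ≠ 0 := fun h => hne' (eq_neg_of_add_eq_zero_left h)
      have hs0 : 0 < ‖p‖ := norm_pos_iff.mpr hpne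
      have hcle : c ≤ 1 := by
        have h1 := real_inner_le_norm (y a) (y b)
        rw [ha1, hb1] at h1; simpa using h1
      have hc1 : c < 1 := by
        refine lt_of_le_of_ne hcle fun hceq => hne ?_
        have hz2 : ‖y a - y b‖ ^ 2 = 0 := by
          rw [norm_sub_sq_real, ha1, hb1, ← hc, hceq]; ring
        have := sq_eq_zero_iff.mp hz2
        rw [norm_eq_zero, sub_eq_zero] at this
        exact this
      have hs2 : ‖p‖ < 2 := by nlinarith [hs0, hps, hc1]
      set s : ℝ := ‖p‖ with hs
      set z : E n := s⁻¹ • p with hz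
      have hsne : s ≠ 0 := ne_of_gt hs0
      have hz1 : ‖z‖ = 1 := by
        rw [hz, norm_smul, norm_inv, norm_norm, ← hs]
        field_simp
      have hBaa : B T y a b (y a) (y a) = M * c := by
        rw [B_eq_inner, hW2, real_inner_smul_right, ← hc]
      have hBbb : B T y a b (y b) (y b) = M * c := by
        rw [B_eq_inner, hW1, real_inner_smul_right, real_inner_comm, ← hc]
      have hBba : B T y a b (y b) (y a) = M := by rw [B_symm T hsym]; exact hBab
      have hBpp : B T y a b p p = M * s ^ 2 := by
        rw [hp, B_add_left, B_add_right, B_add_right, hBaa, hBab, hBba, hBbb, hps]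
        ring
      have hBzz : B T y a b z z = M := by
        rw [hz, B_smul_left, B_smul_right, hBpp]
        field_simp
      -- pick the sign
      set SS : E n := ∑ k, y k with hSS
      set ip : ℝ := ⟪SS, p⟫ with hip
      set σ : ℝ := if 0 ≤ ip then 1 else -1 with hσ
      have hσ1 : σ = 1 ∨ σ = -1 := by
        rw [hσ]; split <;> simp
      have hσsq : σ * σ = 1 := by rcases hσ1 with h | h <;> rw [h] <;> norm_num
      set zz : E n := σ • z with hzz
      have hzz1 : ‖zz‖ = 1 := by
        rw [hzz, norm_smul, hz1, mul_one, Real.norm_eq_abs]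
        rcases hσ1 with h | h <;> rw [h] <;> norm_num
      set y' : Fin d → E n := Function.update (Function.update y a zz) b zz with hy'
      have hy'K : y' ∈ K := by
        constructor
        · intro k
          by_cases hkb : k = b
          · subst hkb; rw [hy', Function.update_self]; exact hzz1
          · rw [hy', Function.update_of_ne hkb]
            by_cases hka : k = a
            · subst hka; rw [Function.update_self]; exact hzz1
            · rw [Function.update_of_ne hka]; exact hyD k
        · show f T y' = M
          rw [hy', fB T y hab, hzz, B_smul_left, B_smul_right, hBzz, ← mul_assoc, hσsq,
            one_mul]
      -- sum of components of y'
      have hsum : ∑ k, y' k = SS + (2 * σ * s⁻¹ - 1) • p := by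
        have h1 : ∑ k, y' k = zz + (zz + ∑ k ∈ (univ.erase b).erase a, y k) := by
          rw [hy', Finset.sum_update_of_mem (mem_univ b)]
          congr 1
          rw [← Finset.erase_eq,
            Finset.sum_update_of_mem (Finset.mem_erase.2 ⟨hab, mem_univ a⟩), ← Finset.erase_eq]
        have h2 : SS = y b + (y a + ∑ k ∈ (univ.erase b).erase a, y k) := by
          rw [hSS, ← Finset.add_sum_erase _ _ (mem_univ b),
            ← Finset.add_sum_erase _ _ (Finset.mem_erase.2 ⟨hab, mem_univ a⟩)]
        have hzzp : zz = (σ * s⁻¹) • p := by rw [hzz, hz, smul_smul]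
        rw [h1, h2, hzzp, hp]
        have hcoef : (2 * σ * s⁻¹ - 1) • (y a + y b)
            = (σ * s⁻¹) • (y a + y b) + (σ * s⁻¹) • (y a + y b) - (y a + y b) := by
          rw [← add_smul, sub_smul, one_smul]
          congr 1
          ring
        rw [hcoef]
        abel
      have hΦy' : Φ y' = ‖SS‖ ^ 2 + 2 * ((2 * σ * s⁻¹ - 1) * ip)
          + (2 * σ * s⁻¹ - 1) ^ 2 * s ^ 2 := by
        rw [hΦ]
        show ‖∑ k, y' k‖ ^ 2 = _
        rw [hsum, norm_add_sq_real, real_inner_smul_right, ← hip, norm_smul,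
          Real.norm_eq_abs, mul_pow, sq_abs, ← hs]
      have hle : Φ y' ≤ Φ y := hyΦ hy'K
      have hΦyv : Φ y = ‖SS‖ ^ 2 := by simp only [hΦ, hSS]
      have hgt : Φ y < Φ y' := by
        rw [hΦyv, hΦy']
        have h2s : 1 < 2 * s⁻¹ := by
          rw [← div_eq_mul_inv]
          exact (lt_div_iff₀ hs0).mpr (by linarith)
        by_cases hip0 : 0 ≤ ip
        · have hσv : σ = 1 := by rw [hσ, if_pos hip0]
          rw [hσv]
          have ht : 0 < 2 * 1 * s⁻¹ - 1 := by
            have h3 : (2 : ℝ) * 1 * s⁻¹ = 2 * s⁻¹ := by ring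
            rw [h3]; linarith
          exact aux_ineq _ _ _ _ hs0 (mul_nonneg ht.le hip0) (ne_of_gt ht)
        · have hσv : σ = -1 := by rw [hσ, if_neg hip0]
          push_neg at hip0
          rw [hσv]
          have ht : 2 * (-1) * s⁻¹ - 1 < 0 := by
            have h3 : 0 < s⁻¹ := inv_pos.mpr hs0
            have h4 : (2 : ℝ) * (-1) * s⁻¹ = -(2 * s⁻¹) := by ring
            rw [h4]; linarith
          exact aux_ineq _ _ _ _ hs0 (le_of_lt (mul_pos_of_neg_of_neg ht hip0)) (ne_of_lt ht)
      linarith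
    -- conclude: all components are ± v
    set v : E n := y a₀ with hv
    have hv1 : ‖v‖ = 1 := hyD a₀
    set ε : Fin d → ℝ := fun k => if y k = v then 1 else -1 with hε
    have hεy : ∀ k, y k = ε k • v := by
      intro k
      by_cases hk : y k = v
      · rw [hε]; simp [hk]
      · rcases key k a₀ with h | h
        · exact absurd h hk
        · rw [hε]; simp only [if_neg hk]; rw [h, hv]; module
    have hyeq : y = fun k => ε k • v := funext hεy
    have hMeq : M = (∏ k, ε k) * f T (fun _ => v) := by
      rw [← hfy, hyeq, f_smul_diag]
    have hεabs : |∏ k, ε k| = 1 := by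
      rw [Finset.abs_prod]
      refine Finset.prod_eq_one fun k _ => ?_
      rw [hε]
      by_cases hk : y k = v <;> simp [hk]
    refine ⟨v, hv1, ?_⟩
    calc |f T (fun _ => v)| = |∏ k, ε k| * |f T (fun _ => v)| := by rw [hεabs, one_mul]
      _ = |(∏ k, ε k) * f T (fun _ => v)| := (abs_mul _ _).symm
      _ = |M| := by rw [← hMeq]
      _ = M := abs_of_nonneg hM0
end BanachAux

theorem stmt_6 {d n : ℕ} (hn : 0 < n)
    (T : (Fin d → Fin n) → ℝ)
    (hsym : ∀ (π : Equiv.Perm (Fin d)) (i : Fin d → Fin n), T (i ∘ π) = T i) :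
    specNorm (n := fun _ : Fin d => n) T =
      sSup { r : ℝ | ∃ x : EuclideanSpace ℝ (Fin n),
        ‖x‖ = 1 ∧ r = |∑ i, T i * ∏ k, x (i k)| } := by
  obtain ⟨x₀, hx₀D, hub, u, hu1, hud⟩ := BanachAux.exists_unit_diag hn T hsym
  have hG1 : IsGreatest { r : ℝ |
      ∃ x : ∀ k : Fin d, EuclideanSpace ℝ (Fin ((fun _ : Fin d => n) k)),
      (∀ k, ‖x k‖ = 1) ∧ r = |∑ i, T i * ∏ k, x k (i k)| } (|BanachAux.f T x₀|) := by
    constructor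
    · exact ⟨x₀, hx₀D, rfl⟩
    · rintro r ⟨x, hxD, rfl⟩
      exact hub x hxD
  have hG2 : IsGreatest { r : ℝ | ∃ x : EuclideanSpace ℝ (Fin n),
      ‖x‖ = 1 ∧ r = |∑ i, T i * ∏ k, x (i k)| } (|BanachAux.f T x₀|) := by
    constructor
    · exact ⟨u, hu1, hud.symm⟩
    · rintro r ⟨x, hx1, rfl⟩
      exact hub (fun _ => x) (fun _ => hx1)
  rw [specNorm, hG1.csSup_eq, hG2.csSup_eq]
end
end

section
/- For every positive integer m, every k ∈ {1, …, d}, and all positive integers n_1, …, n_d, one has φ(n_1, …, n_d) ≤ √m · φ(n_1, …, n_{k−1}, m·n_k, n_{k+1}, …, n_d), and likewise φ_+(n_1, …, n_d) ≤ √m · φ_+(n_1, …, n_{k−1}, m·n_k, n_{k+1}, …, n_d). -/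
noncomputable section

/-- `φ(n_1,…,n_d)`: infimum of `‖T‖_σ/‖T‖` over nonzero real tensors. -/
def phi {d : ℕ} (n : Fin d → ℕ) : ℝ :=
  sInf { r : ℝ | ∃ T : (∀ k, Fin (n k)) → ℝ, T ≠ 0 ∧ r = specNorm T / frobNorm T }

/-- `φ_+(n_1,…,n_d)`: infimum of `‖T‖_σ/‖T‖` over nonzero nonnegative tensors. -/
def phiPos {d : ℕ} (n : Fin d → ℕ) : ℝ :=
  sInf { r : ℝ | ∃ T : (∀ k, Fin (n k)) → ℝ,
    T ≠ 0 ∧ (∀ i, 0 ≤ T i) ∧ r = specNorm T / frobNorm T }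



@[simp] lemma modNat_cast_cast {p q r : ℕ} (h1 : p * q = r) (h2 : r = p * q)
    (a : Fin p) (b : Fin q) :
    Fin.modNat (Fin.cast h2 (Fin.cast h1 (finProdFinEquiv (a, b)))) = b := by
  apply Fin.ext
  simp [Fin.modNat, finProdFinEquiv_apply_val, Nat.add_mul_mod_self_left,
    Nat.mod_eq_of_lt b.isLt]

@[simp] lemma divNat_cast_cast {p q r : ℕ} (h1 : p * q = r) (h2 : r = p * q)
    (a : Fin p) (b : Fin q) :
    Fin.divNat (Fin.cast h2 (Fin.cast h1 (finProdFinEquiv (a, b)))) = a := by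
  apply Fin.ext
  simp [Fin.divNat, finProdFinEquiv_apply_val, Nat.add_mul_div_left _ _ b.pos,
    Nat.div_eq_of_lt b.isLt]

@[simp] lemma modNat_finProd {p q : ℕ} (a : Fin p) (b : Fin q) :
    Fin.modNat (finProdFinEquiv (a, b)) = b := by
  apply Fin.ext
  simp [Fin.modNat, finProdFinEquiv_apply_val, Nat.add_mul_mod_self_left,
    Nat.mod_eq_of_lt b.isLt]

@[simp] lemma divNat_finProd {p q : ℕ} (a : Fin p) (b : Fin q) :
    Fin.divNat (finProdFinEquiv (a, b)) = a := by
  apply Fin.ext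
  simp [Fin.divNat, finProdFinEquiv_apply_val, Nat.add_mul_div_left _ _ b.pos,
    Nat.div_eq_of_lt b.isLt]

@[simp] lemma cast_cast' {a b : ℕ} (h1 : a = b) (h2 : b = a) (v : Fin a) :
    Fin.cast h2 (Fin.cast h1 v) = v := Fin.ext rfl

variable {d : ℕ} (n : Fin d → ℕ) (k : Fin d) (m : ℕ)

def pk (p : Fin m × ∀ l, Fin (n l)) (l : Fin d) : Fin (Function.update n k (m * n k) l) :=
  if h : l = k then
    Fin.cast (by subst h; simp) (finProdFinEquiv (p.1, p.2 k))
  else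
    Fin.cast (by simp [Function.update_of_ne h]) (p.2 l)

def yvec (x : ∀ l, EuclideanSpace ℝ (Fin (n l))) (j : Fin m) (l : Fin d) :
    EuclideanSpace ℝ (Fin (Function.update n k (m * n k) l)) :=
  WithLp.toLp 2 fun a => if h : l = k then
      (if (finProdFinEquiv.symm (Fin.cast (by rw [h]; simp) a : Fin (m * n k))).1 = j
        then x k (finProdFinEquiv.symm (Fin.cast (by rw [h]; simp) a : Fin (m * n k))).2 else 0)
    else x l (Fin.cast (by simp [Function.update_of_ne h]) a)

lemma yvec_pk (x : ∀ l, EuclideanSpace ℝ (Fin (n l))) (j j' : Fin m)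
    (i : ∀ l, Fin (n l)) (l : Fin d) :
    yvec n k m x j l (pk n k m (j', i) l)
      = (if l = k then (if j' = j then (1:ℝ) else 0) else 1) * x l (i l) := by
  by_cases h : l = k
  · subst h
    have hpk : pk n l m (j', i) l
        = Fin.cast (Function.update_self l (m * n l) n).symm (finProdFinEquiv (j', i l)) := by
      simp [pk]
    rw [hpk]
    simp only [yvec, dif_pos, finProdFinEquiv_symm_apply, cast_cast', if_pos rfl, if_true]
    rw [divNat_finProd]
    by_cases h1 : j' = j
    · rw [if_pos h1, if_pos h1, one_mul]
      refine congrArg (fun t => x l t) ?_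
      apply Fin.ext
      simp [Fin.coe_modNat, finProdFinEquiv_apply_val, Nat.add_mul_mod_self_left,
        Nat.mod_eq_of_lt (i l).isLt]
    · rw [if_neg h1, if_neg h1, zero_mul]
  · have hpk : pk n k m (j', i) l
        = Fin.cast (Function.update_of_ne h (m * n k) n).symm (i l) := by
      simp [pk, h]
    rw [hpk]
    simp [yvec, h]

lemma euc_norm_one_iff {p : ℕ} (v : EuclideanSpace ℝ (Fin p)) :
    ‖v‖ = 1 ↔ ∑ a, (v a)^2 = 1 := by
  rw [EuclideanSpace.norm_eq]
  simp [Real.norm_eq_abs, sq_abs, Real.sqrt_eq_one]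

lemma yvec_norm (x : ∀ l, EuclideanSpace ℝ (Fin (n l))) (hx : ∀ l, ‖x l‖ = 1)
    (j : Fin m) (l : Fin d) : ‖yvec n k m x j l‖ = 1 := by
  rw [euc_norm_one_iff]
  by_cases h : l = k
  · subst h
    have hNk : Function.update n l (m * n l) l = m * n l := Function.update_self _ _ _
    calc ∑ a, (yvec n l m x j l a)^2
        = ∑ p : Fin m × Fin (n l),
            (yvec n l m x j l (Fin.cast hNk.symm (finProdFinEquiv p)))^2 := by
          refine (Fintype.sum_equiv (finProdFinEquiv.trans (finCongr hNk.symm)) _ _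
            (fun p => ?_)).symm
          rfl
      _ = ∑ p : Fin m × Fin (n l), (if p.1 = j then x l p.2 else 0)^2 := by
          refine Finset.sum_congr rfl (fun p _ => ?_)
          obtain ⟨j', b⟩ := p
          simp only [yvec, dif_pos, finProdFinEquiv_symm_apply, cast_cast']
          rw [divNat_finProd]
          by_cases h1 : j' = j
          · rw [if_pos h1, if_pos h1]
            refine congrArg (fun t => x l t ^ 2) ?_
            apply Fin.ext
            simp [Fin.coe_modNat, finProdFinEquiv_apply_val, Nat.add_mul_mod_self_left,
              Nat.mod_eq_of_lt b.isLt]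
          · rw [if_neg h1, if_neg h1]
      _ = ∑ j' : Fin m, ∑ b, (if j' = j then x l b else 0)^2 := Fintype.sum_prod_type _
      _ = ∑ b, (x l b)^2 := by
          rw [Finset.sum_comm]
          refine Finset.sum_congr rfl (fun b _ => ?_)
          rw [Finset.sum_eq_single j] <;> simp +contextual
      _ = 1 := (euc_norm_one_iff _).mp (hx l)
  · have hNl : Function.update n k (m * n k) l = n l := Function.update_of_ne h _ _
    calc ∑ a, (yvec n k m x j l a)^2
        = ∑ b : Fin (n l), (yvec n k m x j l (Fin.cast hNl.symm b))^2 := by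
          exact (Fintype.sum_equiv (finCongr hNl.symm) _ _ (fun p => rfl)).symm
      _ = ∑ b, (x l b)^2 := by
          refine Finset.sum_congr rfl (fun b _ => ?_)
          simp only [yvec, dif_neg h]
          exact congrArg (fun t => x l t ^ 2) (Fin.ext rfl)
      _ = 1 := (euc_norm_one_iff _).mp (hx l)

def upk (I : ∀ l, Fin (Function.update n k (m * n k) l)) : Fin m × ∀ l, Fin (n l) :=
  ((finProdFinEquiv.symm (Fin.cast (Function.update_self k (m * n k) n) (I k))).1,
   fun l => if h : l = k then
       Fin.cast (congrArg n h.symm)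
         (finProdFinEquiv.symm (Fin.cast (Function.update_self k (m * n k) n) (I k))).2
     else Fin.cast (Function.update_of_ne h (m * n k) n) (I l))

def pkEquiv : (Fin m × ∀ l, Fin (n l)) ≃ (∀ l, Fin (Function.update n k (m * n k) l)) where
  toFun := pk n k m
  invFun := upk n k m
  left_inv := by
    rintro ⟨j, i⟩
    refine Prod.ext ?_ ?_
    · simp [upk, pk]
    · funext l
      by_cases h : l = k
      · subst h; simp [upk, pk]
      · simp [upk, pk, h]
  right_inv := by
    intro I
    funext l
    by_cases h : l = k
    · subst h
      simp only [upk, pk, dif_pos]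
      apply Fin.ext
      simp
      exact Nat.mod_add_div _ _
    · simp [upk, pk, h]

lemma sum_pk (f : (∀ l, Fin (Function.update n k (m * n k) l)) → ℝ) :
    ∑ I, f I = ∑ j : Fin m, ∑ i, f (pk n k m (j, i)) := by
  calc ∑ I, f I = ∑ p : Fin m × (∀ l, Fin (n l)), f (pk n k m p) :=
        (Fintype.sum_equiv (pkEquiv n k m) _ _ (fun p => rfl)).symm
    _ = ∑ j : Fin m, ∑ i, f (pk n k m (j, i)) := Fintype.sum_prod_type _

lemma yvec_inner (S : (∀ l, Fin (Function.update n k (m * n k) l)) → ℝ)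
    (x : ∀ l, EuclideanSpace ℝ (Fin (n l))) (j : Fin m) :
    ∑ I, S I * ∏ l, yvec n k m x j l (I l)
      = ∑ i, S (pk n k m (j, i)) * ∏ l, x l (i l) := by
  rw [sum_pk]
  have key : ∀ (j' : Fin m) (i : ∀ l, Fin (n l)),
      ∏ l, yvec n k m x j l (pk n k m (j', i) l)
        = (if j' = j then (1:ℝ) else 0) * ∏ l, x l (i l) := by
    intro j' i
    calc ∏ l, yvec n k m x j l (pk n k m (j', i) l)
        = ∏ l, ((if l = k then (if j' = j then (1:ℝ) else 0) else 1) * x l (i l)) :=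
          Finset.prod_congr rfl (fun l _ => yvec_pk n k m x j j' i l)
      _ = (∏ l, (if l = k then (if j' = j then (1:ℝ) else 0) else 1)) * ∏ l, x l (i l) :=
          Finset.prod_mul_distrib
      _ = (if j' = j then (1:ℝ) else 0) * ∏ l, x l (i l) := by
          congr 1
          simp [Finset.prod_ite_eq']
  simp only [key]
  rw [Finset.sum_eq_single j]
  · simp
  · intro j' _ hj'
    simp [hj']
  · intro h
    exact absurd (Finset.mem_univ j) h

lemma euc_coord_le {p : ℕ} (v : EuclideanSpace ℝ (Fin p)) (a : Fin p) : |v a| ≤ ‖v‖ := by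
  rw [EuclideanSpace.norm_eq]
  calc |v a| = Real.sqrt (‖v a‖^2) := by rw [Real.norm_eq_abs, Real.sqrt_sq_eq_abs, abs_abs]
  _ ≤ _ := Real.sqrt_le_sqrt (Finset.single_le_sum (f := fun b => ‖v b‖^2)
      (fun _ _ => sq_nonneg _) (Finset.mem_univ a))

section specset
variable {d' : ℕ} {n' : Fin d' → ℕ}

lemma abs_inner_le (T : (∀ l, Fin (n' l)) → ℝ) (x : ∀ l, EuclideanSpace ℝ (Fin (n' l)))
    (hx : ∀ l, ‖x l‖ = 1) :
    |∑ i, T i * ∏ l, x l (i l)| ≤ ∑ i, |T i| := by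
  calc |∑ i, T i * ∏ l, x l (i l)| ≤ ∑ i, |T i * ∏ l, x l (i l)| :=
        Finset.abs_sum_le_sum_abs _ _
    _ ≤ ∑ i, |T i| := by
        refine Finset.sum_le_sum (fun i _ => ?_)
        rw [abs_mul]
        have h1 : |∏ l, x l (i l)| ≤ 1 := by
          rw [Finset.abs_prod]
          refine Finset.prod_le_one (fun l _ => abs_nonneg _) (fun l _ => ?_)
          exact (euc_coord_le (x l) (i l)).trans_eq (hx l)
        calc |T i| * |∏ l, x l (i l)| ≤ |T i| * 1 :=
              mul_le_mul_of_nonneg_left h1 (abs_nonneg _)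
          _ = |T i| := mul_one _

lemma spec_bddAbove (T : (∀ l, Fin (n' l)) → ℝ) :
    BddAbove { r : ℝ | ∃ x : ∀ l, EuclideanSpace ℝ (Fin (n' l)),
      (∀ l, ‖x l‖ = 1) ∧ r = |∑ i, T i * ∏ l, x l (i l)| } := by
  refine ⟨∑ i, |T i|, ?_⟩
  rintro r ⟨x, hx, rfl⟩
  exact abs_inner_le T x hx

lemma spec_nonempty (hn : ∀ l, 0 < n' l) (T : (∀ l, Fin (n' l)) → ℝ) :
    Set.Nonempty { r : ℝ | ∃ x : ∀ l, EuclideanSpace ℝ (Fin (n' l)),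
      (∀ l, ‖x l‖ = 1) ∧ r = |∑ i, T i * ∏ l, x l (i l)| } := by
  refine ⟨_, fun l => EuclideanSpace.single ⟨0, hn l⟩ (1:ℝ), fun l => ?_, rfl⟩
  simp

lemma specNorm_nonneg' (hn : ∀ l, 0 < n' l) (T : (∀ l, Fin (n' l)) → ℝ) :
    0 ≤ specNorm T := by
  obtain ⟨r, hr⟩ := spec_nonempty hn T
  have h0 : 0 ≤ r := by obtain ⟨x, hx, rfl⟩ := hr; exact abs_nonneg _
  exact h0.trans (le_csSup (spec_bddAbove T) hr)

lemma frobNorm_nonneg' (T : (∀ l, Fin (n' l)) → ℝ) : 0 ≤ frobNorm T :=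
  Real.sqrt_nonneg _

lemma frobNorm_pos' (T : (∀ l, Fin (n' l)) → ℝ) (hT : T ≠ 0) : 0 < frobNorm T := by
  rw [frobNorm, Real.sqrt_pos]
  obtain ⟨i, hi⟩ := Function.ne_iff.mp hT
  exact Finset.sum_pos' (fun _ _ => sq_nonneg _) ⟨i, Finset.mem_univ i, by rw [← sq_abs]; exact pow_pos (abs_pos.mpr hi) 2⟩

end specset

lemma spec_slice (hn : ∀ l, 0 < n l)
    (S : (∀ l, Fin (Function.update n k (m * n k) l)) → ℝ) (j : Fin m) :
    specNorm (fun i => S (pk n k m (j, i))) ≤ specNorm S := by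
  refine csSup_le_csSup (spec_bddAbove S) (spec_nonempty hn _) ?_
  rintro r ⟨x, hx, rfl⟩
  exact ⟨yvec n k m x j, yvec_norm n k m x hx j,
    by rw [yvec_inner n k m S x j]⟩

lemma slice_main (hn : ∀ l, 0 < n l) (hm : 0 < m)
    (S : (∀ l, Fin (Function.update n k (m * n k) l)) → ℝ) (hS : S ≠ 0) :
    ∃ T : (∀ l, Fin (n l)) → ℝ, T ≠ 0 ∧
      ((∀ I, 0 ≤ S I) → ∀ i, 0 ≤ T i) ∧
      specNorm T / frobNorm T ≤ Real.sqrt m * (specNorm S / frobNorm S) := by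
  set g : Fin m → ℝ := fun j => ∑ i, (S (pk n k m (j, i)))^2 with hg
  have hmne : (Finset.univ : Finset (Fin m)).Nonempty := ⟨⟨0, hm⟩, Finset.mem_univ _⟩
  obtain ⟨j, -, hj⟩ := Finset.exists_max_image Finset.univ g hmne
  set T : (∀ l, Fin (n l)) → ℝ := fun i => S (pk n k m (j, i)) with hT
  have hsum : ∑ I, (S I)^2 = ∑ j' : Fin m, g j' := sum_pk n k m _
  have hsumpos : 0 < ∑ I, (S I)^2 := by
    obtain ⟨I, hI⟩ := Function.ne_iff.mp hS
    exact Finset.sum_pos' (fun _ _ => sq_nonneg _)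
      ⟨I, Finset.mem_univ I, by rw [← sq_abs]; exact pow_pos (abs_pos.mpr hI) 2⟩
  have hle : ∑ I, (S I)^2 ≤ m * g j := by
    rw [hsum]
    calc ∑ j' : Fin m, g j' ≤ ∑ _j' : Fin m, g j :=
          Finset.sum_le_sum (fun j' _ => hj j' (Finset.mem_univ j'))
      _ = m * g j := by simp [mul_comm]
  have hgpos : 0 < g j := by
    rcases lt_or_ge 0 (g j) with h | h
    · exact h
    · exfalso; nlinarith
  have hT0 : T ≠ 0 := by
    intro h
    rw [hg] at hgpos
    have : g j = 0 := by
      rw [hg]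
      refine Finset.sum_eq_zero (fun i _ => ?_)
      have := congrFun h i
      simp only [hT] at this
      rw [this]
      norm_num
    exact absurd this (ne_of_gt hgpos)
  refine ⟨T, hT0, fun hpos i => hpos _, ?_⟩
  have hfT : frobNorm T = Real.sqrt (g j) := rfl
  have hfS : frobNorm S ≤ Real.sqrt m * frobNorm T := by
    rw [hfT, frobNorm, ← Real.sqrt_mul (Nat.cast_nonneg m)]
    exact Real.sqrt_le_sqrt hle
  have hfTpos : 0 < frobNorm T := frobNorm_pos' T hT0
  have hfSpos : 0 < frobNorm S := frobNorm_pos' S hS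
  have hsm : 0 < Real.sqrt m := Real.sqrt_pos.mpr (by exact_mod_cast hm)
  have hspec : specNorm T ≤ specNorm S := spec_slice n k m hn S j
  have hspecS : 0 ≤ specNorm S := by
    refine specNorm_nonneg' (fun l => ?_) S
    by_cases h : l = k
    · subst h; rw [Function.update_self]; exact Nat.mul_pos hm (hn l)
    · rw [Function.update_of_ne h]; exact hn l
  have hq : frobNorm S / Real.sqrt m ≤ frobNorm T := by
    rw [div_le_iff₀ hsm]
    exact hfS.trans (le_of_eq (mul_comm _ _))
  calc specNorm T / frobNorm T ≤ specNorm S / frobNorm T :=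
        (div_le_div_iff_of_pos_right hfTpos).mpr hspec
    _ ≤ specNorm S / (frobNorm S / Real.sqrt m) :=
        div_le_div_of_nonneg_left hspecS (div_pos hfSpos hsm) hq
    _ = Real.sqrt m * (specNorm S / frobNorm S) := by
        rw [div_div_eq_mul_div]
        ring

theorem stmt_8 {d : ℕ} (n : Fin d → ℕ) (hn : ∀ k, 0 < n k)
    (m : ℕ) (hm : 0 < m) (k : Fin d) :
    phi n ≤ Real.sqrt m * phi (Function.update n k (m * n k)) ∧
    phiPos n ≤ Real.sqrt m * phiPos (Function.update n k (m * n k)) := by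
  have hN : ∀ l, 0 < Function.update n k (m * n k) l := by
    intro l
    by_cases h : l = k
    · subst h; rw [Function.update_self]; exact Nat.mul_pos hm (hn l)
    · rw [Function.update_of_ne h]; exact hn l
  have hsm : 0 < Real.sqrt m := Real.sqrt_pos.mpr (by exact_mod_cast hm)
  have hone : (fun _ : ∀ l, Fin (Function.update n k (m * n k) l) => (1:ℝ)) ≠ 0 := by
    intro h
    have := congrFun h (fun l => ⟨0, hN l⟩)
    norm_num at this
  constructor
  · have hbdd : BddBelow {r : ℝ | ∃ T : (∀ l, Fin (n l)) → ℝ,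
        T ≠ 0 ∧ r = specNorm T / frobNorm T} := by
      refine ⟨0, ?_⟩
      rintro r ⟨T, hT, rfl⟩
      exact div_nonneg (specNorm_nonneg' hn T) (frobNorm_nonneg' T)
    rw [← div_le_iff₀' hsm]
    apply le_csInf
    · exact ⟨_, _, hone, rfl⟩
    · rintro r ⟨S, hS, rfl⟩
      rw [div_le_iff₀' hsm]
      obtain ⟨T, hT0, -, hle⟩ := slice_main n k m hn hm S hS
      exact le_trans (csInf_le hbdd ⟨T, hT0, rfl⟩) hle
  · have hbdd : BddBelow {r : ℝ | ∃ T : (∀ l, Fin (n l)) → ℝ,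
        T ≠ 0 ∧ (∀ i, 0 ≤ T i) ∧ r = specNorm T / frobNorm T} := by
      refine ⟨0, ?_⟩
      rintro r ⟨T, hT, -, rfl⟩
      exact div_nonneg (specNorm_nonneg' hn T) (frobNorm_nonneg' T)
    rw [← div_le_iff₀' hsm]
    apply le_csInf
    · exact ⟨_, _, hone, fun _ => zero_le_one, rfl⟩
    · rintro r ⟨S, hS, hSpos, rfl⟩
      rw [div_le_iff₀' hsm]
      obtain ⟨T, hT0, hTpos, hle⟩ := slice_main n k m hn hm S hS
      exact le_trans (csInf_le hbdd ⟨T, hT0, hTpos hSpos, rfl⟩) hle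
end
end

section
/- Let T be a nonnegative tensor of order d with dimensions n_1, …, n_d ≥ 2 satisfying ‖T‖_σ = 1 and ‖T‖ = (∏_{k=1}^d n_k)^{1/4}. Then: (i) every entry of T equals 0 or 1, and the total number of entries equal to 1 is √(∏_{k=1}^d n_k); (ii) for every mode k ∈ {1, …, d} and every index value i ∈ Fin n_k, the number of entries of T equal to 1 whose k-th index is i equals √(∏_{k=1}^d n_k)/n_k. -/
noncomputable section

set_option maxHeartbeats 1600000 in
theorem stmt_9 {d : ℕ} (n : Fin d → ℕ) (hn : ∀ k, 2 ≤ n k)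
    (T : (∀ k, Fin (n k)) → ℝ) (hTnn : ∀ i, 0 ≤ T i)
    (hσ : specNorm T = 1) (hF : frobNorm T = (∏ k, (n k : ℝ)) ^ ((1 : ℝ)/4)) :
    (∀ i, T i = 0 ∨ T i = 1) ∧
    ((Nat.card {i : ∀ k, Fin (n k) // T i = 1} : ℝ) = Real.sqrt (∏ k, (n k : ℝ))) ∧
    (∀ (k : Fin d) (a : Fin (n k)),
      (Nat.card {i : ∀ k, Fin (n k) // i k = a ∧ T i = 1} : ℝ) =
        Real.sqrt (∏ j, (n j : ℝ)) / (n k : ℝ)) := by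
  classical
  set N : ℝ := ∏ k, (n k : ℝ) with hNdef
  have hnpos : ∀ k, (0:ℝ) < (n k : ℝ) := fun k => by
    have := hn k; positivity
  have hN0 : 0 < N := Finset.prod_pos fun k _ => hnpos k
  have hS0 : 0 < Real.sqrt N := Real.sqrt_pos.2 hN0
  -- sum of squares equals √N
  have hsum_sq : ∑ i, (T i)^2 = Real.sqrt N := by
    have h2 : ∑ i, (T i)^2 = (N ^ ((1:ℝ)/4))^2 := by
      rw [← hF, frobNorm, Real.sq_sqrt (Finset.sum_nonneg fun i _ => sq_nonneg _)]
    rw [h2, ← Real.rpow_natCast (N ^ ((1:ℝ)/4)) 2, ← Real.rpow_mul hN0.le,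
      Real.sqrt_eq_rpow]
    norm_num
  -- products of squared coordinates of unit tuples sum to 1
  have hprod_sq : ∀ (x : ∀ k, EuclideanSpace ℝ (Fin (n k))), (∀ k, ‖x k‖ = 1) →
      ∑ i : (∀ k, Fin (n k)), (∏ k, x k (i k))^2 = 1 := by
    intro x hx
    have hx2 : ∀ k, ∑ j, (x k j)^2 = 1 := by
      intro k
      have h := hx k
      rw [EuclideanSpace.norm_eq] at h
      have hnn : 0 ≤ ∑ j, ‖x k j‖^2 := Finset.sum_nonneg fun j _ => sq_nonneg _
      have h2 : ∑ j, ‖x k j‖^2 = 1 := by rw [← Real.sq_sqrt hnn, h]; norm_num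
      simpa [Real.norm_eq_abs, sq_abs] using h2
    calc ∑ i : (∀ k, Fin (n k)), (∏ k, x k (i k))^2
        = ∑ i : (∀ k, Fin (n k)), ∏ k, (x k (i k))^2 :=
          Finset.sum_congr rfl fun i _ => (Finset.prod_pow _ _ _).symm
      _ = ∏ k, ∑ j, (x k j)^2 := (Fintype.prod_sum (fun k j => (x k j)^2)).symm
      _ = 1 := by simp [hx2]
  -- the defining set of the spectral norm is bounded above
  have hbdd : BddAbove { r : ℝ | ∃ x : ∀ k, EuclideanSpace ℝ (Fin (n k)),
      (∀ k, ‖x k‖ = 1) ∧ r = |∑ i, T i * ∏ k, x k (i k)| } := by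
    refine ⟨Real.sqrt (∑ i, (T i)^2), ?_⟩
    rintro r ⟨x, hx, rfl⟩
    have hcs := Finset.sum_mul_sq_le_sq_mul_sq Finset.univ T (fun i => ∏ k, x k (i k))
    rw [hprod_sq x hx, mul_one] at hcs
    calc |∑ i, T i * ∏ k, x k (i k)| = Real.sqrt ((∑ i, T i * ∏ k, x k (i k))^2) :=
          (Real.sqrt_sq_eq_abs _).symm
      _ ≤ Real.sqrt (∑ i, (T i)^2) := Real.sqrt_le_sqrt hcs
  have hle : ∀ x : ∀ k, EuclideanSpace ℝ (Fin (n k)), (∀ k, ‖x k‖ = 1) →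
      |∑ i, T i * ∏ k, x k (i k)| ≤ 1 := by
    intro x hx
    rw [← hσ]
    exact le_csSup hbdd ⟨x, hx, rfl⟩
  -- every entry is at most 1
  have hT1 : ∀ i, T i ≤ 1 := by
    intro i₀
    have hx : ∀ k, ‖(EuclideanSpace.single (i₀ k) (1:ℝ))‖ = 1 := by
      intro k; rw [EuclideanSpace.norm_single]; norm_num
    have h := hle (fun k => EuclideanSpace.single (i₀ k) (1:ℝ)) hx
    have hsum : ∑ i, T i * ∏ k, (EuclideanSpace.single (i₀ k) (1:ℝ)) (i k) = T i₀ := by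
      rw [Finset.sum_eq_single i₀]
      · simp [EuclideanSpace.single_apply]
      · intro i _ hne
        have : ∃ k, i k ≠ i₀ k := by
          by_contra h'
          push_neg at h'
          exact hne (funext h')
        obtain ⟨k, hk⟩ := this
        have hz : (EuclideanSpace.single (i₀ k) (1:ℝ)) (i k) = 0 := by
          simp [EuclideanSpace.single_apply, hk]
        rw [Finset.prod_eq_zero (Finset.mem_univ k) hz, mul_zero]
      · simp
    rw [hsum, abs_of_nonneg (hTnn i₀)] at h
    exact h
  -- uniform vectors
  have hsqn : ∀ k, (0:ℝ) < Real.sqrt (n k) := fun k => Real.sqrt_pos.2 (hnpos k)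
  set u : ∀ k, EuclideanSpace ℝ (Fin (n k)) :=
    fun k => WithLp.toLp 2 (fun _ => (Real.sqrt (n k))⁻¹) with hudef
  have hu : ∀ k, ‖u k‖ = 1 := by
    intro k
    rw [EuclideanSpace.norm_eq]
    have h : ∑ j : Fin (n k), ‖(u k) j‖^2 = 1 := by
      simp only [hudef, PiLp.toLp_apply, Real.norm_eq_abs, sq_abs]
      rw [Finset.sum_const, Finset.card_univ, Fintype.card_fin, nsmul_eq_mul]
      rw [inv_pow, Real.sq_sqrt (hnpos k).le]
      exact mul_inv_cancel₀ (hnpos k).ne'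
    rw [h, Real.sqrt_one]
  have hprodsqrt : ∏ k, Real.sqrt (n k) = Real.sqrt N := by
    have h2 : (∏ k, Real.sqrt (n k))^2 = N := by
      rw [← Finset.prod_pow]
      exact Finset.prod_congr rfl fun k _ => Real.sq_sqrt (hnpos k).le
    rw [← h2, Real.sqrt_sq (Finset.prod_pos fun k _ => hsqn k).le]
  have hprodu : ∀ i : (∀ k, Fin (n k)), ∏ k, (u k) (i k) = (Real.sqrt N)⁻¹ := by
    intro i
    simp only [hudef, PiLp.toLp_apply]
    rw [Finset.prod_inv_distrib, hprodsqrt]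
  -- sum of entries ≤ √N
  have hTsum_le : ∑ i, T i ≤ Real.sqrt N := by
    have h := hle u hu
    have hsum : ∑ i, T i * ∏ k, (u k) (i k) = (∑ i, T i) * (Real.sqrt N)⁻¹ := by
      rw [Finset.sum_mul]
      exact Finset.sum_congr rfl fun i _ => by rw [hprodu i]
    rw [hsum, abs_of_nonneg (mul_nonneg (Finset.sum_nonneg fun i _ => hTnn i)
      (by positivity))] at h
    calc ∑ i, T i = ((∑ i, T i) * (Real.sqrt N)⁻¹) * Real.sqrt N := by
          field_simp
      _ ≤ 1 * Real.sqrt N := mul_le_mul_of_nonneg_right h hS0.le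
      _ = Real.sqrt N := one_mul _
  -- pointwise T i ^ 2 ≤ T i, with total equality, hence T i ∈ {0,1}
  have hsq_le : ∀ i, (T i)^2 ≤ T i := fun i => by nlinarith [hTnn i, hT1 i]
  have hTsum : ∑ i, T i = Real.sqrt N :=
    le_antisymm hTsum_le (by rw [← hsum_sq]; exact Finset.sum_le_sum fun i _ => hsq_le i)
  have hzero : ∀ i ∈ Finset.univ, T i - (T i)^2 = 0 := by
    rw [← Finset.sum_eq_zero_iff_of_nonneg (fun i _ => by linarith [hsq_le i])]
    rw [Finset.sum_sub_distrib, hTsum, hsum_sq, sub_self]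
  have h01 : ∀ i, T i = 0 ∨ T i = 1 := by
    intro i
    have h := hzero i (Finset.mem_univ i)
    have hmul : T i * (1 - T i) = 0 := by nlinarith [h]
    rcases mul_eq_zero.1 hmul with h' | h'
    · exact Or.inl h'
    · exact Or.inr (by linarith)
  refine ⟨h01, ?_, ?_⟩
  · -- count of ones
    have hcard : (Nat.card {i : ∀ k, Fin (n k) // T i = 1} : ℝ)
        = ∑ i ∈ Finset.univ.filter (fun i => T i = 1), (1:ℝ) := by
      rw [Nat.card_eq_fintype_card, Fintype.card_subtype, Finset.sum_const, nsmul_eq_mul,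
        mul_one]
    rw [hcard, ← hTsum, ← Finset.sum_filter_add_sum_filter_not Finset.univ (fun i => T i = 1) T]
    have h1 : ∑ i ∈ Finset.univ.filter (fun i => T i = 1), T i
        = ∑ i ∈ Finset.univ.filter (fun i => T i = 1), (1:ℝ) :=
      Finset.sum_congr rfl fun i hi => (Finset.mem_filter.1 hi).2
    have h2 : ∑ i ∈ Finset.univ.filter (fun i => ¬ T i = 1), T i = 0 :=
      Finset.sum_eq_zero fun i hi => (h01 i).resolve_right (Finset.mem_filter.1 hi).2
    rw [h1, h2, add_zero]
  · -- fiberwise counts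
    intro k a
    set c : Fin (n k) → ℝ := fun b => ∑ i ∈ Finset.univ.filter (fun i => i k = b), T i
      with hcdef
    have hcnn : ∀ b, 0 ≤ c b := fun b => Finset.sum_nonneg fun i _ => hTnn i
    have hcsum : ∑ b, c b = Real.sqrt N := by
      rw [hcdef, Finset.sum_fiberwise]
      exact hTsum
    have hcsq_pos : 0 < ∑ b, (c b)^2 := by
      have hpos : ∃ b, 0 < c b := by
        by_contra h'
        push_neg at h'
        have h2 : ∑ b, c b ≤ 0 := Finset.sum_nonpos fun b _ => h' b
        rw [hcsum] at h2; linarith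
      obtain ⟨b, hb⟩ := hpos
      calc (0:ℝ) < (c b)^2 := by positivity
        _ ≤ ∑ b, (c b)^2 :=
          Finset.single_le_sum (f := fun b => (c b)^2) (fun b _ => sq_nonneg _)
            (Finset.mem_univ b)
    set R : ℝ := Real.sqrt (∑ b, (c b)^2) with hRdef
    have hR0 : 0 < R := Real.sqrt_pos.2 hcsq_pos
    have hR2 : R^2 = ∑ b, (c b)^2 := Real.sq_sqrt hcsq_pos.le
    set v : EuclideanSpace ℝ (Fin (n k)) := WithLp.toLp 2 (fun b => c b / R) with hvdef
    set x : ∀ j, EuclideanSpace ℝ (Fin (n j)) := Function.update u k v with hxdef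
    have hxk : x k = v := Function.update_self k v u
    have hxj : ∀ j, j ≠ k → x j = u j := fun j hj => Function.update_of_ne hj v u
    have hx : ∀ j, ‖x j‖ = 1 := by
      intro j
      by_cases hj : j = k
      · subst hj
        rw [hxk, EuclideanSpace.norm_eq]
        have h : ∑ b, ‖v b‖^2 = 1 := by
          simp only [hvdef, PiLp.toLp_apply, Real.norm_eq_abs, sq_abs, div_pow]
          rw [← Finset.sum_div, ← hR2]
          field_simp
        rw [h, Real.sqrt_one]
      · rw [hxj j hj]; exact hu j
    set β : ℝ := ∏ j ∈ Finset.univ.erase k, (Real.sqrt (n j))⁻¹ with hβdef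
    have hβpos : 0 < β := Finset.prod_pos fun j _ => inv_pos.2 (hsqn j)
    have hβfull : (Real.sqrt (n k))⁻¹ * β = (Real.sqrt N)⁻¹ := by
      rw [hβdef, Finset.mul_prod_erase Finset.univ (fun j => (Real.sqrt (n j))⁻¹)
        (Finset.mem_univ k), Finset.prod_inv_distrib, hprodsqrt]
    have hprodx : ∀ i : (∀ j, Fin (n j)), ∏ j, x j (i j) = v (i k) * β := by
      intro i
      rw [← Finset.mul_prod_erase Finset.univ (fun j => x j (i j)) (Finset.mem_univ k), hxk]
      congr 1
      refine Finset.prod_congr rfl fun j hj => ?_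
      rw [hxj j (Finset.ne_of_mem_erase hj)]
    have hTv : ∑ i, T i * v (i k) = R := by
      have h1 : ∑ i, T i * v (i k)
          = ∑ b, ∑ i ∈ Finset.univ.filter (fun i => i k = b), T i * v (i k) :=
        (Finset.sum_fiberwise Finset.univ (fun i => i k) (fun i => T i * v (i k))).symm
      have h2 : ∀ b, ∑ i ∈ Finset.univ.filter (fun i => i k = b), T i * v (i k)
          = c b * v b := by
        intro b
        rw [hcdef, Finset.sum_mul]
        refine Finset.sum_congr rfl fun i hi => ?_
        rw [(Finset.mem_filter.1 hi).2]
      rw [h1]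
      simp only [h2]
      simp only [hvdef, PiLp.toLp_apply]
      have h3 : ∑ b, c b * (c b / R) = (∑ b, (c b)^2) / R := by
        rw [Finset.sum_div]
        exact Finset.sum_congr rfl fun b _ => by ring
      rw [h3, ← hR2, sq, mul_div_assoc, div_self hR0.ne', mul_one]
    have hkey := hle x hx
    have hsx : ∑ i, T i * ∏ j, x j (i j) = β * R := by
      calc ∑ i, T i * ∏ j, x j (i j) = ∑ i, (T i * v (i k)) * β :=
            Finset.sum_congr rfl fun i _ => by rw [hprodx i]; ring
        _ = (∑ i, T i * v (i k)) * β := (Finset.sum_mul _ _ _).symm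
        _ = β * R := by rw [hTv]; ring
    rw [hsx, abs_of_nonneg (mul_nonneg hβpos.le hR0.le)] at hkey
    -- β = √(n k) / √N
    have hβeq : β = Real.sqrt (n k) / Real.sqrt N := by
      calc β = Real.sqrt (n k) * ((Real.sqrt (n k))⁻¹ * β) := by
            rw [← mul_assoc, mul_inv_cancel₀ (hsqn k).ne', one_mul]
        _ = Real.sqrt (n k) * (Real.sqrt N)⁻¹ := by rw [hβfull]
        _ = Real.sqrt (n k) / Real.sqrt N := (div_eq_mul_inv _ _).symm
    have hcsq_le : ∑ b, (c b)^2 ≤ N / n k := by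
      have hR_le : R ≤ Real.sqrt N / Real.sqrt (n k) := by
        have h4 : R ≤ β⁻¹ := by
          rw [← one_div, le_div_iff₀ hβpos]
          linarith [hkey]
        rw [hβeq, inv_div] at h4
        exact h4
      have h5 : R^2 ≤ (Real.sqrt N / Real.sqrt (n k))^2 := by
        exact pow_le_pow_left₀ hR0.le hR_le 2
      rw [hR2, div_pow, Real.sq_sqrt hN0.le, Real.sq_sqrt (hnpos k).le] at h5
      exact h5
    -- all fibers are equal
    have hkey2 : ∑ b, (c b - Real.sqrt N / n k)^2 = (∑ b, (c b)^2) - N / n k := by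
      have hexp : ∀ b, (c b - Real.sqrt N / n k)^2
          = (c b)^2 - (2 * Real.sqrt N / n k) * c b + (Real.sqrt N / n k)^2 :=
        fun b => by ring
      simp_rw [hexp]
      rw [Finset.sum_add_distrib, Finset.sum_sub_distrib, ← Finset.mul_sum, hcsum,
        Finset.sum_const, Finset.card_univ, Fintype.card_fin, nsmul_eq_mul]
      have hNs' : Real.sqrt N * Real.sqrt N = N := Real.mul_self_sqrt hN0.le
      have hk0 : (n k : ℝ) ≠ 0 := (hnpos k).ne'
      field_simp
      linear_combination (-1 : ℝ) * hNs'
    have hterm : ∀ b, c b = Real.sqrt N / n k := by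
      have hle0 : ∑ b, (c b - Real.sqrt N / n k)^2 ≤ 0 := by
        rw [hkey2]; linarith [hcsq_le]
      have hz := (Finset.sum_eq_zero_iff_of_nonneg (fun b _ => sq_nonneg _)).1
        (le_antisymm hle0 (Finset.sum_nonneg fun b _ => sq_nonneg _))
      intro b
      have hb := hz b (Finset.mem_univ b)
      have := pow_eq_zero_iff (n := 2) (by norm_num) |>.1 hb
      linarith [sub_eq_zero.1 this]
    -- count the fiber
    have hcount : (Nat.card {i : ∀ j, Fin (n j) // i k = a ∧ T i = 1} : ℝ) = c a := by
      rw [Nat.card_eq_fintype_card, Fintype.card_subtype]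
      have hff : Finset.univ.filter (fun i : ∀ j, Fin (n j) => i k = a ∧ T i = 1)
          = (Finset.univ.filter (fun i => i k = a)).filter (fun i => T i = 1) := by
        rw [Finset.filter_filter]
      have hca : c a = ∑ i ∈ Finset.univ.filter (fun i => i k = a), T i := rfl
      rw [hca, ← Finset.sum_filter_add_sum_filter_not
        (Finset.univ.filter (fun i => i k = a)) (fun i => T i = 1) T]
      have hz2 : ∑ i ∈ (Finset.univ.filter (fun i => i k = a)).filter (fun i => ¬ T i = 1),
          T i = 0 :=
        Finset.sum_eq_zero fun i hi => (h01 i).resolve_right (Finset.mem_filter.1 hi).2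
      have ho : ∑ i ∈ (Finset.univ.filter (fun i => i k = a)).filter (fun i => T i = 1), T i
          = ((Finset.univ.filter (fun i => i k = a)).filter (fun i => T i = 1)).card := by
        rw [Finset.sum_congr rfl (fun i hi => (Finset.mem_filter.1 hi).2)]
        simp
      rw [hz2, add_zero, ho, hff]
    rw [hcount, hterm a]
end
end

section
/- Let s ≥ 1 and d ≥ 2 be integers, let q_1, …, q_s be positive integers, and let 𝕀_1, …, 𝕀_d be subsets of {1, …, s} such that every j ∈ {1, …, s} belongs to exactly two of the sets 𝕀_1, …, 𝕀_d. For each k = 1, …, d let X^k be a real-valued function on ∏_{j∈𝕀_k} Fin q_j, with Frobenius norm ‖X^k‖ equal to the square root of the sum of the squares of its values. Then ∑_{(i_1, …, i_s) ∈ Fin q_1 × ⋯ × Fin q_s} ∏_{k=1}^d X^k((i_j)_{j∈𝕀_k}) ≤ ∏_{k=1}^d ‖X^k‖. -/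
noncomputable section

/-- Frobenius norm of a real-valued function on a finite type. -/
def frobNormG {ι : Type*} [Fintype ι] (X : ι → ℝ) : ℝ :=
  Real.sqrt (∑ i, (X i) ^ 2)

/-!
Contract the network one summation index at a time. An index `e₀` is shared by exactly two
tensors `X v₁` and `X v₂`; for fixed values of all other indices, Cauchy–Schwarz in `e₀` bounds
the sum over `e₀` by the product of the ℓ²-norms of `X v₁` and `X v₂` along `e₀`. Replacing these
two tensors by their partial norms gives a network with one index less, the same Frobenius norms,
and an at least as large contraction. When no index is left, each tensor is a single number,
bounded by its Frobenius norm.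
-/

open Finset

section PiErase

variable {E : Type*} [DecidableEq E] {β : E → Type*}

def piEraseEquiv {S : Finset E} {e₀ : E} (h : e₀ ∈ S) :
    ((e : S) → β e) ≃ β e₀ × ((e : S.erase e₀) → β e) where
  toFun f := (f ⟨e₀, h⟩, restrict₂ (erase_subset e₀ S) f)
  invFun p e := if he : e.1 = e₀ then he ▸ p.1 else p.2 ⟨e, mem_erase.2 ⟨he, e.2⟩⟩
  left_inv f := by
    funext ⟨e, _⟩
    by_cases he : e = e₀
    · subst he
      simp
    · simp [he, restrict₂]
  right_inv p := by
    ext e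
    · simp
    · simp [restrict₂, ne_of_mem_erase e.2]

lemma restrict₂_piEraseEquiv_symm {S T : Finset E} {e₀ : E} (hS : e₀ ∈ S) (hT : e₀ ∈ T)
    (hST : S ⊆ T) (t : β e₀) (a : (e : T.erase e₀) → β e) :
    restrict₂ hST ((piEraseEquiv hT).symm (t, a))
      = (piEraseEquiv hS).symm (t, restrict₂ (erase_subset_erase e₀ hST) a) := by
  funext e
  simp [piEraseEquiv, restrict₂]

lemma restrict₂_piEraseEquiv_symm_of_notMem {S T : Finset E} {e₀ : E} (hS : e₀ ∉ S)
    (hT : e₀ ∈ T) (hST : S ⊆ T) (t : β e₀) (a : (e : T.erase e₀) → β e) :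
    restrict₂ hST ((piEraseEquiv hT).symm (t, a))
      = restrict₂ (subset_erase.2 ⟨hST, hS⟩) a := by
  funext ⟨e, he⟩
  have : e ≠ e₀ := ne_of_mem_of_not_mem he hS
  simp [piEraseEquiv, restrict₂, this]

end PiErase

lemma le_frobNormG {ι : Type*} [Fintype ι] (X : ι → ℝ) (i : ι) : X i ≤ frobNormG X :=
  calc X i ≤ √(X i ^ 2) := (le_abs_self _).trans_eq (Real.sqrt_sq_eq_abs _).symm
    _ ≤ frobNormG X := Real.sqrt_le_sqrt (single_le_sum (fun j _ => sq_nonneg (X j)) (mem_univ i))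

lemma frobNormG_abs {ι : Type*} [Fintype ι] (X : ι → ℝ) :
    frobNormG (fun i => |X i|) = frobNormG X := by
  simp [frobNormG]

lemma sum_prod_le_prod_of_cauchySchwarz {V T : Type*} [Fintype V] [DecidableEq V] [Fintype T]
    {g : V → T → ℝ} {h : V → ℝ} {v₁ v₂ : V} (hne : v₁ ≠ v₂)
    (h₁ : h v₁ = √(∑ t, g v₁ t ^ 2)) (h₂ : h v₂ = √(∑ t, g v₂ t ^ 2))
    (hconst : ∀ v, v ≠ v₁ → v ≠ v₂ → ∀ t, g v t = h v) (hh : ∀ v, 0 ≤ h v) :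
    ∑ t, ∏ v, g v t ≤ ∏ v, h v := by
  have hsplit (f : V → ℝ) : ∏ v, f v = f v₁ * f v₂ * ∏ v ∈ {v₁, v₂}ᶜ, f v := by
    rw [← prod_mul_prod_compl {v₁, v₂} f, prod_pair hne]
  have hrest (t : T) : ∏ v ∈ {v₁, v₂}ᶜ, g v t = ∏ v ∈ {v₁, v₂}ᶜ, h v :=
    prod_congr rfl fun v hv => by
      simp only [mem_compl, mem_insert, mem_singleton, not_or] at hv
      exact hconst v hv.1 hv.2 t
  calc ∑ t, ∏ v, g v t = (∑ t, g v₁ t * g v₂ t) * ∏ v ∈ {v₁, v₂}ᶜ, h v := by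
        simp only [hsplit (g · _), hrest, sum_mul]
    _ ≤ (√(∑ t, g v₁ t ^ 2) * √(∑ t, g v₂ t ^ 2)) * ∏ v ∈ {v₁, v₂}ᶜ, h v :=
        mul_le_mul_of_nonneg_right (Real.sum_mul_le_sqrt_mul_sqrt _ _ _)
          (prod_nonneg fun v _ => hh v)
    _ = ∏ v, h v := by rw [hsplit h, h₁, h₂]

section PartialNorm

variable {E : Type*} [DecidableEq E] {β : E → Type*} [∀ e, Fintype (β e)]

/-- Along an index `e₀ ∉ S` this is `X` itself (re-indexed), not `√(card (β e₀)) • |X|`. -/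
def partialNorm (e₀ : E) {S : Finset E} (X : ((e : S) → β e) → ℝ) :
    ((e : S.erase e₀) → β e) → ℝ :=
  if h : e₀ ∈ S then fun a => √(∑ t, X ((piEraseEquiv h).symm (t, a)) ^ 2)
  else fun a => X (restrict₂ (subset_erase.2 ⟨subset_rfl, h⟩) a)

variable {e₀ : E} {S : Finset E} (X : ((e : S) → β e) → ℝ)

lemma partialNorm_of_mem (h : e₀ ∈ S) (a : (e : S.erase e₀) → β e) :
    partialNorm e₀ X a = √(∑ t, X ((piEraseEquiv h).symm (t, a)) ^ 2) := by
  simp [partialNorm, h]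

lemma partialNorm_of_notMem (h : e₀ ∉ S) (a : (e : S.erase e₀) → β e) :
    partialNorm e₀ X a = X (restrict₂ (subset_erase.2 ⟨subset_rfl, h⟩) a) := by
  simp [partialNorm, h]

lemma partialNorm_nonneg {X : ((e : S) → β e) → ℝ} (hX : ∀ a, 0 ≤ X a)
    (a : (e : S.erase e₀) → β e) : 0 ≤ partialNorm e₀ X a := by
  by_cases h : e₀ ∈ S
  · rw [partialNorm_of_mem X h]
    exact Real.sqrt_nonneg _
  · rw [partialNorm_of_notMem X h]
    exact hX _

lemma frobNormG_partialNorm : frobNormG (partialNorm e₀ X) = frobNormG X := by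
  unfold frobNormG
  congr 1
  by_cases h : e₀ ∈ S
  · calc ∑ a, partialNorm e₀ X a ^ 2
        = ∑ a, ∑ t, X ((piEraseEquiv h).symm (t, a)) ^ 2 := by
          simp only [partialNorm_of_mem X h, Real.sq_sqrt (sum_nonneg fun _ _ => sq_nonneg _)]
      _ = ∑ b, X b ^ 2 := by
          rw [← Fintype.sum_prod_type_right', (piEraseEquiv h).symm.sum_comp (fun b => X b ^ 2)]
  · let σ : ((e : S.erase e₀) → β e) ≃ ((e : S) → β e) :=
      { toFun := restrict₂ (subset_erase.2 ⟨subset_rfl, h⟩)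
        invFun := restrict₂ (erase_subset e₀ S)
        left_inv := fun _ => rfl
        right_inv := fun _ => rfl }
    simp only [partialNorm_of_notMem X h]
    exact σ.sum_comp (fun b => X b ^ 2)

end PartialNorm

section Contraction

variable {E V : Type*} [DecidableEq E] [Fintype V] {β : E → Type*} [∀ e, Fintype (β e)]

lemma sum_prod_le_sum_prod_partialNorm {T : Finset E} {I : V → Finset E} (hIT : ∀ v, I v ⊆ T)
    {e₀ : E} (he₀ : e₀ ∈ T) {v₁ v₂ : V} (hne : v₁ ≠ v₂) (hmem : ∀ v, e₀ ∈ I v ↔ v = v₁ ∨ v = v₂)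
    {X : ∀ v, ((e : I v) → β e) → ℝ} (hX : ∀ v a, 0 ≤ X v a) :
    ∑ i : (e : T) → β e, ∏ v, X v (restrict₂ (hIT v) i)
      ≤ ∑ a : (e : T.erase e₀) → β e,
          ∏ v, partialNorm e₀ (X v) (restrict₂ (erase_subset_erase e₀ (hIT v)) a) := by
  classical
  rw [← (piEraseEquiv he₀).symm.sum_comp, Fintype.sum_prod_type_right]
  refine sum_le_sum fun a _ => sum_prod_le_prod_of_cauchySchwarz hne ?_ ?_ ?_
    (fun v => partialNorm_nonneg (hX v) _)
  · simp only [partialNorm_of_mem _ ((hmem v₁).2 (Or.inl rfl)),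
      restrict₂_piEraseEquiv_symm ((hmem v₁).2 (Or.inl rfl))]
  · simp only [partialNorm_of_mem _ ((hmem v₂).2 (Or.inr rfl)),
      restrict₂_piEraseEquiv_symm ((hmem v₂).2 (Or.inr rfl))]
  · intro v hv₁ hv₂ t
    have hv : e₀ ∉ I v := by simp [hmem, hv₁, hv₂]
    rw [partialNorm_of_notMem _ hv, restrict₂_piEraseEquiv_symm_of_notMem hv]
    rfl

/-- The indices still to be summed form the finset `T`, so that the induction on `T` stays inside
the fixed index type `E`. -/
theorem sum_prod_le_prod_frobNormG_of_nonneg (T : Finset E) {I : V → Finset E}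
    (hIT : ∀ v, I v ⊆ T) (hI : ∀ e ∈ T, #{v | e ∈ I v} = 2) {X : ∀ v, ((e : I v) → β e) → ℝ}
    (hX : ∀ v a, 0 ≤ X v a) :
    ∑ i : (e : T) → β e, ∏ v, X v (restrict₂ (hIT v) i) ≤ ∏ v, frobNormG (X v) := by
  classical
  induction T using Finset.strongInduction generalizing I X with
  | H T ih =>
  rcases T.eq_empty_or_nonempty with rfl | ⟨e₀, he₀⟩
  · rw [Fintype.sum_unique]
    exact prod_le_prod (fun v _ => hX v _) fun v _ => le_frobNormG _ _
  · obtain ⟨v₁, v₂, hne, hpair⟩ := card_eq_two.1 (hI e₀ he₀)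
    have hmem (v : V) : e₀ ∈ I v ↔ v = v₁ ∨ v = v₂ := by
      simpa using congrArg (v ∈ ·) hpair
    have hI' : ∀ e ∈ T.erase e₀, #{v | e ∈ (I v).erase e₀} = 2 := fun e he => by
      simpa [ne_of_mem_erase he] using hI e (mem_of_mem_erase he)
    calc _ ≤ _ := sum_prod_le_sum_prod_partialNorm hIT he₀ hne hmem hX
      _ ≤ ∏ v, frobNormG (partialNorm e₀ (X v)) :=
          ih _ (erase_ssubset he₀) _ hI' fun v => partialNorm_nonneg (hX v)
      _ = ∏ v, frobNormG (X v) := by simp only [frobNormG_partialNorm]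

theorem sum_prod_le_prod_frobNormG [Fintype E] (I : V → Finset E)
    (hI : ∀ e, #{v | e ∈ I v} = 2) (X : ∀ v, ((e : I v) → β e) → ℝ) :
    ∑ i : (e : E) → β e, ∏ v, X v ((I v).restrict i) ≤ ∏ v, frobNormG (X v) := by
  let σ : ((e : E) → β e) ≃ ((e : (univ : Finset E)) → β e) :=
    { toFun := restrict univ
      invFun := fun f e => f ⟨e, mem_univ e⟩
      left_inv := fun _ => rfl
      right_inv := fun _ => rfl }
  calc ∑ i, ∏ v, X v ((I v).restrict i) ≤ ∑ i, ∏ v, |X v ((I v).restrict i)| :=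
        sum_le_sum fun i _ => (le_abs_self _).trans_eq (abs_prod _ _)
    _ = ∑ i : (e : (univ : Finset E)) → β e, ∏ v, |X v (restrict₂ (subset_univ (I v)) i)| :=
        σ.sum_comp fun i => ∏ v, |X v (restrict₂ (subset_univ (I v)) i)|
    _ ≤ ∏ v, frobNormG fun a => |X v a| :=
        sum_prod_le_prod_frobNormG_of_nonneg univ _ (fun e _ => hI e) fun _ _ => abs_nonneg _
    _ = ∏ v, frobNormG (X v) := by simp only [frobNormG_abs]

end Contraction

theorem stmt_10_general {s d : ℕ}
    (q : Fin s → ℕ)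
    (I : Fin d → Finset (Fin s))
    (hI : ∀ j : Fin s, (Finset.univ.filter (fun k => j ∈ I k)).card = 2)
    (X : ∀ k : Fin d, ((j : {j : Fin s // j ∈ I k}) → Fin (q j)) → ℝ) :
    ∑ i : (j : Fin s) → Fin (q j), ∏ k, X k (fun j => i j) ≤ ∏ k, frobNormG (X k) :=
  sum_prod_le_prod_frobNormG (β := fun j => Fin (q j)) I hI X

theorem stmt_10 {s d : ℕ} (hs : 1 ≤ s) (hd : 2 ≤ d)
    (q : Fin s → ℕ) (hq : ∀ j, 0 < q j)
    (I : Fin d → Finset (Fin s))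
    (hI : ∀ j : Fin s, (Finset.univ.filter (fun k => j ∈ I k)).card = 2)
    (X : ∀ k : Fin d, ((j : {j : Fin s // j ∈ I k}) → Fin (q j)) → ℝ) :
    ∑ i : (j : Fin s) → Fin (q j), ∏ k, X k (fun j => i j) ≤ ∏ k, frobNormG (X k) :=
  stmt_10_general q I hI X
end
end

section
/- Let s ≥ 1 and d ≥ 1 be integers, let p_1, …, p_s ≥ 2 be integers and set p_{s+j} := p_j for j = 1, …, s. Let {𝕀_1, …, 𝕀_d} be a partition of {1, …, 2s} such that |𝕀_k ∩ {j, s+j}| ≤ 1 for every k = 1, …, d and every j = 1, …, s. Define the tensor T of order d whose mode-k index set is ∏_{j∈𝕀_k} Fin p_j by setting T equal to 1 at an index whose components satisfy i_j = i_{s+j} (under the identification Fin p_{s+j} = Fin p_j) for every j = 1, …, s, and equal to 0 otherwise. Then ‖T‖_σ = 1 and ‖T‖ = √(p_1 ⋯ p_s) = (∏_{k=1}^d n_k)^{1/4}, where n_k := ∏_{j∈𝕀_k} p_j; moreover, √(∏_{k=1}^d n_k) = ∏_{j=1}^s p_j is an integer divisible by every n_k. -/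
noncomputable section

/-- Spectral norm of a tensor whose mode-`k` index set is an arbitrary nonempty
finite type `I k`: the supremum of `|⟨T, x¹⊗⋯⊗x^d⟩|` over tuples of unit vectors. -/
def specNormG {d : ℕ} {I : Fin d → Type} [∀ k, Fintype (I k)] [∀ k, DecidableEq (I k)]
    (T : (∀ k, I k) → ℝ) : ℝ :=
  sSup { r : ℝ | ∃ x : ∀ k, EuclideanSpace ℝ (I k),
    (∀ k, ‖x k‖ = 1) ∧ r = |∑ i, T i * ∏ k, x k (i k)| }

set_option maxHeartbeats 1000000


open Finset

section Key
variable {J K M : Type} [Fintype J] [DecidableEq J] [Fintype M] [Nonempty M]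

lemma splitAt_update (j₀ : J) (z : M × ({ j // j ≠ j₀ } → M)) (v : M) :
    Function.update ((Equiv.funSplitAt j₀ M).symm z) j₀ v
      = (Equiv.funSplitAt j₀ M).symm (v, z.2) := by
  funext j
  by_cases h : j = j₀
  · subst h
    simp [Equiv.funSplitAt, Equiv.piSplitAt, Function.update]
  · simp [Equiv.funSplitAt, Equiv.piSplitAt, Function.update, h]

lemma sum_sum_update (j₀ : J) (H : (J → M) → ℝ) :
    ∑ a : J → M, ∑ v : M, H (Function.update a j₀ v)
      = (Fintype.card M : ℝ) * ∑ a : J → M, H a := by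
  classical
  have key : ∀ (G : (J → M) → ℝ),
      ∑ a : J → M, G a = ∑ z : M × ({ j // j ≠ j₀ } → M), G ((Equiv.funSplitAt j₀ M).symm z) :=
    fun G => (Fintype.sum_equiv (Equiv.funSplitAt j₀ M).symm _ _ (fun z => rfl)).symm
  rw [key (fun a => ∑ v : M, H (Function.update a j₀ v)), key H]
  simp only [splitAt_update]
  rw [Fintype.sum_prod_type, Fintype.sum_prod_type]
  simp only []
  rw [Finset.sum_comm]
  simp only [Finset.sum_const, Finset.card_univ, nsmul_eq_mul]
  rw [← Finset.mul_sum, Finset.sum_comm]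

end Key

section Key2
variable {J K M : Type} [Fintype J] [DecidableEq J] [Fintype K] [DecidableEq K]
  [Fintype M] [Nonempty M]

theorem key_ineq (J₀ : Finset J) (D : K → Finset J) (f : K → (J → M) → ℝ)
    (hf : ∀ k a, 0 ≤ f k a)
    (hsub : ∀ k, D k ⊆ J₀)
    (hdep : ∀ k a b, (∀ j ∈ D k, a j = b j) → f k a = f k b)
    (hcover : ∀ j ∈ J₀, (Finset.univ.filter fun k => j ∈ D k).card = 2) :
    (∑ a : J → M, ∏ k, f k a) ^ 2 * (Fintype.card M : ℝ) ^ (Fintype.card K * Fintype.card J)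
      ≤ (Fintype.card M : ℝ) ^ (2 * Fintype.card J) * ∏ k, ∑ a, f k a ^ 2 := by
  classical
  induction J₀ using Finset.induction generalizing D f with
  | empty =>
    have a₀ : J → M := fun _ => Classical.arbitrary M
    have hconst : ∀ k a, f k a = f k a₀ := fun k a =>
      hdep k a a₀ (fun j hj => absurd (hsub k hj) (Finset.notMem_empty j))
    have h1 : (∑ a : J → M, ∏ k, f k a)
        = (Fintype.card M : ℝ) ^ (Fintype.card J) * ∏ k, f k a₀ := by
      rw [Finset.sum_congr rfl fun a _ => Finset.prod_congr rfl fun k _ => hconst k a]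
      simp [Finset.sum_const, Finset.card_univ, Fintype.card_fun, mul_comm]
    have h2 : ∀ k, (∑ a : J → M, f k a ^ 2)
        = (Fintype.card M : ℝ) ^ (Fintype.card J) * f k a₀ ^ 2 := by
      intro k
      rw [Finset.sum_congr rfl fun a _ => by rw [hconst k a]]
      simp [Finset.sum_const, Finset.card_univ, Fintype.card_fun, mul_comm]
    rw [h1, Finset.prod_congr rfl fun k _ => h2 k, Finset.prod_mul_distrib,
      Finset.prod_const, Finset.prod_pow, Finset.card_univ, mul_pow, ← pow_mul, ← pow_mul,
      Nat.mul_comm (Fintype.card J) (Fintype.card K)]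
    ring_nf
    exact le_rfl
  | @insert j₀ t hj₀ IH =>
    set m : ℝ := (Fintype.card M : ℝ) with hm
    have hm0 : 0 < m := by
      simp only [hm]
      exact_mod_cast Fintype.card_pos
    have hF : (Finset.univ.filter fun k => j₀ ∈ D k).card = 2 :=
      hcover j₀ (Finset.mem_insert_self _ _)
    obtain ⟨k1, k2, hne, hFeq⟩ := Finset.card_eq_two.mp hF
    have hk1 : j₀ ∈ D k1 := by
      have : k1 ∈ Finset.univ.filter fun k => j₀ ∈ D k := by
        rw [hFeq]; exact Finset.mem_insert_self _ _
      simpa using this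
    have hk2 : j₀ ∈ D k2 := by
      have : k2 ∈ Finset.univ.filter fun k => j₀ ∈ D k := by
        rw [hFeq]; simp
      simpa using this
    set g : K → (J → M) → ℝ := fun k a =>
      if j₀ ∈ D k then Real.sqrt (∑ v : M, f k (Function.update a j₀ v) ^ 2) else f k a
      with hgdef
    have hg0 : ∀ k a, 0 ≤ g k a := by
      intro k a
      simp only [hgdef]
      split
      · exact Real.sqrt_nonneg _
      · exact hf k a
    -- f k does not depend on j₀ when j₀ ∉ D k
    have hfupd : ∀ k, j₀ ∉ D k → ∀ a v, f k (Function.update a j₀ v) = f k a := by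
      intro k hk a v
      refine hdep k _ _ fun j hj => ?_
      rw [Function.update_of_ne (by rintro rfl; exact hk hj)]
    have hgdep : ∀ k a b, (∀ j ∈ (D k).erase j₀, a j = b j) → g k a = g k b := by
      intro k a b hab
      by_cases h : j₀ ∈ D k
      · simp only [hgdef, if_pos h]
        congr 1
        refine Finset.sum_congr rfl fun v _ => ?_
        have : f k (Function.update a j₀ v) = f k (Function.update b j₀ v) := by
          refine hdep k _ _ fun j hj => ?_
          by_cases hjj : j = j₀
          · subst hjj; simp
          · rw [Function.update_of_ne hjj, Function.update_of_ne hjj]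
            exact hab j (Finset.mem_erase.mpr ⟨hjj, hj⟩)
        rw [this]
      · simp only [hgdef, if_neg h]
        exact hdep k a b fun j hj => hab j
          (Finset.mem_erase.mpr ⟨fun hjj => h (hjj ▸ hj), hj⟩)
    have hgsub : ∀ k, (D k).erase j₀ ⊆ t := by
      intro k j hj
      rcases Finset.mem_erase.mp hj with ⟨hjj, hjD⟩
      rcases Finset.mem_insert.mp (hsub k hjD) with h | h
      · exact absurd h hjj
      · exact h
    have hgcover : ∀ j ∈ t, (Finset.univ.filter fun k => j ∈ (D k).erase j₀).card = 2 := by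
      intro j hj
      have hjj : j ≠ j₀ := fun h => hj₀ (h ▸ hj)
      have : (Finset.univ.filter fun k => j ∈ (D k).erase j₀)
          = (Finset.univ.filter fun k => j ∈ D k) := by
        refine Finset.filter_congr fun k _ => ?_
        simp [Finset.mem_erase, hjj]
      rw [this]
      exact hcover j (Finset.mem_insert_of_mem hj)
    -- step inequality
    have hstep : m * ∑ a : J → M, ∏ k, f k a ≤ ∑ a : J → M, ∏ k, g k a := by
      rw [hm, ← sum_sum_update j₀ (fun a => ∏ k, f k a)]
      refine Finset.sum_le_sum fun a _ => ?_
      have hsplitf : ∀ v, ∏ k, f k (Function.update a j₀ v)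
          = (f k1 (Function.update a j₀ v) * f k2 (Function.update a j₀ v))
            * ∏ k ∈ Finset.univ.filter fun k => ¬ j₀ ∈ D k, f k a := by
        intro v
        rw [← Finset.prod_filter_mul_prod_filter_not Finset.univ (fun k => j₀ ∈ D k)]
        congr 1
        · rw [hFeq, Finset.prod_pair hne]
        · exact Finset.prod_congr rfl fun k hk => hfupd k (Finset.mem_filter.mp hk).2 a v
      have hsplitg : ∏ k, g k a
          = (g k1 a * g k2 a) * ∏ k ∈ Finset.univ.filter fun k => ¬ j₀ ∈ D k, f k a := by
        rw [← Finset.prod_filter_mul_prod_filter_not Finset.univ (fun k => j₀ ∈ D k)]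
        congr 1
        · rw [hFeq, Finset.prod_pair hne]
        · refine Finset.prod_congr rfl fun k hk => ?_
          simp only [hgdef, if_neg (Finset.mem_filter.mp hk).2]
      simp only [hsplitf]
      rw [← Finset.sum_mul, hsplitg]
      have hprodnn : 0 ≤ ∏ k ∈ Finset.univ.filter fun k => ¬ j₀ ∈ D k, f k a :=
        Finset.prod_nonneg fun k _ => hf k a
      refine mul_le_mul_of_nonneg_right ?_ hprodnn
      have := Real.sum_mul_le_sqrt_mul_sqrt Finset.univ
        (fun v => f k1 (Function.update a j₀ v)) (fun v => f k2 (Function.update a j₀ v))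
      simpa only [hgdef, if_pos hk1, if_pos hk2] using this
    -- norms of g
    have hgnorm : ∀ k, j₀ ∈ D k → (∑ a : J → M, g k a ^ 2) = m * ∑ a : J → M, f k a ^ 2 := by
      intro k hk
      have : ∀ a : J → M, g k a ^ 2 = ∑ v : M, f k (Function.update a j₀ v) ^ 2 := by
        intro a
        simp only [hgdef, if_pos hk]
        exact Real.sq_sqrt (Finset.sum_nonneg fun v _ => sq_nonneg _)
      rw [Finset.sum_congr rfl fun a _ => this a]
      exact sum_sum_update j₀ (fun a => f k a ^ 2)
    have hprodg : (∏ k, ∑ a : J → M, g k a ^ 2) = m ^ 2 * ∏ k, ∑ a : J → M, f k a ^ 2 := by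
      rw [← Finset.prod_filter_mul_prod_filter_not Finset.univ (fun k => j₀ ∈ D k)
          (fun k => ∑ a : J → M, g k a ^ 2),
        ← Finset.prod_filter_mul_prod_filter_not Finset.univ (fun k => j₀ ∈ D k)
          (fun k => ∑ a : J → M, f k a ^ 2)]
      have h1 : (∏ k ∈ Finset.univ.filter fun k => j₀ ∈ D k, ∑ a : J → M, g k a ^ 2)
          = m ^ 2 * ∏ k ∈ Finset.univ.filter fun k => j₀ ∈ D k, ∑ a : J → M, f k a ^ 2 := by
        rw [hFeq, Finset.prod_pair hne, Finset.prod_pair hne, hgnorm k1 hk1, hgnorm k2 hk2]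
        ring
      have h2 : (∏ k ∈ Finset.univ.filter fun k => ¬ j₀ ∈ D k, ∑ a : J → M, g k a ^ 2)
          = ∏ k ∈ Finset.univ.filter fun k => ¬ j₀ ∈ D k, ∑ a : J → M, f k a ^ 2 := by
        refine Finset.prod_congr rfl fun k hk => Finset.sum_congr rfl fun a _ => ?_
        simp only [hgdef, if_neg (Finset.mem_filter.mp hk).2]
      rw [h1, h2]
      ring
    have hIH := IH (fun k => (D k).erase j₀) g hg0 hgsub hgdep hgcover
    rw [hprodg] at hIH
    have hX0 : 0 ≤ ∑ a : J → M, ∏ k, f k a :=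
      Finset.sum_nonneg fun a _ => Finset.prod_nonneg fun k _ => hf k a
    have hsq : (m * ∑ a : J → M, ∏ k, f k a) ^ 2 ≤ (∑ a : J → M, ∏ k, g k a) ^ 2 :=
      pow_le_pow_left₀ (by positivity) hstep 2
    have hchain : (m * ∑ a : J → M, ∏ k, f k a) ^ 2
          * m ^ (Fintype.card K * Fintype.card J)
        ≤ m ^ (2 * Fintype.card J) * (m ^ 2 * ∏ k, ∑ a : J → M, f k a ^ 2) :=
      le_trans (mul_le_mul_of_nonneg_right hsq (by positivity)) hIH
    rw [mul_pow] at hchain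
    have hchain' : m ^ 2 * ((∑ a : J → M, ∏ k, f k a) ^ 2
          * m ^ (Fintype.card K * Fintype.card J))
        ≤ m ^ 2 * (m ^ (2 * Fintype.card J) * ∏ k, ∑ a : J → M, f k a ^ 2) := by
      calc m ^ 2 * ((∑ a : J → M, ∏ k, f k a) ^ 2 * m ^ (Fintype.card K * Fintype.card J))
          = m ^ 2 * (∑ a : J → M, ∏ k, f k a) ^ 2 * m ^ (Fintype.card K * Fintype.card J) := by
            ring
        _ ≤ m ^ (2 * Fintype.card J) * (m ^ 2 * ∏ k, ∑ a : J → M, f k a ^ 2) := hchain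
        _ = m ^ 2 * (m ^ (2 * Fintype.card J) * ∏ k, ∑ a : J → M, f k a ^ 2) := by ring
    exact le_of_mul_le_mul_left hchain' (by positivity)
end Key2


section AuxDefs

variable {s d : ℕ} (p : Fin s → ℕ) (I : Fin d → Finset (Fin s ⊕ Fin s))
  (κ : Fin s ⊕ Fin s → Fin d)

def toIdxA (g : ∀ e : Fin s ⊕ Fin s, Fin (Sum.elim p p e)) :
    ∀ k : Fin d, (e : {e : Fin s ⊕ Fin s // e ∈ I k}) → Fin (Sum.elim p p e.1) :=
  fun _ e => g e.1

def embA (a : ∀ j, Fin (p j)) : ∀ e : Fin s ⊕ Fin s, Fin (Sum.elim p p e) :=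
  fun e => match e with
  | Sum.inl j => a j
  | Sum.inr j => a j

lemma toIdxA_bij (hκ : ∀ e k, e ∈ I k ↔ k = κ e) :
    Function.Bijective (toIdxA p I) := by
  refine Function.bijective_iff_has_inverse.mpr
    ⟨fun i e => i (κ e) ⟨e, (hκ e (κ e)).mpr rfl⟩, fun g => rfl, fun i => ?_⟩
  funext k e
  obtain ⟨e, he⟩ := e
  have hk : κ e = k := ((hκ e k).mp he).symm
  subst hk
  rfl

lemma embA_inj : Function.Injective (embA p) := by
  intro a b hab
  funext j
  exact congrFun hab (Sum.inl j)

lemma sum_idxA (hκ : ∀ e k, e ∈ I k ↔ k = κ e)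
    (F : (∀ k : Fin d, (e : {e : Fin s ⊕ Fin s // e ∈ I k}) → Fin (Sum.elim p p e.1)) → ℝ) :
    ∑ i, F i = ∑ g : ∀ e : Fin s ⊕ Fin s, Fin (Sum.elim p p e), F (toIdxA p I g) :=
  ((toIdxA_bij p I κ hκ).sum_comp F).symm

open Classical in
lemma filter_diag_eq_image :
    (Finset.univ.filter fun g : ∀ e : Fin s ⊕ Fin s, Fin (Sum.elim p p e) =>
        ∀ j, g (Sum.inl j) = g (Sum.inr j))
      = Finset.univ.image (embA p) := by
  ext g
  simp only [Finset.mem_filter, Finset.mem_image, Finset.mem_univ, true_and]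
  constructor
  · intro h
    refine ⟨fun j => g (Sum.inl j), funext fun e => ?_⟩
    cases e with
    | inl j => rfl
    | inr j => exact h j
  · rintro ⟨a, rfl⟩
    intro j
    rfl

open Classical in
lemma sum_condA (G : (∀ e : Fin s ⊕ Fin s, Fin (Sum.elim p p e)) → ℝ) :
    (∑ g : ∀ e : Fin s ⊕ Fin s, Fin (Sum.elim p p e),
        if ∀ j, g (Sum.inl j) = g (Sum.inr j) then G g else 0)
      = ∑ a : ∀ j, Fin (p j), G (embA p a) := by
  classical
  rw [← Finset.sum_filter, filter_diag_eq_image,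
    Finset.sum_image (fun a _ b _ h => embA_inj p h)]

end AuxDefs

open Classical in
theorem stmt_11 {s d : ℕ} (hs : 1 ≤ s) (hd : 1 ≤ d)
    (p : Fin s → ℕ) (hp : ∀ j, 2 ≤ p j)
    (I : Fin d → Finset (Fin s ⊕ Fin s)) (κ : Fin s ⊕ Fin s → Fin d)
    (hκ : ∀ e k, e ∈ I k ↔ k = κ e)
    (hpair : ∀ (k : Fin d) (j : Fin s), ¬(Sum.inl j ∈ I k ∧ Sum.inr j ∈ I k))
    (T : (∀ k : Fin d, (e : {e : Fin s ⊕ Fin s // e ∈ I k}) → Fin (Sum.elim p p e.1)) → ℝ)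
    (hT : ∀ i, T i =
      if ∀ j : Fin s,
          i (κ (Sum.inl j)) ⟨Sum.inl j, (hκ (Sum.inl j) (κ (Sum.inl j))).mpr rfl⟩ =
          i (κ (Sum.inr j)) ⟨Sum.inr j, (hκ (Sum.inr j) (κ (Sum.inr j))).mpr rfl⟩
        then 1 else 0) :
    specNormG T = 1 ∧
    frobNormG T = Real.sqrt (∏ j, (p j : ℝ)) ∧
    frobNormG T = (∏ k, ((∏ e ∈ I k, Sum.elim p p e : ℕ) : ℝ)) ^ ((1 : ℝ)/4) ∧
    (∏ j, p j) ^ 2 = ∏ k : Fin d, ∏ e ∈ I k, Sum.elim p p e ∧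
    ∀ k : Fin d, (∏ e ∈ I k, Sum.elim p p e) ∣ ∏ j, p j := by
  classical
  -- T at the reindexed argument
  have hTg : ∀ g : ∀ e : Fin s ⊕ Fin s, Fin (Sum.elim p p e),
      T (toIdxA p I g) = if ∀ j, g (Sum.inl j) = g (Sum.inr j) then 1 else 0 := by
    intro g
    rw [hT (toIdxA p I g)]
    exact if_congr Iff.rfl rfl rfl
  -- Frobenius norm squared sum
  have hsumsq : (∑ i, T i ^ 2) = (∏ j, (p j : ℝ)) := by
    rw [sum_idxA p I κ hκ (fun i => T i ^ 2)]
    have : ∀ g : ∀ e : Fin s ⊕ Fin s, Fin (Sum.elim p p e),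
        T (toIdxA p I g) ^ 2
          = if ∀ j, g (Sum.inl j) = g (Sum.inr j) then (1 : ℝ) else 0 := by
      intro g
      rw [hTg g]
      split <;> norm_num
    rw [Finset.sum_congr rfl fun g _ => this g, sum_condA p (fun _ => (1 : ℝ))]
    simp [Finset.card_univ]
  have hfrob : frobNormG T = Real.sqrt (∏ j, (p j : ℝ)) := by
    rw [frobNormG, hsumsq]
  -- part 4
  have hIk : ∀ k, I k = Finset.univ.filter fun e => κ e = k := by
    intro k
    ext e
    simp [hκ e k, eq_comm]
  have hpart4 : (∏ j, p j) ^ 2 = ∏ k : Fin d, ∏ e ∈ I k, Sum.elim p p e := by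
    have h1 : (∏ k : Fin d, ∏ e ∈ I k, Sum.elim p p e)
        = ∏ e : Fin s ⊕ Fin s, Sum.elim p p e := by
      rw [Finset.prod_congr rfl (fun (k : Fin d) (_ : k ∈ Finset.univ) => by rw [hIk k])]
      exact Finset.prod_fiberwise Finset.univ κ (Sum.elim p p)
    rw [h1, Fintype.prod_sum_type]
    simp [sq]
  -- part 5
  have hpart5 : ∀ k : Fin d, (∏ e ∈ I k, Sum.elim p p e) ∣ ∏ j, p j := by
    intro k
    have hinj : Set.InjOn (Sum.elim id id : Fin s ⊕ Fin s → Fin s) (I k) := by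
      rintro (j₁ | j₁) h₁ (j₂ | j₂) h₂ h <;>
        simp only [Sum.elim_inl, Sum.elim_inr, id] at h <;>
        rw [Finset.mem_coe] at h₁ h₂
      · exact congrArg Sum.inl h
      · subst h; exact absurd ⟨h₁, h₂⟩ (hpair k j₁)
      · subst h; exact absurd ⟨h₂, h₁⟩ (hpair k j₁)
      · exact congrArg Sum.inr h
    have heq : (∏ e ∈ I k, Sum.elim p p e)
        = ∏ j ∈ (I k).image (Sum.elim id id), p j := by
      rw [Finset.prod_image fun e h e' h' hh => hinj h h' hh]
      refine Finset.prod_congr rfl fun e _ => ?_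
      cases e <;> rfl
    rw [heq]
    exact Finset.prod_dvd_prod_of_subset _ _ _ (Finset.subset_univ _)
  -- part 3
  have hpart3 : frobNormG T
      = (∏ k, ((∏ e ∈ I k, Sum.elim p p e : ℕ) : ℝ)) ^ ((1 : ℝ)/4) := by
    have hc : (∏ k, ((∏ e ∈ I k, Sum.elim p p e : ℕ) : ℝ)) = (∏ j, (p j : ℝ)) ^ 2 := by
      rw [← Nat.cast_prod, ← hpart4]
      push_cast
      ring
    rw [hfrob, hc]
    have hX : (0 : ℝ) ≤ ∏ j, (p j : ℝ) := Finset.prod_nonneg fun j _ => Nat.cast_nonneg _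
    rw [show ((∏ j, (p j : ℝ)) ^ 2) = (∏ j, (p j : ℝ)) ^ (2 : ℝ) by
        rw [← Real.rpow_natCast (∏ j, (p j : ℝ)) 2]; norm_num]
    rw [← Real.rpow_mul hX]
    rw [Real.sqrt_eq_rpow]
    norm_num
  refine ⟨?_, hfrob, hpart3, hpart4, hpart5⟩
  -- ===================== spectral norm =====================
  have hq : ∀ e : Fin s ⊕ Fin s, 0 < Sum.elim p p e := by
    rintro (j | j) <;> simp only [Sum.elim_inl, Sum.elim_inr] <;>
      exact lt_of_lt_of_le (by norm_num) (hp j)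
  have hqρ : ∀ e : Fin s ⊕ Fin s, Sum.elim p p e = p (Sum.elim id id e) := by
    rintro (j | j) <;> rfl
  set m : ℕ := ∑ j, p j with hmdef
  have hple : ∀ j, p j ≤ m := fun j =>
    Finset.single_le_sum (fun j _ => Nat.zero_le (p j)) (Finset.mem_univ j)
  have hm0 : 0 < m := lt_of_lt_of_le (hq (Sum.inl ⟨0, hs⟩)) (hple ⟨0, hs⟩)
  haveI : Nonempty (Fin m) := ⟨⟨0, hm0⟩⟩
  set D : Fin d → Finset (Fin s) :=
    fun k => Finset.univ.filter fun j => Sum.inl j ∈ I k ∨ Sum.inr j ∈ I k with hDdef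
  have hDmem : ∀ k j, j ∈ D k ↔ (Sum.inl j ∈ I k ∨ Sum.inr j ∈ I k) := by
    intro k j; simp [hDdef]
  have hkne : ∀ j, κ (Sum.inl j) ≠ κ (Sum.inr j) := by
    intro j h
    exact hpair (κ (Sum.inl j)) j ⟨(hκ _ _).mpr rfl, (hκ _ _).mpr h⟩
  have hfilterD : ∀ j, (Finset.univ.filter fun k => j ∈ D k)
      = {κ (Sum.inl j), κ (Sum.inr j)} := by
    intro j
    ext k
    simp only [Finset.mem_filter, Finset.mem_univ, true_and, hDmem, hκ,
      Finset.mem_insert, Finset.mem_singleton]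
  have hcover : ∀ j : Fin s, j ∈ (Finset.univ : Finset (Fin s)) →
      (Finset.univ.filter fun k => j ∈ D k).card = 2 := by
    intro j _
    rw [hfilterD j]
    exact Finset.card_pair (hkne j)
  have hd2 : 2 ≤ d := by
    rcases Nat.lt_or_ge d 2 with h | h
    · interval_cases d
      · exact absurd (Subsingleton.elim _ _) (hkne ⟨0, hs⟩)
    · exact h
  have hsumD : (∑ k, (D k).card) = 2 * s := by
    have h1 : ∀ k, (D k).card = ∑ j : Fin s, if j ∈ D k then 1 else 0 := by
      intro k
      conv_lhs => rw [← Finset.filter_univ_mem (D k)]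
      rw [Finset.card_filter]
    rw [Finset.sum_congr rfl fun k _ => h1 k, Finset.sum_comm]
    have h2 : ∀ j : Fin s, (∑ k, if j ∈ D k then 1 else 0) = 2 := by
      intro j
      rw [← Finset.card_filter]
      exact hcover j (Finset.mem_univ j)
    rw [Finset.sum_congr rfl fun j _ => h2 j]
    simp [Finset.card_univ, mul_comm]
  -- the upper bound
  have hub : ∀ (x : ∀ k : Fin d,
      EuclideanSpace ℝ ((e : {e : Fin s ⊕ Fin s // e ∈ I k}) → Fin (Sum.elim p p e.1))),
      (∀ k, ‖x k‖ = 1) → |∑ i, T i * ∏ k, x k (i k)| ≤ 1 := by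
    intro x hx
    set y : ∀ k : Fin d, (Fin s → Fin m) →
        ((e : {e : Fin s ⊕ Fin s // e ∈ I k}) → Fin (Sum.elim p p e.1)) :=
      fun k A e => ⟨(A (Sum.elim id id e.1) : ℕ) % Sum.elim p p e.1,
        Nat.mod_lt _ (hq e.1)⟩ with hydef
    set f : Fin d → (Fin s → Fin m) → ℝ :=
      fun k A => if ∀ j ∈ D k, ((A j : ℕ) < p j) then |x k (y k A)| else 0 with hfdef
    have hf0 : ∀ k A, 0 ≤ f k A := by
      intro k A; rw [hfdef]; dsimp only; split
      · exact abs_nonneg _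
      · exact le_refl 0
    have hρD : ∀ k (e : {e : Fin s ⊕ Fin s // e ∈ I k}), Sum.elim id id e.1 ∈ D k := by
      rintro k ⟨e | e, he⟩
      · exact (hDmem k e).mpr (Or.inl he)
      · exact (hDmem k e).mpr (Or.inr he)
    have hydep : ∀ k A B, (∀ j ∈ D k, A j = B j) → y k A = y k B := by
      intro k A B hAB
      funext e
      apply Fin.ext
      rw [hydef]
      dsimp only
      rw [hAB _ (hρD k e)]
    have hfdep : ∀ k A B, (∀ j ∈ D k, A j = B j) → f k A = f k B := by
      intro k A B hAB
      have hcond : (∀ j ∈ D k, ((A j : ℕ) < p j)) ↔ (∀ j ∈ D k, ((B j : ℕ) < p j)) :=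
        forall₂_congr fun j hj => by rw [hAB j hj]
      rw [hfdef]
      dsimp only
      rw [hydep k A B hAB]
      exact if_congr hcond rfl rfl
    set ι' : (∀ j, Fin (p j)) → (Fin s → Fin m) :=
      fun a j => ⟨(a j : ℕ), lt_of_lt_of_le (a j).2 (hple j)⟩ with hι'def
    have hι'inj : Function.Injective ι' := by
      intro a b hab
      funext j
      have h := congrFun hab j
      rw [hι'def] at h
      dsimp only at h
      exact Fin.ext (by simpa [Fin.ext_iff] using h)
    have hvalid : ∀ (a : ∀ j, Fin (p j)) k, ∀ j ∈ D k, ((ι' a j : ℕ) < p j) := by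
      intro a k j _
      rw [hι'def]
      exact (a j).2
    have hyι' : ∀ k a, y k (ι' a) = toIdxA p I (embA p a) k := by
      intro k a
      funext e
      apply Fin.ext
      rw [hydef, hι'def]
      dsimp only
      obtain ⟨e, he⟩ := e
      cases e with
      | inl j => exact Nat.mod_eq_of_lt (a j).2
      | inr j => exact Nat.mod_eq_of_lt (a j).2
    have hXnn : (0:ℝ) ≤ ∑ A : Fin s → Fin m, ∏ k, f k A :=
      Finset.sum_nonneg fun A _ => Finset.prod_nonneg fun k _ => hf0 k A
    have hboundS : |∑ i, T i * ∏ k, x k (i k)| ≤ ∑ A : Fin s → Fin m, ∏ k, f k A := by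
      rw [sum_idxA p I κ hκ (fun i => T i * ∏ k, x k (i k))]
      have h1 : ∀ g, T (toIdxA p I g) * ∏ k, x k (toIdxA p I g k)
          = if ∀ j, g (Sum.inl j) = g (Sum.inr j)
            then (∏ k, x k (toIdxA p I g k)) else 0 := by
        intro g; rw [hTg g, ite_mul, one_mul, zero_mul]
      rw [Finset.sum_congr rfl fun g _ => h1 g,
        sum_condA p (fun g => ∏ k, x k (toIdxA p I g k))]
      calc |∑ a : ∀ j, Fin (p j), ∏ k, x k (toIdxA p I (embA p a) k)|
          ≤ ∑ a : ∀ j, Fin (p j), |∏ k, x k (toIdxA p I (embA p a) k)| :=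
            Finset.abs_sum_le_sum_abs _ _
        _ = ∑ a : ∀ j, Fin (p j), ∏ k, f k (ι' a) := by
            refine Finset.sum_congr rfl fun a _ => ?_
            rw [Finset.abs_prod]
            refine Finset.prod_congr rfl fun k _ => ?_
            rw [hfdef]
            dsimp only
            rw [if_pos (hvalid a k), hyι' k a]
        _ = ∑ A ∈ Finset.univ.image ι', ∏ k, f k A := by
            rw [Finset.sum_image fun a _ b _ h => hι'inj h]
        _ ≤ ∑ A : Fin s → Fin m, ∏ k, f k A :=
            Finset.sum_le_sum_of_subset_of_nonneg (Finset.subset_univ _)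
              (fun A _ _ => Finset.prod_nonneg fun k _ => hf0 k A)
    -- norm computation for each mode
    have hnorm : ∀ k, (∑ A : Fin s → Fin m, f k A ^ 2) = (m:ℝ) ^ (s - (D k).card) := by
      intro k
      set σ : {j : Fin s // j ∈ D k} → {e : Fin s ⊕ Fin s // e ∈ I k} :=
        fun j => if h : Sum.inl j.1 ∈ I k then ⟨Sum.inl j.1, h⟩
          else ⟨Sum.inr j.1, ((hDmem k j.1).mp j.2).resolve_left h⟩ with hσdef
      have hqσ : ∀ j, Sum.elim p p (σ j).1 = p j.1 := by
        intro j
        rw [hσdef]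
        dsimp only
        split <;> rfl
      have hσρ : ∀ e : {e : Fin s ⊕ Fin s // e ∈ I k},
          σ ⟨Sum.elim id id e.1, hρD k e⟩ = e := by
        rintro ⟨e | e, he⟩ <;> rw [hσdef] <;> dsimp only [Sum.elim_inl, Sum.elim_inr, id]
        · rw [dif_pos he]
        · rw [dif_neg (fun h => hpair k e ⟨h, he⟩)]
      have hρσ : ∀ j, (⟨Sum.elim id id (σ j).1, hρD k (σ j)⟩ : {j : Fin s // j ∈ D k}) = j := by
        intro j
        refine Subtype.ext ?_
        rw [hσdef]
        dsimp only
        split <;> rfl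
      set ι2 : ((e : {e : Fin s ⊕ Fin s // e ∈ I k}) → Fin (Sum.elim p p e.1)) →
          ({j : Fin s // j ∈ D k} → Fin m) :=
        fun u j => ⟨(u (σ j) : ℕ),
          lt_of_lt_of_le (lt_of_lt_of_le (u (σ j)).2 (le_of_eq (hqσ j))) (hple j.1)⟩
        with hι2def
      have hι2inj : Function.Injective ι2 := by
        intro u u' h
        funext e
        apply Fin.ext
        rw [← hσρ e]
        have h1 : (ι2 u ⟨Sum.elim id id e.1, hρD k e⟩).val
            = (ι2 u' ⟨Sum.elim id id e.1, hρD k e⟩).val :=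
          congrArg Fin.val (congrFun h _)
        exact h1
      set e2 := Equiv.piEquivPiSubtypeProd (fun j : Fin s => j ∈ D k) (fun _ => Fin m)
        with he2def
      have he2mem : ∀ (z : ({j : Fin s // j ∈ D k} → Fin m) × ({j : Fin s // ¬ j ∈ D k} → Fin m))
          (j : Fin s) (hj : j ∈ D k), e2.symm z j = z.1 ⟨j, hj⟩ := by
        intro z j hj
        rw [he2def]
        simp [Equiv.piEquivPiSubtypeProd_symm_apply, hj]
      have hzdep : ∀ b c c', f k (e2.symm (b, c)) = f k (e2.symm (b, c')) := by
        intro b c c'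
        refine hfdep k _ _ fun j hj => ?_
        rw [he2mem (b, c) j hj, he2mem (b, c') j hj]
      have hsplit : (∑ A : Fin s → Fin m, f k A ^ 2)
          = ∑ z : ({j : Fin s // j ∈ D k} → Fin m) × ({j : Fin s // ¬ j ∈ D k} → Fin m),
              f k (e2.symm z) ^ 2 :=
        (Fintype.sum_equiv e2.symm _ _ fun z => rfl).symm
      rw [hsplit, Fintype.sum_prod_type]
      set c₀ : {j : Fin s // ¬ j ∈ D k} → Fin m := fun _ => ⟨0, hm0⟩ with hc₀def
      have hcardc : (Fintype.card ({j : Fin s // ¬ j ∈ D k} → Fin m))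
          = m ^ (s - (D k).card) := by
        rw [Fintype.card_fun, Fintype.card_fin]
        congr 1
        rw [Fintype.card_subtype_compl, Fintype.card_fin]
        simp
      have hinner : ∀ b, (∑ c : {j : Fin s // ¬ j ∈ D k} → Fin m, f k (e2.symm (b, c)) ^ 2)
          = (m:ℝ) ^ (s - (D k).card) * f k (e2.symm (b, c₀)) ^ 2 := by
        intro b
        rw [Finset.sum_congr rfl fun c _ => by rw [hzdep b c c₀]]
        rw [Finset.sum_const, Finset.card_univ, nsmul_eq_mul, hcardc]
        push_cast
        ring
      rw [Finset.sum_congr rfl fun b _ => hinner b, ← Finset.mul_sum]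
      have hyu : ∀ u, y k (e2.symm (ι2 u, c₀)) = u := by
        intro u
        funext e
        apply Fin.ext
        rw [hydef]
        dsimp only
        rw [he2mem (ι2 u, c₀) _ (hρD k e), hι2def]
        dsimp only
        rw [hσρ e]
        exact Nat.mod_eq_of_lt (u e).2
      have hcondu : ∀ u, ∀ j ∈ D k, ((e2.symm (ι2 u, c₀) j : ℕ) < p j) := by
        intro u j hj
        rw [he2mem (ι2 u, c₀) j hj, hι2def]
        dsimp only
        rw [← hqσ ⟨j, hj⟩]
        exact (u (σ ⟨j, hj⟩)).2
      have himg : (Finset.univ.filter fun b : {j : Fin s // j ∈ D k} → Fin m =>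
          ∀ j ∈ D k, ((e2.symm (b, c₀) j : ℕ) < p j)) = Finset.univ.image ι2 := by
        ext b
        simp only [Finset.mem_filter, Finset.mem_univ, true_and, Finset.mem_image]
        constructor
        · intro hb
          refine ⟨fun e => ⟨(b ⟨Sum.elim id id e.1, hρD k e⟩ : ℕ), ?_⟩, ?_⟩
          · rw [hqρ e.1]
            have := hb _ (hρD k e)
            rwa [he2mem (b, c₀) _ (hρD k e)] at this
          · funext j
            apply Fin.ext
            rw [hι2def]
            dsimp only
            rw [hρσ j]
        · rintro ⟨u, rfl⟩
          exact hcondu u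
      have hlast : (∑ b : {j : Fin s // j ∈ D k} → Fin m, f k (e2.symm (b, c₀)) ^ 2) = 1 := by
        have hstep1 : ∀ b, f k (e2.symm (b, c₀)) ^ 2
            = if (∀ j ∈ D k, ((e2.symm (b, c₀) j : ℕ) < p j))
              then |x k (y k (e2.symm (b, c₀)))| ^ 2 else 0 := by
          intro b
          rw [hfdef]
          dsimp only
          rw [apply_ite (· ^ 2)]
          norm_num
        rw [Finset.sum_congr rfl fun b _ => hstep1 b, ← Finset.sum_filter, himg,
          Finset.sum_image fun u _ u' _ h => hι2inj h]
        rw [Finset.sum_congr rfl fun u _ => by rw [hyu u]]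
        have hn : Real.sqrt (∑ u, ‖x k u‖ ^ 2) = 1 := by
          rw [← EuclideanSpace.norm_eq]
          exact hx k
        have hn2 : (∑ u, ‖x k u‖ ^ 2) = 1 := by
          have h0 : (0:ℝ) ≤ ∑ u, ‖x k u‖ ^ 2 :=
            Finset.sum_nonneg fun u _ => sq_nonneg _
          nlinarith [Real.sq_sqrt h0]
        rw [← hn2]
        refine Finset.sum_congr rfl fun u _ => ?_
        rw [Real.norm_eq_abs]
      rw [hlast, mul_one]
    -- apply the key inequality
    have hkey := key_ineq (M := Fin m) Finset.univ D f hf0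
      (fun k => Finset.subset_univ _) hfdep hcover
    simp only [Fintype.card_fin] at hkey
    have hprodnorm : (∏ k, ∑ A : Fin s → Fin m, f k A ^ 2) = (m:ℝ) ^ (d * s - 2 * s) := by
      rw [Finset.prod_congr rfl fun k _ => hnorm k, Finset.prod_pow_eq_pow_sum]
      congr 1
      have hle : ∀ k, (D k).card ≤ s := fun k =>
        le_trans (Finset.card_le_univ _) (by simp)
      have hadd : (∑ k, (s - (D k).card)) + ∑ k, (D k).card = d * s := by
        rw [← Finset.sum_add_distrib,
          Finset.sum_congr rfl fun k _ => Nat.sub_add_cancel (hle k)]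
        simp [Finset.card_univ, mul_comm]
      omega
    have hpow : ((m:ℝ)) ^ (2 * s) * (m:ℝ) ^ (d * s - 2 * s) = (m:ℝ) ^ (d * s) := by
      rw [← pow_add]
      congr 1
      have : 2 * s ≤ d * s := Nat.mul_le_mul_right s hd2
      omega
    rw [hprodnorm, hpow] at hkey
    have hmp : (0:ℝ) < (m:ℝ) ^ (d * s) := by positivity
    have hX2 : (∑ A : Fin s → Fin m, ∏ k, f k A) ^ 2 ≤ 1 := by nlinarith
    have hX1 : (∑ A : Fin s → Fin m, ∏ k, f k A) ≤ 1 := by nlinarith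
    exact le_trans hboundS hX1
  -- the witness
  set g₀ : ∀ e : Fin s ⊕ Fin s, Fin (Sum.elim p p e) := fun e => ⟨0, hq e⟩ with hg₀def
  have hmem1 : (1 : ℝ) ∈ { r : ℝ | ∃ x : ∀ k : Fin d,
      EuclideanSpace ℝ ((e : {e : Fin s ⊕ Fin s // e ∈ I k}) → Fin (Sum.elim p p e.1)),
      (∀ k, ‖x k‖ = 1) ∧ r = |∑ i, T i * ∏ k, x k (i k)| } := by
    refine ⟨fun k => EuclideanSpace.single (toIdxA p I g₀ k) 1, fun k => ?_, ?_⟩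
    · rw [EuclideanSpace.norm_single]
      norm_num
    · have hprod : ∀ i, (∏ k, (EuclideanSpace.single (toIdxA p I g₀ k) (1:ℝ)) (i k))
          = if i = toIdxA p I g₀ then 1 else 0 := by
        intro i
        rw [Finset.prod_congr rfl fun k _ =>
          EuclideanSpace.single_apply (toIdxA p I g₀ k) 1 (i k)]
        rw [Finset.prod_boole]
        by_cases hcase : i = toIdxA p I g₀
        · rw [if_pos (fun k _ => by rw [hcase]), if_pos hcase]
        · rw [if_neg (fun hall => hcase (funext fun k => hall k (Finset.mem_univ k))),
            if_neg hcase]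
      have hsum : (∑ i, T i * ∏ k, (EuclideanSpace.single (toIdxA p I g₀ k) (1:ℝ)) (i k)) = 1 := by
        rw [Finset.sum_congr rfl fun i _ => by rw [hprod i, mul_ite, mul_one, mul_zero]]
        rw [Finset.sum_ite_eq' Finset.univ (toIdxA p I g₀) T]
        rw [if_pos (Finset.mem_univ _), hTg g₀]
        exact if_pos fun j => rfl
      rw [hsum]
      norm_num
  -- conclude
  have hset : specNormG T = sSup { r : ℝ | ∃ x : ∀ k : Fin d,
      EuclideanSpace ℝ ((e : {e : Fin s ⊕ Fin s // e ∈ I k}) → Fin (Sum.elim p p e.1)),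
      (∀ k, ‖x k‖ = 1) ∧ r = |∑ i, T i * ∏ k, x k (i k)| } := rfl
  rw [hset]
  refine le_antisymm (csSup_le ⟨1, hmem1⟩ ?_) (le_csSup ⟨1, ?_⟩ hmem1)
  · rintro r ⟨x, hx, rfl⟩
    exact hub x hx
  · rintro r ⟨x, hx, rfl⟩
    exact hub x hx
end
end
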